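/- arXiv:2012.12797 — 7 statements merged into one kernel-verified Lean document; each statement's English description precedes it below -/
import Mathlib

section
/- For every k ∈ ℕ with k ≥ 2 there exists C_k > 0 such that for every k-times continuously Fréchet differentiable bounded function f : X → ℝ with bounded derivatives up to order k, and every h with 1 ≤ h ≤ k−1, one has ‖D^h f‖_∞ ≤ C_k · ‖f‖_∞^{1−h/k} · ‖D^k f‖_∞^{h/k}. -/
open Real Set

lemma landau1 (g g' g'' : ℝ → ℝ) (A B : ℝ)
    (hd1 : ∀ t, HasDerivAt g (g' t) t)
    (hd2 : ∀ t, HasDerivAt g' (g'' t) t)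
    (hA : ∀ t, |g t| ≤ A) (hB : ∀ t, |g'' t| ≤ B) :
    |g' 0| ≤ 3 * Real.sqrt (A * B) := by
  have hA0 : 0 ≤ A := (abs_nonneg _).trans (hA 0)
  have hB0 : 0 ≤ B := (abs_nonneg _).trans (hB 0)
  have hlip : ∀ y : ℝ, |g' y - g' 0| ≤ B * |y| := by
    intro y
    have h := Convex.norm_image_sub_le_of_norm_hasDerivWithin_le
      (f := g') (f' := g'') (s := Set.univ) (C := B)
      (fun x _ => (hd2 x).hasDerivWithinAt) (fun x _ => by simpa [Real.norm_eq_abs] using hB x)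
      convex_univ (Set.mem_univ 0) (Set.mem_univ y)
    simpa [Real.norm_eq_abs, sub_zero] using h
  have key : ∀ s : ℝ, 0 < s → |g' 0| ≤ 2 * A / s + B * s := by
    intro s hs
    have hb : ∀ y ∈ Set.Icc (0:ℝ) s, ‖g' y - g' 0‖ ≤ B * s := by
      intro y hy
      rw [Real.norm_eq_abs]
      refine (hlip y).trans ?_
      have h1 : |y| ≤ s := by rw [abs_of_nonneg hy.1]; exact hy.2
      nlinarith [abs_nonneg y]
    have h := Convex.norm_image_sub_le_of_norm_hasDerivWithin_le
      (f := fun y => g y - y * g' 0) (f' := fun y => g' y - g' 0) (s := Set.Icc 0 s) (C := B * s)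
      (fun x _ => ((hd1 x).sub (hasDerivAt_mul_const (g' 0))).hasDerivWithinAt) hb
      (convex_Icc _ _) (Set.mem_Icc.mpr ⟨le_rfl, hs.le⟩) (Set.mem_Icc.mpr ⟨hs.le, le_rfl⟩)
    rw [Real.norm_eq_abs, Real.norm_eq_abs] at h
    simp only [zero_mul, sub_zero] at h
    rw [abs_of_pos hs] at h
    -- h : |g s - s * g' 0 - g 0| ≤ B * s * s
    have h2 : s * |g' 0| ≤ 2 * A + B * s * s := by
      have h3 : |s * g' 0| ≤ |g s| + |g 0| + B * s * s := by
        have := abs_sub_abs_le_abs_sub (s * g' 0) (g s - g 0)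
        have h4 : |s * g' 0 - (g s - g 0)| ≤ B * s * s := by
          rw [show s * g' 0 - (g s - g 0) = -(g s - s * g' 0 - g 0) by ring, abs_neg]
          exact h
        have h5 : |g s - g 0| ≤ |g s| + |g 0| := abs_sub _ _
        linarith
      rw [abs_mul, abs_of_pos hs] at h3
      linarith [hA s, hA 0]
    rw [show 2 * A / s + B * s = (2 * A + B * s * s) / s by field_simp,
      le_div_iff₀ hs]
    linarith
  rcases eq_or_lt_of_le hA0 with hA0' | hA0'
  · -- A = 0
    rw [← hA0', zero_mul, Real.sqrt_zero, mul_zero]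
    by_contra hlt
    push_neg at hlt
    have hpos : 0 < |g' 0| := hlt
    have := key (|g' 0| / (B + 1)) (by positivity)
    rw [← hA0'] at this
    have hBB : 0 < B + 1 := by linarith
    rw [mul_zero, zero_div, zero_add, ← mul_div_assoc, le_div_iff₀ hBB] at this
    nlinarith
  rcases eq_or_lt_of_le hB0 with hB0' | hB0'
  · -- B = 0
    rw [← hB0', mul_zero, Real.sqrt_zero, mul_zero]
    by_contra hlt
    push_neg at hlt
    have hpos : 0 < |g' 0| := hlt
    have := key ((2 * A + 1) / |g' 0|) (by positivity)
    rw [← hB0'] at this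
    rw [zero_mul, add_zero, div_div_eq_mul_div, mul_comm, le_div_iff₀ (by positivity : (0:ℝ) < 2 * A + 1)] at this
    nlinarith
  · -- A > 0, B > 0
    set a := Real.sqrt A with ha
    set b := Real.sqrt B with hb
    have hap : 0 < a := Real.sqrt_pos.mpr hA0'
    have hbp : 0 < b := Real.sqrt_pos.mpr hB0'
    have haa : a ^ 2 = A := Real.sq_sqrt hA0
    have hbb : b ^ 2 = B := Real.sq_sqrt hB0
    have hkey := key (a / b) (by positivity)
    have heq : 2 * A / (a / b) + B * (a / b) = 3 * (a * b) := by
      rw [← haa, ← hbb]; field_simp; ring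
    rw [heq] at hkey
    rw [Real.sqrt_mul hA0, ← ha, ← hb]
    linarith [hkey]


lemma midpt (k : ℕ) (y : ℕ → ℝ)
    (hconv : ∀ j : ℕ, j + 2 ≤ k → 2 * y (j+1) ≤ y j + y (j+2))
    (h : ℕ) (hh : h ≤ k) :
    (k : ℝ) * y h ≤ ((k : ℝ) - h) * y 0 + h * y k := by
  set d : ℕ → ℝ := fun j => y (j+1) - y j with hd
  have mono' : ∀ j : ℕ, j + 2 ≤ k → d j ≤ d (j+1) := by
    intro j hj
    have := hconv j hj
    simp only [hd]
    linarith
  have mono : ∀ i j : ℕ, i ≤ j → j + 1 ≤ k → d i ≤ d j := by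
    intro i j
    induction j with
    | zero => intro hij _; interval_cases i; exact le_rfl
    | succ n ih =>
      intro hij hjk
      rcases Nat.lt_succ_iff_lt_or_eq.mp (Nat.lt_succ_of_le hij) with hlt | heq
      · exact (ih (by omega) (by omega)).trans (mono' n (by omega))
      · subst heq; exact le_rfl
  have hsum : ∀ n : ℕ, y n = y 0 + ∑ i ∈ Finset.range n, d i := by
    intro n
    induction n with
    | zero => simp
    | succ m ih => rw [Finset.sum_range_succ, ← add_assoc, ← ih]; simp [hd]
  rcases Nat.eq_zero_or_pos h with rfl | hpos
  · simp
  rcases eq_or_lt_of_le hh with rfl | hlt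
  · ring_nf
    exact le_rfl
  set m := d (h - 1) with hm
  set S1 := ∑ i ∈ Finset.range h, d i with hS1d
  set S2 := ∑ i ∈ Finset.Ico h k, d i with hS2d
  have hS1 : S1 ≤ (h : ℝ) * m := by
    have := Finset.sum_le_card_nsmul (Finset.range h) d m
      (fun i hi => mono i (h-1) (by simp at hi; omega) (by omega))
    simpa [nsmul_eq_mul] using this
  have hS2 : ((k : ℝ) - h) * m ≤ S2 := by
    have := Finset.card_nsmul_le_sum (Finset.Ico h k) d m
      (fun i hi => mono (h-1) i (by simp [Finset.mem_Ico] at hi; omega)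
        (by simp [Finset.mem_Ico] at hi; omega))
    rw [Nat.card_Ico] at this
    have hc : ((k - h : ℕ) : ℝ) = (k : ℝ) - h := by
      rw [Nat.cast_sub hh]
    rw [nsmul_eq_mul, hc] at this
    exact this
  have hyh : y h = y 0 + S1 := hsum h
  have hyk : y k = y 0 + (S1 + S2) := by
    rw [hsum k, hS1d, hS2d, Finset.sum_range_add_sum_Ico _ hh]
  rw [hyh, hyk]
  have hKH : (0:ℝ) ≤ (k:ℝ) - h := by
    have : (h:ℝ) ≤ k := by exact_mod_cast hh
    linarith
  have hH : (0:ℝ) ≤ (h:ℝ) := by positivity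
  nlinarith [mul_le_mul_of_nonneg_left hS1 hKH, mul_le_mul_of_nonneg_left hS2 hH]


lemma chain (k : ℕ) (hk : 2 ≤ k) (c : ℝ) (hc : 1 ≤ c) (T : ℕ → ℝ)
    (hT : ∀ j, j ≤ k → 0 ≤ T j)
    (hp : ∀ j : ℕ, j + 2 ≤ k → T (j+1) ≤ c * Real.sqrt (T j * T (j+2)))
    (h : ℕ) (h1 : 1 ≤ h) (h2 : h ≤ k - 1) :
    T h ≤ (2*c)^(k*k) * T 0 ^ (1 - (h:ℝ)/(k:ℝ)) * T k ^ ((h:ℝ)/(k:ℝ)) := by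
  have hhk : h ≤ k := by omega
  have hK : (0:ℝ) < (k:ℝ) := by
    have : 0 < k := by omega
    exact_mod_cast this
  have hHK : (h:ℝ) ≤ (k:ℝ) := by exact_mod_cast hhk
  set e0 : ℝ := 1 - (h:ℝ)/(k:ℝ) with he0d
  set e1 : ℝ := (h:ℝ)/(k:ℝ) with he1d
  have he0 : 0 ≤ e0 := by
    rw [he0d, sub_nonneg, div_le_one hK]; exact hHK
  have he1 : 0 ≤ e1 := by rw [he1d]; positivity
  have hcpos : (0:ℝ) < 2*c := by linarith
  have key : ∀ ε : ℝ, 0 < ε →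
      T h ≤ (2*c)^(k*k) * (T 0 + ε) ^ e0 * (T k + ε) ^ e1 := by
    intro ε hε
    set U : ℕ → ℝ := fun j => T j + ε with hU
    have hUpos : ∀ j, j ≤ k → 0 < U j := fun j hj => by
      have := hT j hj; simp only [hU]; linarith
    have hUε : ∀ j, j ≤ k → ε ≤ U j := fun j hj => by
      have := hT j hj; simp only [hU]; linarith
    have hpU : ∀ j : ℕ, j + 2 ≤ k → U (j+1) ≤ (2*c) * Real.sqrt (U j * U (j+2)) := by
      intro j hj
      have h0 : 0 ≤ T j := hT j (by omega)
      have h2' : 0 ≤ T (j+2) := hT _ hj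
      have hs1 : Real.sqrt (T j * T (j+2)) ≤ Real.sqrt (U j * U (j+2)) := by
        apply Real.sqrt_le_sqrt
        apply mul_le_mul (by simp only [hU]; linarith) (by simp only [hU]; linarith) h2'
          (le_of_lt (hUpos j (by omega)))
      have hs2 : ε ≤ Real.sqrt (U j * U (j+2)) := by
        have hss : Real.sqrt (ε * ε) ≤ Real.sqrt (U j * U (j+2)) := by
          apply Real.sqrt_le_sqrt
          apply mul_le_mul (hUε j (by omega)) (hUε _ hj) (le_of_lt hε)
            (le_of_lt (hUpos j (by omega)))
        rwa [Real.sqrt_mul_self hε.le] at hss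
      have hpj := hp j hj
      have hsqnn : 0 ≤ Real.sqrt (U j * U (j+2)) := Real.sqrt_nonneg _
      have hmul := mul_le_mul_of_nonneg_left hs1 (by linarith : (0:ℝ) ≤ c)
      have : U (j+1) = T (j+1) + ε := rfl
      nlinarith
    set γ := Real.log (2*c) with hγ
    have hγ0 : 0 ≤ γ := Real.log_nonneg (by linarith)
    set w : ℕ → ℝ := fun j => Real.log (U j) + γ * (j:ℝ)^2 with hw
    have hconv : ∀ j : ℕ, j + 2 ≤ k → 2 * w (j+1) ≤ w j + w (j+2) := by
      intro j hj
      have hU1 := hUpos (j+1) (by omega)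
      have hU0 := hUpos j (by omega)
      have hU2 := hUpos (j+2) hj
      have hlog : Real.log (U (j+1)) ≤ γ + (Real.log (U j) + Real.log (U (j+2)))/2 := by
        have hle := hpU j hj
        have hsq : (0:ℝ) < Real.sqrt (U j * U (j+2)) := Real.sqrt_pos.mpr (by positivity)
        have hll := Real.log_le_log hU1 hle
        rw [Real.log_mul (by linarith) (ne_of_gt hsq), Real.log_sqrt (by positivity),
          Real.log_mul (ne_of_gt hU0) (ne_of_gt hU2)] at hll
        linarith
      simp only [hw]
      push_cast
      nlinarith [hγ0]
    have hmid := midpt k w hconv h hhk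
    simp only [hw] at hmid
    set L0 := Real.log (U 0) with hL0
    set Lh := Real.log (U h) with hLh
    set Lk := Real.log (U k) with hLk
    have hdiv : Lh ≤ e0 * L0 + e1 * Lk + γ * ((k:ℝ)*(k:ℝ)) := by
      have hKe0 : (k:ℝ) * e0 = (k:ℝ) - h := by
        rw [he0d, he1d]; field_simp
      have hKe1 : (k:ℝ) * e1 = (h:ℝ) := by rw [he1d]; field_simp
      have haux1 : (h:ℝ) * ((k:ℝ)*(k:ℝ)) ≤ (k:ℝ) * ((k:ℝ)*(k:ℝ)) :=
        mul_le_mul_of_nonneg_right hHK (by positivity)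
      have haux2 : (0:ℝ) ≤ (k:ℝ) * (h:ℝ)^2 := by positivity
      rw [← mul_le_mul_iff_right₀ hK, mul_add, mul_add, ← mul_assoc, ← mul_assoc, hKe0, hKe1]
      push_cast at hmid
      nlinarith [mul_le_mul_of_nonneg_left haux1 hγ0, mul_nonneg hγ0 haux2, hmid]
    have f1 : Real.exp (e0 * L0) = (U 0)^e0 := by
      rw [Real.rpow_def_of_pos (hUpos 0 (by omega)), ← hL0, mul_comm]
    have f2 : Real.exp (e1 * Lk) = (U k)^e1 := by
      rw [Real.rpow_def_of_pos (hUpos k le_rfl), ← hLk, mul_comm]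
    have f3 : Real.exp (γ * ((k:ℝ)*(k:ℝ))) = (2*c)^(k*k) := by
      rw [← Real.rpow_natCast (2*c) (k*k), Real.rpow_def_of_pos hcpos, ← hγ]
      push_cast
      ring_nf
    calc T h ≤ U h := by simp only [hU]; linarith
      _ = Real.exp Lh := (Real.exp_log (hUpos h hhk)).symm
      _ ≤ Real.exp (e0 * L0 + e1 * Lk + γ * ((k:ℝ)*(k:ℝ))) := Real.exp_le_exp.mpr hdiv
      _ = Real.exp (e0 * L0) * Real.exp (e1 * Lk) * Real.exp (γ * ((k:ℝ)*(k:ℝ))) := by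
          rw [← Real.exp_add, ← Real.exp_add]
      _ = (2*c)^(k*k) * (U 0)^e0 * (U k)^e1 := by rw [f1, f2, f3]; ring
  -- pass to the limit ε → 0⁺
  have t0 : Filter.Tendsto (fun ε : ℝ => T 0 + ε) (nhdsWithin 0 (Set.Ioi 0)) (nhds (T 0)) := by
    have hcont : Filter.Tendsto (fun ε : ℝ => T 0 + ε) (nhds 0) (nhds (T 0 + 0)) :=
      (continuous_const.add continuous_id).tendsto 0
    rw [add_zero] at hcont
    exact hcont.mono_left nhdsWithin_le_nhds
  have tk : Filter.Tendsto (fun ε : ℝ => T k + ε) (nhdsWithin 0 (Set.Ioi 0)) (nhds (T k)) := by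
    have hcont : Filter.Tendsto (fun ε : ℝ => T k + ε) (nhds 0) (nhds (T k + 0)) :=
      (continuous_const.add continuous_id).tendsto 0
    rw [add_zero] at hcont
    exact hcont.mono_left nhdsWithin_le_nhds
  have r0 : Filter.Tendsto (fun ε : ℝ => (T 0 + ε) ^ e0) (nhdsWithin 0 (Set.Ioi 0))
      (nhds (T 0 ^ e0)) :=
    ((Real.continuousAt_rpow_const (T 0) e0 (Or.inr he0)).tendsto).comp t0
  have rk : Filter.Tendsto (fun ε : ℝ => (T k + ε) ^ e1) (nhdsWithin 0 (Set.Ioi 0))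
      (nhds (T k ^ e1)) :=
    ((Real.continuousAt_rpow_const (T k) e1 (Or.inr he1)).tendsto).comp tk
  have hlim : Filter.Tendsto (fun ε : ℝ => (2*c)^(k*k) * (T 0 + ε) ^ e0 * (T k + ε) ^ e1)
      (nhdsWithin 0 (Set.Ioi 0)) (nhds ((2*c)^(k*k) * T 0 ^ e0 * T k ^ e1)) :=
    (Filter.Tendsto.mul (Filter.Tendsto.mul tendsto_const_nhds r0) rk)
  exact ge_of_tendsto hlim (by
    filter_upwards [self_mem_nhdsWithin] with ε hε
    exact key ε hε)




lemma lineDeriv' {X : Type} [NormedAddCommGroup X] [NormedSpace ℝ X]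
    {f : X → ℝ} {n : ℕ} (j : ℕ) (hf : ContDiff ℝ n f) (hj : j + 1 ≤ n)
    (x v : X) (w : Fin j → X) (t : ℝ) :
    HasDerivAt (fun s : ℝ => iteratedFDeriv ℝ j f (x + s • v) w)
      (iteratedFDeriv ℝ (j+1) f (x + t • v) (Fin.cons v w)) t := by
  have hF : ContDiff ℝ 1 (iteratedFDeriv ℝ j f) := by
    apply hf.iteratedFDeriv_right
    exact_mod_cast (by omega : 1 + j ≤ n)
  have hline : HasDerivAt (fun s : ℝ => x + s • v) v t := by
    simpa using ((hasDerivAt_id t).smul_const v).const_add x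
  have hFd := ((hF.differentiable one_ne_zero) (x + t • v)).hasFDerivAt
  have h1 : HasDerivAt (fun s : ℝ => iteratedFDeriv ℝ j f (x + s • v))
      (fderiv ℝ (iteratedFDeriv ℝ j f) (x + t • v) v) t := hFd.comp_hasDerivAt t hline
  have h2 := (ContinuousMultilinearMap.apply ℝ (fun _ : Fin j => X) ℝ w).hasFDerivAt.comp_hasDerivAt
    t h1
  rw [iteratedFDeriv_succ_apply_left]
  exact h2

/-- Landau–Kolmogorov type interpolation inequality:
for k ≥ 2 there is C_k > 0 with
‖D^h f‖_∞ ≤ C_k ‖f‖_∞^{1-h/k} ‖D^k f‖_∞^{h/k}, 1 ≤ h ≤ k-1,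
for bounded C^k functions f : X → ℝ with bounded derivatives up to order k. -/
theorem stmt2 (k : ℕ) (hk : 2 ≤ k) :
    ∃ C : ℝ, 0 < C ∧
      ∀ (X : Type) [NormedAddCommGroup X] [NormedSpace ℝ X]
        (f : X → ℝ) (Mf Mk : ℝ),
        ContDiff ℝ k f →
        (∀ j : ℕ, j ≤ k → ∃ Mj : ℝ, ∀ x, ‖iteratedFDeriv ℝ j f x‖ ≤ Mj) →
        (∀ x, |f x| ≤ Mf) →
        (∀ x, ‖iteratedFDeriv ℝ k f x‖ ≤ Mk) →
        ∀ h : ℕ, 1 ≤ h → h ≤ k - 1 →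
        ∀ x, ‖iteratedFDeriv ℝ h f x‖ ≤
          C * Mf ^ (1 - (h:ℝ)/(k:ℝ)) * Mk ^ ((h:ℝ)/(k:ℝ)) := by
  refine ⟨(6:ℝ)^(k*k), by positivity, ?_⟩
  intro X _ _ f Mf Mk hf hbdd hMf hMk h hh1 hh2 x
  rcases isEmpty_or_nonempty X with hX | hX
  · exact (IsEmpty.false x).elim
  set T : ℕ → ℝ := fun j => sSup (Set.range fun y => ‖iteratedFDeriv ℝ j f y‖) with hT
  have hbddj : ∀ j, j ≤ k → BddAbove (Set.range fun y => ‖iteratedFDeriv ℝ j f y‖) := by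
    intro j hj
    obtain ⟨Mj, hMj⟩ := hbdd j hj
    exact ⟨Mj, by rintro _ ⟨y, rfl⟩; exact hMj y⟩
  have hle : ∀ j, j ≤ k → ∀ y, ‖iteratedFDeriv ℝ j f y‖ ≤ T j := fun j hj y =>
    le_csSup (hbddj j hj) (Set.mem_range_self y)
  have hT0 : ∀ j, j ≤ k → 0 ≤ T j := fun j hj =>
    le_trans (norm_nonneg _) (hle j hj (Classical.arbitrary X))
  have hpair : ∀ j : ℕ, j + 2 ≤ k → T (j+1) ≤ 3 * Real.sqrt (T j * T (j+2)) := by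
    intro j hj
    have hsq : (0:ℝ) ≤ Real.sqrt (T j * T (j+2)) := Real.sqrt_nonneg _
    apply Real.sSup_le
    · rintro _ ⟨y, rfl⟩
      apply ContinuousMultilinearMap.opNorm_le_bound (by linarith)
      intro m
      set v := m 0 with hv
      set wt := Fin.tail m with hw
      set P := ∏ i : Fin j, ‖wt i‖ with hP
      have hPnn : 0 ≤ P := Finset.prod_nonneg (fun i _ => norm_nonneg _)
      have hd1 : ∀ t : ℝ, HasDerivAt (fun s => iteratedFDeriv ℝ j f (y + s • v) wt)
          (iteratedFDeriv ℝ (j+1) f (y + t • v) (Fin.cons v wt)) t :=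
        fun t => lineDeriv' j hf (by omega) y v wt t
      have hd2 : ∀ t : ℝ,
          HasDerivAt (fun s => iteratedFDeriv ℝ (j+1) f (y + s • v) (Fin.cons v wt))
          (iteratedFDeriv ℝ (j+2) f (y + t • v) (Fin.cons v (Fin.cons v wt))) t :=
        fun t => lineDeriv' (j+1) hf (by omega) y v (Fin.cons v wt) t
      have hA : ∀ t : ℝ, |iteratedFDeriv ℝ j f (y + t • v) wt| ≤ T j * P := by
        intro t
        rw [← Real.norm_eq_abs]
        calc ‖iteratedFDeriv ℝ j f (y + t • v) wt‖
            ≤ ‖iteratedFDeriv ℝ j f (y + t • v)‖ * P :=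
              (iteratedFDeriv ℝ j f (y + t • v)).le_opNorm wt
          _ ≤ T j * P := mul_le_mul_of_nonneg_right (hle j (by omega) _) hPnn
      have hB : ∀ t : ℝ, |iteratedFDeriv ℝ (j+2) f (y + t • v)
          (Fin.cons v (Fin.cons v wt))| ≤ (T (j+2) * ‖v‖^2) * P := by
        intro t
        rw [← Real.norm_eq_abs]
        have hop := (iteratedFDeriv ℝ (j+2) f (y + t • v)).le_opNorm
          (Fin.cons v (Fin.cons v wt))
        have hprod : (∏ i : Fin (j+2), ‖(Fin.cons v (Fin.cons v wt) : Fin (j+2) → X) i‖)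
            = ‖v‖ * (‖v‖ * P) := by
          rw [Fin.prod_univ_succ, Fin.prod_univ_succ]
          simp [hP]
        rw [hprod] at hop
        refine hop.trans ?_
        have := mul_le_mul_of_nonneg_right (hle (j+2) hj (y + t • v))
          (by positivity : (0:ℝ) ≤ ‖v‖ * (‖v‖ * P))
        calc ‖iteratedFDeriv ℝ (j+2) f (y + t • v)‖ * (‖v‖ * (‖v‖ * P))
            ≤ T (j+2) * (‖v‖ * (‖v‖ * P)) := this
          _ = (T (j+2) * ‖v‖^2) * P := by ring
      have hL := landau1 _ _ _ _ _ hd1 hd2 hA hB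
      have h00 : iteratedFDeriv ℝ (j+1) f (y + (0:ℝ) • v) (Fin.cons v wt)
          = iteratedFDeriv ℝ (j+1) f y m := by
        rw [zero_smul, add_zero, hv, hw, Fin.cons_self_tail]
      rw [h00] at hL
      have hsqeq : Real.sqrt ((T j * P) * ((T (j+2) * ‖v‖^2) * P))
          = Real.sqrt (T j * T (j+2)) * (‖v‖ * P) := by
        rw [show (T j * P) * ((T (j+2) * ‖v‖^2) * P) = (T j * T (j+2)) * (‖v‖ * P)^2 by ring,
          Real.sqrt_mul (mul_nonneg (hT0 j (by omega)) (hT0 (j+2) hj)),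
          Real.sqrt_sq (by positivity)]
      rw [hsqeq] at hL
      have hprodm : (∏ i : Fin (j+1), ‖m i‖) = ‖v‖ * P := by
        rw [Fin.prod_univ_succ]
        rfl
      rw [Real.norm_eq_abs, hprodm]
      calc |iteratedFDeriv ℝ (j+1) f y m| ≤ 3 * (Real.sqrt (T j * T (j+2)) * (‖v‖ * P)) := hL
        _ = 3 * Real.sqrt (T j * T (j+2)) * (‖v‖ * P) := by ring
    · linarith
  have hch := chain k hk 3 (by norm_num) T hT0 hpair h hh1 hh2
  have he0 : 0 ≤ 1 - (h:ℝ)/(k:ℝ) := by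
    have hK : (0:ℝ) < (k:ℝ) := by
      have : 0 < k := by omega
      exact_mod_cast this
    rw [sub_nonneg, div_le_one hK]
    exact_mod_cast (by omega : h ≤ k)
  have he1 : 0 ≤ (h:ℝ)/(k:ℝ) := by positivity
  have hT0Mf : T 0 ≤ Mf := by
    apply Real.sSup_le
    · rintro _ ⟨y, rfl⟩
      show ‖iteratedFDeriv ℝ 0 f y‖ ≤ Mf
      rw [norm_iteratedFDeriv_zero, Real.norm_eq_abs]
      exact hMf y
    · exact (abs_nonneg _).trans (hMf (Classical.arbitrary X))
  have hTkMk : T k ≤ Mk := by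
    apply Real.sSup_le
    · rintro _ ⟨y, rfl⟩
      exact hMk y
    · exact (norm_nonneg _).trans (hMk (Classical.arbitrary X))
  have hMf0 : 0 ≤ Mf := (hT0 0 (by omega)).trans hT0Mf
  have hMk0 : 0 ≤ Mk := (hT0 k le_rfl).trans hTkMk
  have hr0 : T 0 ^ (1 - (h:ℝ)/(k:ℝ)) ≤ Mf ^ (1 - (h:ℝ)/(k:ℝ)) :=
    Real.rpow_le_rpow (hT0 0 (by omega)) hT0Mf he0
  have hrk : T k ^ ((h:ℝ)/(k:ℝ)) ≤ Mk ^ ((h:ℝ)/(k:ℝ)) :=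
    Real.rpow_le_rpow (hT0 k le_rfl) hTkMk he1
  calc ‖iteratedFDeriv ℝ h f x‖ ≤ T h := hle h (by omega) x
    _ ≤ (2*3)^(k*k) * T 0 ^ (1 - (h:ℝ)/(k:ℝ)) * T k ^ ((h:ℝ)/(k:ℝ)) := hch
    _ = (6:ℝ)^(k*k) * T 0 ^ (1 - (h:ℝ)/(k:ℝ)) * T k ^ ((h:ℝ)/(k:ℝ)) := by norm_num
    _ ≤ (6:ℝ)^(k*k) * Mf ^ (1 - (h:ℝ)/(k:ℝ)) * Mk ^ ((h:ℝ)/(k:ℝ)) := by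
        apply mul_le_mul _ hrk (Real.rpow_nonneg (hT0 k le_rfl) _) (by positivity)
        exact mul_le_mul_of_nonneg_left hr0 (by positivity)
end

section
/- For every β > 1 and every h ∈ ℕ with h < β, the space C_b^h(X) belongs to the class J_{h/β} between C_b(X) and C_b^β(X); that is, there exists C > 0 such that ‖f‖_{C_b^h(X)} ≤ C · ‖f‖_{C_b^β(X)}^{h/β} · ‖f‖_∞^{1−h/β} for all f ∈ C_b^β(X). -/
open Set Real

/-!
Landau–Kolmogorov interpolation. Comparing `F` with its linearisation at scale `τ` gives
`‖DF‖ ≤ 2 sup ‖F‖ / τ + K τ ^ γ` whenever `DF` is `(K, γ)`-Hölder. Applied to each `D^i f`, this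
yields for the sup norms `m_i` the chain `m_(i+1) ≤ 2 m_i / τ + m_(i+2) τ`, whose last link carries
the Hölder term `K τ ^ σ` instead. Rescaling by `ρ ^ i`, where `K ρ ^ (k + σ) = ‖f‖_∞`, makes the
chain scale-free, and a discrete maximum principle for the weights `4 ^ (j ^ 2)` bounds every
`m_j ρ ^ j` by a multiple of `‖f‖_∞`, i.e. `m_j ≲ K ^ (j / β) ‖f‖_∞ ^ (1 - j / β)`.
-/

theorem nonpos_of_four_pow_sq_weighted_local_max {u : ℕ → ℝ} {i : ℕ}
    (hu : u (i + 1) ≤ 2 * u i / 16 ^ (i + 1) + u (i + 2) * 16 ^ (i + 1))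
    (hleft : u i * 4 ^ (i * i) ≤ u (i + 1) * 4 ^ ((i + 1) * (i + 1)))
    (hright : u (i + 2) * 4 ^ ((i + 2) * (i + 2)) ≤ u (i + 1) * 4 ^ ((i + 1) * (i + 1))) :
    u (i + 1) ≤ 0 := by
  set r : ℝ := 4 ^ (i * i)
  set s : ℝ := 4 ^ i
  have hr : 0 < r := by positivity
  have hs : 0 < s := by positivity
  have e16 : (16 : ℝ) ^ (i + 1) = 16 * s ^ 2 := by
    rw [pow_succ, show (16 : ℝ) = 4 ^ 2 by norm_num, ← pow_mul, ← pow_mul, mul_comm]; ring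
  have e1 : (4 : ℝ) ^ ((i + 1) * (i + 1)) = r * s ^ 2 * 4 := by
    rw [show (i + 1) * (i + 1) = i * i + i * 2 + 1 by ring, pow_add, pow_add, pow_mul]; ring
  have e2 : (4 : ℝ) ^ ((i + 2) * (i + 2)) = r * s ^ 4 * 256 := by
    rw [show (i + 2) * (i + 2) = i * i + i * 4 + 4 by ring, pow_add, pow_add, pow_mul]; ring
  rw [e16] at hu
  rw [e1] at hleft hright
  rw [e2] at hright
  -- for the weighted values `w j = u j * 4 ^ (j * j)`, `hu` says `w (i+1) ≤ w i / 2 + w (i+2) / 4`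
  have hw : u (i + 1) * (r * s ^ 2 * 4) ≤ u i * r / 2 + u (i + 2) * (r * s ^ 4 * 256) / 4 := by
    have hweight : (2 * u i / (16 * s ^ 2) + u (i + 2) * (16 * s ^ 2)) * (r * s ^ 2 * 4)
        = u i * r / 2 + u (i + 2) * (r * s ^ 4 * 256) / 4 := by
      field_simp
      ring
    exact hweight ▸ mul_le_mul_of_nonneg_right hu (by positivity)
  have : u (i + 1) * (r * s ^ 2 * 4) ≤ 0 := by linarith
  exact nonpos_of_mul_nonpos_left this (by positivity)

theorem le_four_pow_mul_add_of_le_div_add_mul {u : ℕ → ℝ} {n : ℕ} (h0 : 0 ≤ u 0) (hn : 0 ≤ u n)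
    (hu : ∀ i, i + 2 ≤ n → ∀ t ≥ (1 : ℝ), u (i + 1) ≤ 2 * u i / t + u (i + 2) * t)
    {j : ℕ} (hj : j ≤ n) : u j ≤ 4 ^ (n * n) * (u 0 + u n) := by
  set w : ℕ → ℝ := fun j => u j * 4 ^ (j * j)
  obtain ⟨j₀, hj₀, hmax⟩ := Finset.exists_max_image (Finset.range (n + 1)) w ⟨0, by simp⟩
  replace hmax : ∀ j ≤ n, w j ≤ w j₀ := fun j hj => hmax j (Finset.mem_range.mpr (by omega))
  have hj₀n : j₀ ≤ n := Nat.lt_succ_iff.mp (Finset.mem_range.mp hj₀)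
  have hpow : (1 : ℝ) ≤ 4 ^ (n * n) := one_le_pow₀ (by norm_num)
  have hbound : w j₀ ≤ 4 ^ (n * n) * (u 0 + u n) := by
    rcases Nat.eq_zero_or_pos j₀ with rfl | hpos
    · simp only [w, mul_zero, pow_zero, mul_one]; nlinarith
    rcases hj₀n.eq_or_lt with rfl | hlt
    · simp only [w]; nlinarith
    obtain ⟨i, rfl⟩ : ∃ i, j₀ = i + 1 := ⟨j₀ - 1, by omega⟩
    have hi : u (i + 1) ≤ 0 := nonpos_of_four_pow_sq_weighted_local_max
      (hu i (by omega) _ (one_le_pow₀ (by norm_num))) (hmax i (by omega)) (hmax (i + 2) (by omega))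
    have : w (i + 1) ≤ 0 := mul_nonpos_of_nonpos_of_nonneg hi (by positivity)
    nlinarith
  rcases le_or_gt (u j) 0 with hneg | hpos
  · nlinarith
  calc u j ≤ w j := le_mul_of_one_le_right hpos.le (one_le_pow₀ (by norm_num))
    _ ≤ w j₀ := hmax j hj
    _ ≤ _ := hbound

theorem mul_pow_le_of_landau_chain {m : ℕ → ℝ} {k j : ℕ} {σ K M ρ : ℝ} (hσ1 : σ ≤ 1) (hM : 0 ≤ M)
    (hρ : 0 < ρ) (hρk : K * ρ ^ σ * ρ ^ k = M) (hm0 : 0 ≤ m 0) (hm0M : m 0 ≤ M)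
    (hlip : ∀ i, i + 2 ≤ k → ∀ τ > 0, m (i + 1) ≤ 2 * m i / τ + m (i + 2) * τ)
    (htop : ∀ i, i + 1 = k → ∀ τ > 0, m (i + 1) ≤ 2 * m i / τ + K * τ ^ σ) (hj : j ≤ k) :
    m j * ρ ^ j ≤ 2 * 4 ^ ((k + 1) * (k + 1)) * M := by
  -- appending `M` as a last term turns the Hölder link into an ordinary one (`t ^ σ ≤ t`, `t ≥ 1`)
  set u : ℕ → ℝ := fun j => if j ≤ k then m j * ρ ^ j else M
  have hu : ∀ i, i + 2 ≤ k + 1 → ∀ t ≥ (1 : ℝ), u (i + 1) ≤ 2 * u i / t + u (i + 2) * t := by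
    intro i hi t ht
    have ht0 : 0 < t := one_pos.trans_le ht
    have hτ : 0 < t * ρ := by positivity
    simp only [u, if_pos (show i + 1 ≤ k by omega), if_pos (show i ≤ k by omega)]
    rcases (show i + 2 ≤ k ∨ i + 1 = k by omega) with hi2 | hik
    · rw [if_pos hi2]
      calc m (i + 1) * ρ ^ (i + 1) ≤ (2 * m i / (t * ρ) + m (i + 2) * (t * ρ)) * ρ ^ (i + 1) := by
            gcongr
            exact hlip i hi2 _ hτ
        _ = 2 * (m i * ρ ^ i) / t + m (i + 2) * ρ ^ (i + 2) * t := by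
            field_simp
            ring
    · rw [if_neg (by omega)]
      calc m (i + 1) * ρ ^ (i + 1) ≤ (2 * m i / (t * ρ) + K * (t * ρ) ^ σ) * ρ ^ (i + 1) := by
            gcongr
            exact htop i hik _ hτ
        _ = 2 * (m i * ρ ^ i) / t + K * ρ ^ σ * ρ ^ k * t ^ σ := by
            rw [mul_rpow ht0.le hρ.le, ← hik]
            field_simp
            ring
        _ ≤ 2 * (m i * ρ ^ i) / t + M * t := by
            rw [hρk]
            gcongr
            simpa using rpow_le_rpow_of_exponent_le ht hσ1
  have hu0 : u 0 = m 0 := by simp [u]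
  have huk : u (k + 1) = M := by simp [u]
  have := le_four_pow_mul_add_of_le_div_add_mul (j := j) (hu0 ▸ hm0) (huk ▸ hM) hu (by omega)
  calc m j * ρ ^ j ≤ 4 ^ ((k + 1) * (k + 1)) * (m 0 + M) := by
        simpa only [u, if_pos hj, hu0, huk] using this
    _ ≤ 4 ^ ((k + 1) * (k + 1)) * (M + M) := by gcongr
    _ = 2 * 4 ^ ((k + 1) * (k + 1)) * M := by ring

theorem rpow_mul_rpow_one_sub_le_of_le {M B a b : ℝ} (hM : 0 < M) (hMB : M ≤ B) (hab : a ≤ b) :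
    B ^ a * M ^ (1 - a) ≤ B ^ b * M ^ (1 - b) := by
  have hB : 0 < B := hM.trans_le hMB
  have key : ∀ c : ℝ, B ^ c * M ^ (1 - c) = (B / M) ^ c * M := fun c => by
    rw [div_rpow hB.le hM.le, rpow_sub hM, rpow_one]
    have := (rpow_pos_of_pos hM c).ne'
    field_simp
  rw [key, key]
  exact mul_le_mul_of_nonneg_right
    (rpow_le_rpow_of_exponent_le ((one_le_div hM).mpr hMB) hab) hM.le

theorem div_rpow_one_div_pow {M K β : ℝ} (hM : 0 < M) (hK : 0 < K) (j : ℕ) :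
    M / ((M / K) ^ (1 / β)) ^ j = K ^ (j / β) * M ^ (1 - j / β) := by
  rw [← rpow_natCast, ← rpow_mul (div_pos hM hK).le, div_rpow hM.le hK.le, rpow_sub hM, rpow_one,
    one_div_mul_eq_div]
  have := (rpow_pos_of_pos hM (j / β)).ne'
  field_simp

theorem add_sum_Icc_le_of_le {g : ℕ → ℝ} {c : ℝ} {h : ℕ} (hg : ∀ j ≤ h, g j ≤ c) :
    g 0 + ∑ j ∈ Finset.Icc 1 h, g j ≤ (h + 1) * c := by
  have := Finset.sum_le_card_nsmul (Finset.Icc 1 h) g c fun j hj => hg j (Finset.mem_Icc.mp hj).2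
  rw [Nat.card_Icc, nsmul_eq_mul, Nat.add_sub_cancel] at this
  linarith [hg 0 h.zero_le]

theorem le_of_add_sum_Icc_le {g : ℕ → ℝ} {B : ℝ} {n j : ℕ} (hg : ∀ i, 0 ≤ g i)
    (hB : g 0 + ∑ i ∈ Finset.Icc 1 n, g i ≤ B) (hj : j ≤ n) : g j ≤ B := by
  have hsum := Finset.sum_nonneg fun i (_ : i ∈ Finset.Icc 1 n) => hg i
  rcases j.eq_zero_or_pos with rfl | hj0
  · linarith
  · linarith [hg 0, Finset.single_le_sum (fun i _ => hg i) (Finset.mem_Icc.mpr ⟨hj0, hj⟩)]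

variable {X E : Type*} [NormedAddCommGroup X] [NormedSpace ℝ X]
  [NormedAddCommGroup E] [NormedSpace ℝ E]

theorem norm_fderiv_le_of_holder {F : X → E} (hF : Differentiable ℝ F) {M K γ τ : ℝ}
    (hK : 0 ≤ K) (hγ : 0 ≤ γ) (hτ : 0 < τ) (hM : ∀ z, ‖F z‖ ≤ M)
    (hHol : ∀ z w, ‖fderiv ℝ F z - fderiv ℝ F w‖ ≤ K * ‖z - w‖ ^ γ) (x : X) :
    ‖fderiv ℝ F x‖ ≤ 2 * M / τ + K * τ ^ γ := by
  set A := fderiv ℝ F x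
  have hM0 : 0 ≤ M := (norm_nonneg _).trans (hM x)
  refine A.opNorm_le_of_unit_norm (by positivity) fun v hv => ?_
  -- `F - A` has derivative of norm at most `K τ ^ γ` on the ball of radius `τ` about `x`
  have hrem : ‖(F (x + τ • v) - A (x + τ • v)) - (F x - A x)‖ ≤ K * τ ^ γ * ‖x + τ • v - x‖ := by
    refine (convex_closedBall x τ).norm_image_sub_le_of_norm_fderiv_le (f := fun w => F w - A w)
      (fun z _ => (hF z).sub A.differentiableAt) (fun z hz => ?_)
      (Metric.mem_closedBall_self hτ.le) ?_
    · rw [fderiv_fun_sub (hF z) A.differentiableAt, A.fderiv]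
      exact (hHol z x).trans (by gcongr; exact mem_closedBall_iff_norm.mp hz)
    · simp [norm_smul, hv, abs_of_pos hτ]
  have hAv : τ • A v = (F (x + τ • v) - F x) - ((F (x + τ • v) - A (x + τ • v)) - (F x - A x)) := by
    simp only [map_add, map_smul]; abel
  have : τ * ‖A v‖ ≤ 2 * M + K * τ ^ γ * τ := by
    calc τ * ‖A v‖ = ‖τ • A v‖ := by rw [norm_smul, Real.norm_of_nonneg hτ.le]
      _ ≤ ‖F (x + τ • v)‖ + ‖F x‖ + K * τ ^ γ * ‖x + τ • v - x‖ := by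
        rw [hAv]
        exact (norm_sub_le _ _).trans (add_le_add (norm_sub_le _ _) hrem)
      _ ≤ 2 * M + K * τ ^ γ * τ := by
        simp only [add_sub_cancel_left, norm_smul, hv, Real.norm_of_nonneg hτ.le, mul_one]
        linarith [hM x, hM (x + τ • v)]
  rw [div_add' _ _ _ hτ.ne', le_div_iff₀ hτ]
  linarith

theorem norm_fderiv_iteratedFDeriv_sub {f : X → E} {n : ℕ} (x y : X) :
    ‖fderiv ℝ (iteratedFDeriv ℝ n f) x - fderiv ℝ (iteratedFDeriv ℝ n f) y‖ =
      ‖iteratedFDeriv ℝ (n + 1) f x - iteratedFDeriv ℝ (n + 1) f y‖ := by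
  rw [fderiv_iteratedFDeriv, Function.comp_apply, Function.comp_apply,
    ← LinearIsometryEquiv.map_sub, LinearIsometryEquiv.norm_map]

variable {f : X → E} {k i : ℕ}

theorem norm_iteratedFDeriv_succ_le_of_holder (hf : ContDiff ℝ k f) (hi : i < k) {M K γ τ : ℝ}
    (hK : 0 ≤ K) (hγ : 0 ≤ γ) (hτ : 0 < τ) (hM : ∀ y, ‖iteratedFDeriv ℝ i f y‖ ≤ M)
    (hHol : ∀ y z, ‖iteratedFDeriv ℝ (i + 1) f y - iteratedFDeriv ℝ (i + 1) f z‖ ≤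
      K * ‖y - z‖ ^ γ) (x : X) :
    ‖iteratedFDeriv ℝ (i + 1) f x‖ ≤ 2 * M / τ + K * τ ^ γ := by
  rw [← norm_fderiv_iteratedFDeriv]
  exact norm_fderiv_le_of_holder (hf.differentiable_iteratedFDeriv (by exact_mod_cast hi))
    hK hγ hτ hM (fun y z => (norm_fderiv_iteratedFDeriv_sub (f := f) y z).trans_le (hHol y z)) x

theorem norm_iteratedFDeriv_sub_le (hf : ContDiff ℝ k f) (hi : i + 1 < k) {K : ℝ}
    (hK : ∀ y, ‖iteratedFDeriv ℝ (i + 2) f y‖ ≤ K) (x y : X) :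
    ‖iteratedFDeriv ℝ (i + 1) f x - iteratedFDeriv ℝ (i + 1) f y‖ ≤ K * ‖x - y‖ :=
  convex_univ.norm_image_sub_le_of_norm_fderiv_le
    (fun z _ => (hf.differentiable_iteratedFDeriv (by exact_mod_cast hi)) z)
    (fun z _ => norm_fderiv_iteratedFDeriv.trans_le (hK z)) (mem_univ y) (mem_univ x)

theorem norm_iteratedFDeriv_le_of_holder (hf : ContDiff ℝ k f) {σ M K : ℝ} (hσ0 : 0 < σ)
    (hσ1 : σ ≤ 1) (hM : 0 < M) (hK : 0 < K)
    (hbdd : ∀ j ≤ k, BddAbove (range fun x => ‖iteratedFDeriv ℝ j f x‖))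
    (hfM : ∀ x, ‖f x‖ ≤ M)
    (hHol : ∀ x y, ‖iteratedFDeriv ℝ k f x - iteratedFDeriv ℝ k f y‖ ≤ K * ‖x - y‖ ^ σ)
    {j : ℕ} (hj : j ≤ k) (x : X) :
    ‖iteratedFDeriv ℝ j f x‖ ≤
      2 * 4 ^ ((k + 1) * (k + 1)) * (K ^ (j / (k + σ)) * M ^ (1 - j / (k + σ))) := by
  set m : ℕ → ℝ := fun j => ⨆ y, ‖iteratedFDeriv ℝ j f y‖
  have hle : ∀ j ≤ k, ∀ y, ‖iteratedFDeriv ℝ j f y‖ ≤ m j := fun j hj y => le_ciSup (hbdd j hj) y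
  have hm_nonneg : ∀ j ≤ k, 0 ≤ m j := fun j hj => (norm_nonneg _).trans (hle j hj 0)
  have hm0 : m 0 ≤ M := ciSup_le fun y => by rw [norm_iteratedFDeriv_zero]; exact hfM y
  have hlip : ∀ i, i + 2 ≤ k → ∀ τ > 0, m (i + 1) ≤ 2 * m i / τ + m (i + 2) * τ := by
    intro i hi τ hτ
    refine ciSup_le fun y => ?_
    simpa using norm_iteratedFDeriv_succ_le_of_holder hf (by omega) (hm_nonneg _ hi) zero_le_one
      hτ (hle i (by omega)) (fun y z => by
        simpa using norm_iteratedFDeriv_sub_le hf (by omega) (hle _ hi) y z) y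
  have htop : ∀ i, i + 1 = k → ∀ τ > 0, m (i + 1) ≤ 2 * m i / τ + K * τ ^ σ := by
    rintro i rfl τ hτ
    exact ciSup_le
      (norm_iteratedFDeriv_succ_le_of_holder hf (by omega) hK.le hσ0.le hτ (hle i (by omega)) hHol)
  -- the scale `ρ` at which the Hölder term `K ρ ^ (k + σ)` equals `M`
  set ρ : ℝ := (M / K) ^ (1 / (k + σ))
  have hρ : 0 < ρ := rpow_pos_of_pos (div_pos hM hK) _
  have hρk : K * ρ ^ σ * ρ ^ k = M := by
    rw [mul_assoc, ← rpow_natCast, ← rpow_add hρ, ← rpow_mul (div_pos hM hK).le, add_comm σ,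
      one_div_mul_cancel (by positivity), rpow_one]
    field_simp
  have hmj := mul_pow_le_of_landau_chain hσ1 hM.le hρ hρk (hm_nonneg 0 k.zero_le) hm0 hlip htop hj
  calc ‖iteratedFDeriv ℝ j f x‖ ≤ m j := hle j hj x
    _ ≤ 2 * 4 ^ ((k + 1) * (k + 1)) * M / ρ ^ j := by rwa [le_div_iff₀ (by positivity)]
    _ = _ := by rw [mul_div_assoc, div_rpow_one_div_pow hM hK]

theorem norm_iteratedFDeriv_le_of_holder_of_le (hf : ContDiff ℝ k f) {σ Mf B : ℝ} (hσ0 : 0 < σ)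
    (hσ1 : σ ≤ 1) (hfM : ∀ x, ‖f x‖ ≤ Mf) (hB : ∀ j ≤ k, ∀ x, ‖iteratedFDeriv ℝ j f x‖ ≤ B)
    (hHol : ∀ x y, ‖iteratedFDeriv ℝ k f x - iteratedFDeriv ℝ k f y‖ ≤ B * ‖x - y‖ ^ σ)
    {h j : ℕ} (hh : (h : ℝ) < k + σ) (hj : j ≤ h) (x : X) :
    ‖iteratedFDeriv ℝ j f x‖ ≤
      2 * 4 ^ ((k + 1) * (k + 1)) * (B ^ (h / (k + σ)) * Mf ^ (1 - h / (k + σ))) := by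
  have hhk : h ≤ k := Nat.lt_succ_iff.mp (by exact_mod_cast (by linarith : (h : ℝ) < k + 1))
  have hθ : (h : ℝ) / (k + σ) ≤ 1 := (div_le_one (by positivity)).mpr hh.le
  have hMf : 0 ≤ Mf := (norm_nonneg _).trans (hfM x)
  have hB0 : 0 ≤ B := (norm_nonneg _).trans (hB 0 k.zero_le x)
  -- passing to `M = min Mf B ≤ B` makes `B ^ θ * M ^ (1 - θ)` increasing in `θ`
  set M := min Mf B
  have hfM' : ∀ y, ‖f y‖ ≤ M := fun y => le_min (hfM y) (by simpa using hB 0 k.zero_le y)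
  rcases (le_min hMf hB0 : 0 ≤ M).eq_or_lt with hM0 | hM
  · have hf0 : f = 0 := funext fun y => norm_le_zero_iff.mp (hM0 ▸ hfM' y)
    rw [hf0, iteratedFDeriv_zero, Pi.zero_apply, norm_zero]
    positivity
  calc ‖iteratedFDeriv ℝ j f x‖
      ≤ 2 * 4 ^ ((k + 1) * (k + 1)) * (B ^ (j / (k + σ)) * M ^ (1 - j / (k + σ))) :=
        norm_iteratedFDeriv_le_of_holder hf hσ0 hσ1 hM (hM.trans_le (min_le_right _ _))
          (fun j hj => ⟨B, forall_mem_range.2 (hB j hj)⟩) hfM' hHol (hj.trans hhk) x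
    _ ≤ 2 * 4 ^ ((k + 1) * (k + 1)) * (B ^ (h / (k + σ)) * M ^ (1 - h / (k + σ))) := by
        gcongr 2 * 4 ^ ((k + 1) * (k + 1)) * ?_
        exact rpow_mul_rpow_one_sub_le_of_le hM (min_le_right _ _) (by gcongr)
    _ ≤ 2 * 4 ^ ((k + 1) * (k + 1)) * (B ^ (h / (k + σ)) * Mf ^ (1 - h / (k + σ))) := by
        gcongr 2 * 4 ^ ((k + 1) * (k + 1)) * (_ * ?_)
        exact rpow_le_rpow hM.le (min_le_left _ _) (sub_nonneg.mpr hθ)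

theorem stmt4_general (β σ : ℝ) (k : ℕ) (hσ : σ ∈ Set.Ioc (0:ℝ) 1) (hβ : β = (k:ℝ) + σ) :
    ∃ C : ℝ, 0 < C ∧
      ∀ h : ℕ, (h:ℝ) < β →
      ∀ (X : Type) [NormedAddCommGroup X] [NormedSpace ℝ X]
        (f : X → ℝ) (Mf B : ℝ),
        ContDiff ℝ k f →
        (∀ x, |f x| ≤ Mf) →
        (∀ x, |f x| + ∑ j ∈ Finset.Icc 1 k, ‖iteratedFDeriv ℝ j f x‖ ≤ B) →
        (∀ x y, ‖iteratedFDeriv ℝ k f x - iteratedFDeriv ℝ k f y‖ ≤ B * ‖x - y‖ ^ σ) →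
        ∀ x, |f x| + ∑ j ∈ Finset.Icc 1 h, ‖iteratedFDeriv ℝ j f x‖ ≤
          C * B ^ ((h:ℝ)/β) * Mf ^ (1 - (h:ℝ)/β) := by
  obtain ⟨hσ0, hσ1⟩ := hσ
  subst hβ
  refine ⟨(k + 1) * (2 * 4 ^ ((k + 1) * (k + 1))), by positivity, ?_⟩
  intro h hh X _ _ f Mf B hf hfM hfB hHol x
  have hB : ∀ j ≤ k, ∀ y, ‖iteratedFDeriv ℝ j f y‖ ≤ B := fun j hj y =>
    le_of_add_sum_Icc_le (g := fun i => ‖iteratedFDeriv ℝ i f y‖) (fun _ => norm_nonneg _)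
      (by simpa using hfB y) hj
  have hMf : 0 ≤ Mf := (abs_nonneg _).trans (hfM x)
  have hB0 : 0 ≤ B := (norm_nonneg _).trans (hB 0 k.zero_le x)
  have hhk : h ≤ k := Nat.lt_succ_iff.mp (by exact_mod_cast (by linarith : (h : ℝ) < k + 1))
  calc |f x| + ∑ j ∈ Finset.Icc 1 h, ‖iteratedFDeriv ℝ j f x‖
      ≤ (h + 1) * (2 * 4 ^ ((k + 1) * (k + 1)) * (B ^ (h / (k + σ)) * Mf ^ (1 - h / (k + σ)))) := by
        simpa using add_sum_Icc_le_of_le (g := fun j => ‖iteratedFDeriv ℝ j f x‖) fun j hj =>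
          norm_iteratedFDeriv_le_of_holder_of_le hf hσ0 hσ1 (by simpa using hfM) hB hHol hh hj x
    _ ≤ (k + 1) * (2 * 4 ^ ((k + 1) * (k + 1)) * (B ^ (h / (k + σ)) * Mf ^ (1 - h / (k + σ)))) := by
        gcongr
    _ = _ := by ring

/-- For β > 1 (β = k + σ, σ ∈ (0,1]) and h ∈ ℕ with h < β, C_b^h(X) belongs to the
class J_{h/β} between C_b(X) and C_b^β(X):
‖f‖_{C_b^h} ≤ C ‖f‖_{C_b^β}^{h/β} ‖f‖_∞^{1-h/β}. -/
theorem stmt4 (β σ : ℝ) (k : ℕ) (hσ : σ ∈ Set.Ioc (0:ℝ) 1) (hβ : β = (k:ℝ) + σ)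
    (hβ1 : 1 < β) :
    ∃ C : ℝ, 0 < C ∧
      ∀ h : ℕ, (h:ℝ) < β →
      ∀ (X : Type) [NormedAddCommGroup X] [NormedSpace ℝ X]
        (f : X → ℝ) (Mf B : ℝ),
        ContDiff ℝ k f →
        (∀ x, |f x| ≤ Mf) →
        (∀ x, |f x| + ∑ j ∈ Finset.Icc 1 k, ‖iteratedFDeriv ℝ j f x‖ ≤ B) →
        (∀ x y, ‖iteratedFDeriv ℝ k f x - iteratedFDeriv ℝ k f y‖ ≤ B * ‖x - y‖ ^ σ) →
        ∀ x, |f x| + ∑ j ∈ Finset.Icc 1 h, ‖iteratedFDeriv ℝ j f x‖ ≤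
          C * B ^ ((h:ℝ)/β) * Mf ^ (1 - (h:ℝ)/β) :=
  stmt4_general β σ k hσ hβ
end

section
/- For every k ∈ ℕ, the mapping f ↦ ‖f‖_∞ + ‖D^k f‖_∞ is a norm on C_b^k(X) equivalent to the full norm ‖f‖_∞ + Σ_{j=1}^k ‖D^j f‖_∞. -/
/-!
Along a segment of length `t` starting at `x`, Taylor's formula bounds `t ‖Du(x)‖` by the
oscillation `2 sup ‖u‖` plus `t² Lip(Du)`; applied to `u = D^m f` this gives the interpolation
inequality `‖D^{m+1} f‖ ≤ 2 ‖D^m f‖ / t + t ‖D^{m+2} f‖` for every `t > 0`. For any sequence of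
sup-norms `N₀, …, N_k` obeying these inequalities, an induction on `k` absorbs the middle terms
and bounds every `N_j` by a constant, depending only on `k`, times `N₀ + N_k`.
-/

open Set NNReal

noncomputable def landauConst : ℕ → ℝ
  | 0 => 1
  | k + 1 => 8 * landauConst k ^ 2

theorem one_le_landauConst (k : ℕ) : 1 ≤ landauConst k := by
  induction k with
  | zero => exact le_rfl
  | succ k ih => rw [landauConst]; nlinarith

theorem le_landauConst_mul {k : ℕ} {N : ℕ → ℝ} (hN : ∀ j, 0 ≤ N j)
    (hrec : ∀ j, j + 2 ≤ k → ∀ t, 0 < t → N (j + 1) ≤ 2 * N j / t + t * N (j + 2)) :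
    ∀ j ≤ k, N j ≤ landauConst k * (N 0 + N k) := by
  induction k with
  | zero =>
    intro j hj
    rw [Nat.le_zero.1 hj, landauConst]
    linarith [hN 0]
  | succ k ih =>
    have ih := ih fun j hj => hrec j (by omega)
    set c := landauConst k
    have hc : 1 ≤ c := one_le_landauConst k
    -- the interpolation inequality at `t = 4c`, with `N_{k-1}` bounded by the induction hypothesis
    have habsorb : N k ≤ N 0 + 8 * c * N (k + 1) := by
      cases k with
      | zero => nlinarith [hN 1]
      | succ l =>
        have hinterp := hrec l (by omega) (4 * c) (by positivity)
        have hprev : 2 * N l / (4 * c) ≤ (N 0 + N (l + 1)) / 2 := by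
          rw [div_le_iff₀ (by positivity)]
          nlinarith [ih l (by omega)]
        linarith
    have hc₂ : 2 * c ≤ 8 * c ^ 2 := by nlinarith
    intro j hj
    change N j ≤ 8 * c ^ 2 * (N 0 + N (k + 1))
    rcases hj.lt_or_eq with hj | rfl
    · calc N j ≤ c * (N 0 + N k) := ih j (by omega)
        _ ≤ c * (2 * N 0 + 8 * c * N (k + 1)) := by gcongr ?_ * ?_; linarith [hN 0]
        _ ≤ 8 * c ^ 2 * (N 0 + N (k + 1)) := by
          nlinarith [mul_le_mul_of_nonneg_right hc₂ (hN 0)]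
    · nlinarith [hN 0, hN (k + 1)]

section Interpolation

variable {E F : Type*} [NormedAddCommGroup E] [NormedSpace ℝ E]
  [NormedAddCommGroup F] [NormedSpace ℝ F]

theorem norm_fderiv_le_of_lipschitzWith_fderiv {u : E → F} {A t : ℝ} {B : ℝ≥0}
    (hu : Differentiable ℝ u) (hA : ∀ x, ‖u x‖ ≤ A) (hB : LipschitzWith B (fderiv ℝ u))
    (ht : 0 < t) (x : E) : ‖fderiv ℝ u x‖ ≤ 2 * A / t + t * B := by
  have hA₀ : 0 ≤ A := (norm_nonneg _).trans (hA x)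
  refine ContinuousLinearMap.opNorm_le_of_unit_norm (by positivity) fun v hv => ?_
  set y := x + t • v
  have hyx : y - x = t • v := add_sub_cancel_left x (t • v)
  have hy : y ∈ Metric.closedBall x t := by
    rw [mem_closedBall_iff_norm, hyx, norm_smul, hv, Real.norm_of_nonneg ht.le, mul_one]
  have htaylor : ‖u y - u x - fderiv ℝ u x (y - x)‖ ≤ B * t * ‖y - x‖ := by
    refine (convex_closedBall x t).norm_image_sub_le_of_norm_fderiv_le' (fun z _ => hu z)
      (fun z hz => ?_) (Metric.mem_closedBall_self ht.le) hy
    rw [← dist_eq_norm]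
    exact (hB.dist_le_mul z x).trans (by gcongr; exact hz)
  have hscaled : t * ‖fderiv ℝ u x v‖ ≤ 2 * A + t * B * t := by
    rw [hyx, map_smul, norm_smul, Real.norm_of_nonneg ht.le, hv, mul_one] at htaylor
    calc t * ‖fderiv ℝ u x v‖ = ‖(u y - u x) - (u y - u x - t • fderiv ℝ u x v)‖ := by
          rw [sub_sub_cancel, norm_smul, Real.norm_of_nonneg ht.le]
      _ ≤ ‖u y - u x‖ + ‖u y - u x - t • fderiv ℝ u x v‖ := norm_sub_le _ _
      _ ≤ (A + A) + B * t * t := add_le_add (norm_sub_le_of_le (hA y) (hA x)) htaylor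
      _ = 2 * A + t * B * t := by ring
  rw [div_add' _ _ _ ht.ne', le_div_iff₀ ht]
  linarith

theorem norm_iteratedFDeriv_succ_le {f : E → F} {m : ℕ} {A B t : ℝ}
    (hf : ContDiff ℝ (m + 2) f) (hA : ∀ x, ‖iteratedFDeriv ℝ m f x‖ ≤ A)
    (hB : ∀ x, ‖iteratedFDeriv ℝ (m + 2) f x‖ ≤ B) (ht : 0 < t) (x : E) :
    ‖iteratedFDeriv ℝ (m + 1) f x‖ ≤ 2 * A / t + t * B := by
  have hB₀ : 0 ≤ B := (norm_nonneg _).trans (hB x)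
  have hlip : LipschitzWith B.toNNReal (iteratedFDeriv ℝ (m + 1) f) :=
    lipschitzWith_of_nnnorm_fderiv_le (hf.differentiable_iteratedFDeriv (by norm_cast; omega))
      fun y => by
        rw [← NNReal.coe_le_coe, coe_nnnorm, norm_fderiv_iteratedFDeriv, Real.coe_toNNReal _ hB₀]
        exact hB y
  have hlip' : LipschitzWith B.toNNReal (fderiv ℝ (iteratedFDeriv ℝ m f)) := by
    rw [fderiv_iteratedFDeriv]
    exact (LinearIsometryEquiv.isometry _).lipschitzWith_iff _ |>.2 hlip
  have h := norm_fderiv_le_of_lipschitzWith_fderiv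
    (hf.differentiable_iteratedFDeriv (by norm_cast; omega)) hA hlip' ht x
  rwa [norm_fderiv_iteratedFDeriv, Real.coe_toNNReal _ hB₀] at h

theorem norm_iteratedFDeriv_le_landauConst_mul {f : E → F} {k j : ℕ} {A B : ℝ}
    (hf : ContDiff ℝ k f) (hbdd : ∀ i ≤ k, BddAbove (range fun x => ‖iteratedFDeriv ℝ i f x‖))
    (hA : ∀ x, ‖f x‖ ≤ A) (hB : ∀ x, ‖iteratedFDeriv ℝ k f x‖ ≤ B) (hj : j ≤ k) (x : E) :
    ‖iteratedFDeriv ℝ j f x‖ ≤ landauConst k * (A + B) := by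
  have : Nonempty E := ⟨x⟩
  set N : ℕ → ℝ := fun i => ⨆ y, ‖iteratedFDeriv ℝ i f y‖
  have hle : ∀ i ≤ k, ∀ y, ‖iteratedFDeriv ℝ i f y‖ ≤ N i := fun i hi y => le_ciSup (hbdd i hi) y
  have hN : ∀ i, 0 ≤ N i := fun i => Real.iSup_nonneg fun y => norm_nonneg _
  have hrec : ∀ i, i + 2 ≤ k → ∀ t, 0 < t → N (i + 1) ≤ 2 * N i / t + t * N (i + 2) :=
    fun i hi t ht => ciSup_le fun y =>
      norm_iteratedFDeriv_succ_le (hf.of_le (by exact_mod_cast hi)) (hle i (by omega))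
        (hle (i + 2) hi) ht y
  have hN₀ : N 0 ≤ A := ciSup_le fun y => by rw [norm_iteratedFDeriv_zero]; exact hA y
  have hNk : N k ≤ B := ciSup_le hB
  calc ‖iteratedFDeriv ℝ j f x‖ ≤ N j := hle j hj x
    _ ≤ landauConst k * (N 0 + N k) := le_landauConst_mul hN hrec j hj
    _ ≤ landauConst k * (A + B) :=
      mul_le_mul_of_nonneg_left (add_le_add hN₀ hNk) (zero_le_one.trans (one_le_landauConst k))

end Interpolation

theorem norm_iteratedFDeriv_le_abs_add_sum {X : Type*} [NormedAddCommGroup X] [NormedSpace ℝ X]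
    (f : X → ℝ) (k : ℕ) (x : X) :
    ‖iteratedFDeriv ℝ k f x‖ ≤ |f x| + ∑ j ∈ Finset.Icc 1 k, ‖iteratedFDeriv ℝ j f x‖ := by
  cases k with
  | zero => simp
  | succ k =>
    refine le_add_of_nonneg_of_le (abs_nonneg _) ?_
    exact Finset.single_le_sum (f := fun j => ‖iteratedFDeriv ℝ j f x‖)
      (fun _ _ => norm_nonneg _) (Finset.mem_Icc.2 ⟨k.succ_pos, le_rfl⟩)

/-- On C_b^k(X), the mapping f ↦ ‖f‖_∞ + ‖D^k f‖_∞ is a norm equivalent to the full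
norm ‖f‖_∞ + Σ_{j=1}^k ‖D^j f‖_∞ : there is C > 0 such that the full norm is bounded
by C (‖f‖_∞ + ‖D^k f‖_∞), and conversely ‖f‖_∞ + ‖D^k f‖_∞ is bounded by C times
the full norm. -/
theorem stmt5 (k : ℕ) :
    ∃ C : ℝ, 0 < C ∧
      ∀ (X : Type) [NormedAddCommGroup X] [NormedSpace ℝ X]
        (f : X → ℝ) (Mf Mk Msum : ℝ),
        ContDiff ℝ k f →
        (∀ j : ℕ, j ≤ k → ∃ Mj : ℝ, ∀ x, ‖iteratedFDeriv ℝ j f x‖ ≤ Mj) →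
        (∀ x, |f x| ≤ Mf) →
        (∀ x, ‖iteratedFDeriv ℝ k f x‖ ≤ Mk) →
        (∀ x, |f x| + ∑ j ∈ Finset.Icc 1 k, ‖iteratedFDeriv ℝ j f x‖ ≤ Msum) →
        (∀ x, |f x| + ∑ j ∈ Finset.Icc 1 k, ‖iteratedFDeriv ℝ j f x‖ ≤ C * (Mf + Mk)) ∧
        (∀ x, |f x| + ‖iteratedFDeriv ℝ k f x‖ ≤ C * Msum) := by
  have hL := one_le_landauConst k
  refine ⟨2 + k * landauConst k, by positivity, ?_⟩
  intro X _ _ f Mf Mk Msum hf hbdd hMf hMk hMsum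
  have hC : 2 ≤ 2 + k * landauConst k := le_add_of_nonneg_right (by positivity)
  have hbdd' : ∀ i ≤ k, BddAbove (range fun x => ‖iteratedFDeriv ℝ i f x‖) := fun i hi =>
    let ⟨M, hM⟩ := hbdd i hi
    ⟨M, forall_mem_range.2 hM⟩
  refine ⟨fun x => ?_, fun x => ?_⟩
  · have hsum : ∑ j ∈ Finset.Icc 1 k, ‖iteratedFDeriv ℝ j f x‖ ≤
        k * (landauConst k * (Mf + Mk)) := by
      refine (Finset.sum_le_card_nsmul _ _ _ fun j hj =>
        norm_iteratedFDeriv_le_landauConst_mul hf hbdd' hMf hMk (Finset.mem_Icc.1 hj).2 x).trans_eq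
        (by rw [Nat.card_Icc, add_tsub_cancel_right, nsmul_eq_mul])
    have hMk₀ : 0 ≤ Mk := (norm_nonneg _).trans (hMk x)
    nlinarith [hMf x, abs_nonneg (f x)]
  · have hsum₀ : 0 ≤ ∑ j ∈ Finset.Icc 1 k, ‖iteratedFDeriv ℝ j f x‖ :=
      Finset.sum_nonneg fun _ _ => norm_nonneg _
    nlinarith [norm_iteratedFDeriv_le_abs_add_sum f k x, hMsum x, abs_nonneg (f x)]
end

section
/- Let X be a real Banach space, β ∈ (0,1], γ ∈ (0,1) with γβ < 1, and suppose f ∈ C_b(X) admits a representation f = ∫_0^∞ u(t)/t dt where u : (0,∞) → C_b^β(X) is continuous, ‖u(t)‖_∞ ≤ M t^γ and ‖u(t)‖_{C_b^β(X)} ≤ M t^{γ−1} for all t > 0. Then f is (γβ)-Hölder continuous, with [f]_{C^{γβ}} ≤ K·M for a constant K depending only on β and γ. -/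
open MeasureTheory Set

/-!
Split `f x - f y = ∫₀^∞ (u t x - u t y) / t dt` at `T = ‖x - y‖ ^ β`. Below `T` the sup bound gives
`|u t x - u t y| ≤ 2 M t ^ γ`, integrating to `2 M T ^ γ / γ`; above `T` the Hölder bound gives
`M t ^ (γ - 1) ‖x - y‖ ^ β`, integrating to `M ‖x - y‖ ^ β T ^ (γ - 1) / (1 - γ)`. With this choice
of `T` both terms are multiples of `M ‖x - y‖ ^ (γ β)`.
-/

section SplitEstimate

variable {g : ℝ → ℝ} {γ A B T : ℝ}

lemma norm_intervalIntegral_div_le_of_abs_le_rpow (hγ : 0 < γ) (hT : 0 ≤ T)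
    (hA : ∀ t ∈ Ioc 0 T, |g t| ≤ A * t ^ γ) :
    ‖∫ t in (0)..T, g t / t‖ ≤ A * (T ^ γ / γ) := by
  have hbound : ∀ t ∈ Ioc 0 T, ‖g t / t‖ ≤ A * t ^ (γ - 1) := by
    intro t ht
    rw [Real.norm_eq_abs, abs_div, abs_of_pos ht.1, Real.rpow_sub_one ht.1.ne', mul_div_assoc']
    exact div_le_div_of_nonneg_right (hA t ht) ht.1.le
  calc ‖∫ t in (0)..T, g t / t‖ ≤ ∫ t in (0)..T, A * t ^ (γ - 1) :=
        intervalIntegral.norm_integral_le_of_norm_le hT (Filter.Eventually.of_forall hbound)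
          ((intervalIntegral.intervalIntegrable_rpow' (by linarith)).const_mul A)
    _ = A * (T ^ γ / γ) := by
        rw [intervalIntegral.integral_const_mul, integral_rpow (Or.inl (by linarith)),
          sub_add_cancel, Real.zero_rpow hγ.ne', sub_zero]

lemma norm_setIntegral_Ioi_div_le_of_abs_le_rpow (hγ : γ < 1) (hT : 0 < T)
    (hB : ∀ t ∈ Ioi T, |g t| ≤ B * t ^ (γ - 1)) :
    ‖∫ t in Ioi T, g t / t‖ ≤ B * (T ^ (γ - 1) / (1 - γ)) := by
  have hbound : ∀ t ∈ Ioi T, ‖g t / t‖ ≤ B * t ^ (γ - 1 - 1) := by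
    intro t ht
    have ht0 : 0 < t := hT.trans ht
    rw [Real.norm_eq_abs, abs_div, abs_of_pos ht0, Real.rpow_sub_one ht0.ne', mul_div_assoc']
    exact div_le_div_of_nonneg_right (hB t ht) ht0.le
  calc ‖∫ t in Ioi T, g t / t‖ ≤ ∫ t in Ioi T, B * t ^ (γ - 1 - 1) :=
        norm_integral_le_of_norm_le ((integrableOn_Ioi_rpow_of_lt (by linarith) hT).const_mul B)
          (ae_restrict_of_forall_mem measurableSet_Ioi hbound)
    _ = B * (T ^ (γ - 1) / (1 - γ)) := by
        rw [integral_const_mul, integral_Ioi_rpow_of_lt (by linarith) hT, sub_add_cancel,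
          neg_div, ← div_neg, neg_sub]

lemma abs_setIntegral_Ioi_zero_div_le (hγ₀ : 0 < γ) (hγ₁ : γ < 1) (hT : 0 < T)
    (hg : IntegrableOn (fun t => g t / t) (Ioi 0))
    (hA : ∀ t ∈ Ioi 0, |g t| ≤ A * t ^ γ) (hB : ∀ t ∈ Ioi 0, |g t| ≤ B * t ^ (γ - 1)) :
    |∫ t in Ioi 0, g t / t| ≤ A * (T ^ γ / γ) + B * (T ^ (γ - 1) / (1 - γ)) := by
  rw [← intervalIntegral.integral_interval_add_Ioi hg (hg.mono_set (Ioi_subset_Ioi hT.le)),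
    ← Real.norm_eq_abs]
  exact (norm_add_le _ _).trans (add_le_add
    (norm_intervalIntegral_div_le_of_abs_le_rpow hγ₀ hT.le fun t ht => hA t ht.1)
    (norm_setIntegral_Ioi_div_le_of_abs_le_rpow hγ₁ hT fun t ht => hB t (hT.trans ht)))

end SplitEstimate

theorem stmt6_general (β γ : ℝ) (hγ : γ ∈ Set.Ioo (0:ℝ) 1) :
    ∃ K : ℝ, 0 < K ∧
      ∀ (X : Type) [NormedAddCommGroup X] [NormedSpace ℝ X]
        (f : X → ℝ) (u : ℝ → X → ℝ) (M : ℝ),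
        Continuous f →
        (∀ t ∈ Ioi (0:ℝ), Continuous (u t)) →
        (∀ x, IntegrableOn (fun t => u t x / t) (Ioi (0:ℝ))) →
        (∀ x, f x = ∫ t in Ioi (0:ℝ), u t x / t) →
        (∀ t ∈ Ioi (0:ℝ), ∀ x, |u t x| ≤ M * t ^ γ) →
        (∀ t ∈ Ioi (0:ℝ), ∀ x, |u t x| ≤ M * t ^ (γ - 1)) →
        (∀ t ∈ Ioi (0:ℝ), ∀ x y, |u t x - u t y| ≤ M * t ^ (γ - 1) * ‖x - y‖ ^ β) →
        ∀ x y, |f x - f y| ≤ K * M * ‖x - y‖ ^ (γ * β) := by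
  obtain ⟨hγ₀, hγ₁⟩ := hγ
  refine ⟨2 / γ + 1 / (1 - γ), by have := sub_pos.2 hγ₁; positivity, ?_⟩
  intro X _ _ f u M _ _ hint hrep hsup _ hhold x y
  have hM : 0 ≤ M := by simpa using (abs_nonneg _).trans (hsup 1 (mem_Ioi.2 one_pos) x)
  rcases eq_or_ne x y with rfl | hxy
  · rw [sub_self, abs_zero]
    positivity
  set d := ‖x - y‖
  have hd : 0 < d := norm_sub_pos_iff.2 hxy
  have hdiff : f x - f y = ∫ t in Ioi 0, (u t x - u t y) / t := by
    simp only [hrep, sub_div, integral_sub (hint x) (hint y)]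
  have hA : ∀ t ∈ Ioi (0:ℝ), |u t x - u t y| ≤ 2 * M * t ^ γ := fun t ht => by
    linarith [abs_sub (u t x) (u t y), hsup t ht x, hsup t ht y]
  have hB : ∀ t ∈ Ioi (0:ℝ), |u t x - u t y| ≤ M * d ^ β * t ^ (γ - 1) := fun t ht => by
    linarith [hhold t ht x y]
  have hsplit := abs_setIntegral_Ioi_zero_div_le hγ₀ hγ₁ (Real.rpow_pos_of_pos hd β)
    ((hint x).sub (hint y) |>.congr_fun (fun t _ => (sub_div _ _ _).symm) measurableSet_Ioi) hA hB
  rw [← hdiff, ← Real.rpow_mul hd.le, ← Real.rpow_mul hd.le] at hsplit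
  have hexp : d ^ β * d ^ (β * (γ - 1)) = d ^ (γ * β) := by
    rw [← Real.rpow_add hd]
    ring_nf
  convert hsplit using 1
  rw [mul_comm β γ, ← hexp]
  ring

/-- If f = ∫_0^∞ u(t)/t dt with ‖u(t)‖_∞ ≤ M t^γ and ‖u(t)‖_{C_b^β} ≤ M t^{γ-1},
β ∈ (0,1], γ ∈ (0,1), γβ < 1, then f is (γβ)-Hölder with [f]_{C^{γβ}} ≤ K·M. -/
theorem stmt6 (β γ : ℝ) (hβ : β ∈ Set.Ioc (0:ℝ) 1) (hγ : γ ∈ Set.Ioo (0:ℝ) 1)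
    (hγβ : γ * β < 1) :
    ∃ K : ℝ, 0 < K ∧
      ∀ (X : Type) [NormedAddCommGroup X] [NormedSpace ℝ X]
        (f : X → ℝ) (u : ℝ → X → ℝ) (M : ℝ),
        Continuous f →
        (∀ t ∈ Ioi (0:ℝ), Continuous (u t)) →
        (∀ x, IntegrableOn (fun t => u t x / t) (Ioi (0:ℝ))) →
        (∀ x, f x = ∫ t in Ioi (0:ℝ), u t x / t) →
        (∀ t ∈ Ioi (0:ℝ), ∀ x, |u t x| ≤ M * t ^ γ) →
        (∀ t ∈ Ioi (0:ℝ), ∀ x, |u t x| ≤ M * t ^ (γ - 1)) →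
        (∀ t ∈ Ioi (0:ℝ), ∀ x y, |u t x - u t y| ≤ M * t ^ (γ - 1) * ‖x - y‖ ^ β) →
        ∀ x y, |f x - f y| ≤ K * M * ‖x - y‖ ^ (γ * β) :=
  stmt6_general β γ hγ
end

section
/- Let X be a real Banach space and β > 0, γ ∈ (0,1) with γβ not an integer. Then the real interpolation space (C_b(X), C_b^β(X))_{γ,∞} embeds continuously into C_b^{γβ}(X). If γβ is an integer, then (C_b(X), C_b^β(X))_{γ,∞} embeds continuously into the Zygmund space Z_b^{γβ}(X). -/
set_option linter.unusedSectionVars false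

open Filter Topology Finset

section Helpers

variable {X : Type*} [NormedAddCommGroup X] [NormedSpace ℝ X]
variable {E : Type*} [NormedAddCommGroup E] [NormedSpace ℝ E]

lemma mv_lip {F : X → E} (hF : Differentiable ℝ F) {K : ℝ}
    (hK : ∀ y, ‖fderiv ℝ F y‖ ≤ K) (x y : X) : ‖F x - F y‖ ≤ K * ‖x - y‖ :=
  Convex.norm_image_sub_le_of_norm_fderiv_le (fun z _ => hF z)
    (fun z _ => hK z) convex_univ trivial trivial

lemma mv_taylor {F : X → E} (hF : Differentiable ℝ F) {c : ℝ} (x u : X)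
    (hc : ∀ y ∈ Metric.closedBall x ‖u‖, ‖fderiv ℝ F y - fderiv ℝ F x‖ ≤ c) :
    ‖F (x + u) - F x - fderiv ℝ F x u‖ ≤ c * ‖u‖ := by
  have h := Convex.norm_image_sub_le_of_norm_fderiv_le' (φ := fderiv ℝ F x)
    (f := F) (s := Metric.closedBall x ‖u‖) (x := x) (y := x + u)
    (fun z _ => hF z) hc (convex_closedBall _ _)
    (Metric.mem_closedBall_self (norm_nonneg u))
    (by simp [Metric.mem_closedBall, dist_eq_norm])
  simpa using h

lemma landau_step {F : X → E} (hF : Differentiable ℝ F) {K H s σ : ℝ}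
    (hσ0 : 0 < σ) (hH : 0 ≤ H)
    (hK : ∀ x, ‖F x‖ ≤ K)
    (hHol : ∀ x y, ‖fderiv ℝ F x - fderiv ℝ F y‖ ≤ H * ‖x - y‖ ^ σ)
    (hs : 0 < s) (x : X) : ‖fderiv ℝ F x‖ ≤ 2 * K / s + H * s ^ σ := by
  have hK0 : 0 ≤ K := (norm_nonneg _).trans (hK x)
  have hCpos : 0 ≤ 2 * K / s + H * s ^ σ := by positivity
  refine ContinuousLinearMap.opNorm_le_bound _ hCpos (fun v => ?_)
  rcases eq_or_ne v 0 with rfl | hv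
  · simp
  have hnv : (0:ℝ) < ‖v‖ := norm_pos_iff.mpr hv
  set u : X := (s / ‖v‖) • v with hu
  have hnu : ‖u‖ = s := by
    rw [hu, norm_smul, Real.norm_eq_abs, abs_of_pos (by positivity),
      div_mul_cancel₀ _ (ne_of_gt hnv)]
  have h1 : ‖F (x + u) - F x - fderiv ℝ F x u‖ ≤ (H * s ^ σ) * ‖u‖ := by
    apply mv_taylor hF x u
    intro y hy
    rw [Metric.mem_closedBall, dist_eq_norm, hnu] at hy
    calc ‖fderiv ℝ F y - fderiv ℝ F x‖ ≤ H * ‖y - x‖ ^ σ := hHol y x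
      _ ≤ H * s ^ σ := by
          apply mul_le_mul_of_nonneg_left _ hH
          exact Real.rpow_le_rpow (norm_nonneg _) hy hσ0.le
  have h2 : ‖fderiv ℝ F x u‖ ≤ 2 * K + H * s ^ σ * s := by
    have := norm_sub_norm_le (F (x + u) - F x) (F (x + u) - F x - fderiv ℝ F x u)
    have h3 : ‖fderiv ℝ F x u‖ ≤ ‖F (x + u) - F x‖ + ‖F (x + u) - F x - fderiv ℝ F x u‖ := by
      have := norm_sub_le (F (x + u) - F x) (F (x + u) - F x - fderiv ℝ F x u)
      simpa using this
    calc ‖fderiv ℝ F x u‖ ≤ ‖F (x + u) - F x‖ + ‖F (x + u) - F x - fderiv ℝ F x u‖ := h3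
      _ ≤ (‖F (x + u)‖ + ‖F x‖) + (H * s ^ σ) * ‖u‖ := by
          gcongr; exact norm_sub_le _ _
      _ ≤ (K + K) + (H * s ^ σ) * s := by
          rw [hnu]; gcongr <;> [exact hK _; exact hK _]
      _ = 2 * K + H * s ^ σ * s := by ring
  have hv_eq : v = (‖v‖ / s) • u := by
    rw [hu, smul_smul, div_mul_div_comm, mul_comm, div_self (by positivity), one_smul]
  calc ‖fderiv ℝ F x v‖ = ‖fderiv ℝ F x ((‖v‖ / s) • u)‖ := by rw [← hv_eq]
    _ = (‖v‖ / s) * ‖fderiv ℝ F x u‖ := by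
        rw [map_smul, norm_smul, Real.norm_eq_abs, abs_of_pos (by positivity)]
    _ ≤ (‖v‖ / s) * (2 * K + H * s ^ σ * s) := by gcongr
    _ = (2 * K / s + H * s ^ σ) * ‖v‖ := by field_simp

lemma iteratedFDeriv_sub_apply'' {i : ℕ} {f g : X → E} (hf : ContDiff ℝ i f)
    (hg : ContDiff ℝ i g) (x : X) :
    iteratedFDeriv ℝ i (fun y => f y - g y) x =
      iteratedFDeriv ℝ i f x - iteratedFDeriv ℝ i g x := by
  have h : (fun y => f y - g y) = (f + fun y => -g y) := by ext y; simp [sub_eq_add_neg]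
  rw [h, iteratedFDeriv_add_apply hf.contDiffAt hg.neg.contDiffAt]
  have h2 : iteratedFDeriv ℝ i (fun x => -g x) x = -iteratedFDeriv ℝ i g x :=
    iteratedFDeriv_neg_apply
  rw [h2, sub_eq_add_neg]

lemma second_diff_bound {F : X → E} (hF : Differentiable ℝ F) {c : ℝ} (h : X)
    (hc : ∀ y, ‖fderiv ℝ F (y + h) - fderiv ℝ F y‖ ≤ c) (x : X) :
    ‖F (x + 2 • h) - 2 • F (x + h) + F x‖ ≤ c * ‖h‖ := by
  have htr : ∀ y : X, HasFDerivAt (fun z => F (z + h)) (fderiv ℝ F (y + h)) y := by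
    intro y
    have h1 : HasFDerivAt (fun z : X => z + h) (ContinuousLinearMap.id ℝ X) y :=
      (hasFDerivAt_id y).add_const h
    have h2 := ((hF (y + h)).hasFDerivAt).comp y h1
    exact h2
  have htrd : Differentiable ℝ (fun z : X => F (z + h)) := fun y => (htr y).differentiableAt
  have hψd : Differentiable ℝ (fun y => F (y + h) - F y) := htrd.sub hF
  have hψf : ∀ y, fderiv ℝ (fun z => F (z + h) - F z) y =
      fderiv ℝ F (y + h) - fderiv ℝ F y := by
    intro y
    rw [fderiv_fun_sub (htr y).differentiableAt (hF y), (htr y).fderiv]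
  have key := mv_lip hψd (K := c) (fun y => by rw [hψf y]; exact hc y) (x + h) x
  have harg : x + h - x = h := by abel
  rw [harg] at key
  have heq : F (x + h + h) - F (x + h) - (F (x + h) - F x) =
      F (x + 2 • h) - 2 • F (x + h) + F x := by
    rw [two_smul, two_smul, ← add_assoc]
    abel
  rw [← heq]
  exact key

lemma tendstoUniformly_of_bound {F : ℕ → X → E} {G : X → E} {u : ℕ → ℝ}
    (h : ∀ n x, ‖F n x - G x‖ ≤ u n) (hu : Tendsto u atTop (𝓝 0)) :
    TendstoUniformly F G atTop := by
  rw [Metric.tendstoUniformly_iff]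
  intro ε hε
  filter_upwards [hu.eventually_lt_const hε] with n hn x
  calc dist (G x) (F n x) = ‖F n x - G x‖ := by rw [dist_eq_norm, norm_sub_rev]
    _ ≤ u n := h n x
    _ < ε := hn

lemma telescope_bound {v : ℕ → E} {u : ℕ → ℝ}
    (h : ∀ i, ‖v (i + 1) - v i‖ ≤ u i) {n m : ℕ} (hnm : n ≤ m) :
    ‖v m - v n‖ ≤ ∑ i ∈ Finset.Ico n m, u i := by
  induction m, hnm using Nat.le_induction with
  | base => simp
  | succ m hm ih =>
      have : v (m + 1) - v n = (v (m + 1) - v m) + (v m - v n) := by abel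
      rw [this, Finset.sum_Ico_succ_top hm]
      calc ‖(v (m + 1) - v m) + (v m - v n)‖ ≤ ‖v (m + 1) - v m‖ + ‖v m - v n‖ :=
            norm_add_le _ _
        _ ≤ u m + ∑ i ∈ Finset.Ico n m, u i := add_le_add (h m) ih
        _ = ∑ i ∈ Finset.Ico n m, u i + u m := by ring

lemma geom_Ico_le {ρ : ℝ} (h0 : 0 ≤ ρ) (h1 : ρ < 1) (n m : ℕ) :
    ∑ i ∈ Finset.Ico n m, ρ ^ i ≤ ρ ^ n * (1 - ρ)⁻¹ := by
  rw [Finset.sum_Ico_eq_sum_range]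
  have : ∀ i, ρ ^ (n + i) = ρ ^ n * ρ ^ i := fun i => pow_add ρ n i
  simp_rw [this, ← Finset.mul_sum]
  apply mul_le_mul_of_nonneg_left _ (pow_nonneg h0 n)
  calc ∑ i ∈ Finset.range (m - n), ρ ^ i ≤ ∑' i : ℕ, ρ ^ i :=
        (summable_geometric_of_lt_one h0 h1).sum_le_tsum _ (fun i _ => pow_nonneg h0 i)
    _ = (1 - ρ)⁻¹ := tsum_geometric_of_lt_one h0 h1

lemma geom_range_le {ρ : ℝ} (h0 : 0 ≤ ρ) (h1 : ρ < 1) (m : ℕ) :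
    ∑ i ∈ Finset.range m, ρ ^ i ≤ (1 - ρ)⁻¹ := by
  have := geom_Ico_le h0 h1 0 m
  simpa using this

lemma rpow_neg_nat {r : ℝ} (hr : 0 < r) (j : ℕ) : r ^ (-(j:ℝ)) = (r ^ j)⁻¹ := by
  rw [Real.rpow_neg hr.le, Real.rpow_natCast]

end Helpers

section Helpers2

variable {X : Type*} [NormedAddCommGroup X] [NormedSpace ℝ X]
variable {E : Type*} [NormedAddCommGroup E] [NormedSpace ℝ E]

lemma two_rpow_natpow (c : ℝ) (n : ℕ) : (2:ℝ)^((n:ℝ)*c) = ((2:ℝ)^c)^n := by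
  rw [mul_comm, Real.rpow_mul (by norm_num : (0:ℝ) ≤ 2), Real.rpow_natCast]

lemma rpow_pow_comm (c : ℝ) (n : ℕ) : ((2:ℝ)^c)^n = ((2:ℝ)^n : ℝ)^c := by
  rw [← two_rpow_natpow, ← Real.rpow_natCast 2 n, ← Real.rpow_mul (by norm_num : (0:ℝ) ≤ 2),
    mul_comm]

lemma curryLeft_norm_sub {n : ℕ} (A B : ContinuousMultilinearMap ℝ (fun _ : Fin (n+1) => X) E) :
    ‖A.curryLeft - B.curryLeft‖ = ‖A - B‖ := by
  have h : A.curryLeft - B.curryLeft = (A - B).curryLeft := by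
    have := (continuousMultilinearCurryLeftEquiv ℝ (fun _ : Fin (n+1) => X) E).map_sub A B
    exact this.symm
  rw [h, ContinuousMultilinearMap.curryLeft_norm]

lemma sd_diff (F G : X → E) (x h : X) :
    ‖(F (x+2•h) - 2•F (x+h) + F x) - (G (x+2•h) - 2•G (x+h) + G x)‖
      ≤ ‖F (x+2•h) - G (x+2•h)‖ + 2*‖F (x+h) - G (x+h)‖ + ‖F x - G x‖ := by
  have e : (F (x+2•h) - 2•F (x+h) + F x) - (G (x+2•h) - 2•G (x+h) + G x)
      = ((F (x+2•h) - G (x+2•h)) - ((F (x+h) - G (x+h)) + (F (x+h) - G (x+h))))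
        + (F x - G x) := by
    rw [two_smul, two_smul]; abel
  rw [e]
  calc ‖((F (x+2•h) - G (x+2•h)) - ((F (x+h) - G (x+h)) + (F (x+h) - G (x+h))))
        + (F x - G x)‖
      ≤ ‖(F (x+2•h) - G (x+2•h)) - ((F (x+h) - G (x+h)) + (F (x+h) - G (x+h)))‖
        + ‖F x - G x‖ := norm_add_le _ _
    _ ≤ ‖F (x+2•h) - G (x+2•h)‖ + ‖(F (x+h) - G (x+h)) + (F (x+h) - G (x+h))‖
        + ‖F x - G x‖ := by gcongr; exact norm_sub_le _ _
    _ ≤ ‖F (x+2•h) - G (x+2•h)‖ + (‖F (x+h) - G (x+h)‖ + ‖F (x+h) - G (x+h)‖)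
        + ‖F x - G x‖ := by gcongr; exact norm_add_le _ _
    _ = ‖F (x+2•h) - G (x+2•h)‖ + 2*‖F (x+h) - G (x+h)‖ + ‖F x - G x‖ := by ring

end Helpers2

section Helpers3

lemma exists_dyadic (d : ℝ) (hd0 : 0 < d) (hd1 : d < 1) :
    ∃ n : ℕ, d⁻¹ < 2^n ∧ (2:ℝ)^n ≤ 2 * d⁻¹ := by
  have hdi : 1 < d⁻¹ := (one_lt_inv₀ hd0).mpr hd1
  have hlog0 : 0 ≤ Real.logb 2 d⁻¹ := Real.logb_nonneg one_lt_two hdi.le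
  refine ⟨⌊Real.logb 2 d⁻¹⌋₊ + 1, ?_, ?_⟩
  · have hup : Real.logb 2 d⁻¹ < ((⌊Real.logb 2 d⁻¹⌋₊ + 1 : ℕ) : ℝ) := by
      push_cast
      exact Nat.lt_floor_add_one _
    have h := Real.rpow_lt_rpow_of_exponent_lt one_lt_two hup
    rwa [Real.rpow_logb two_pos (by norm_num) (inv_pos.mpr hd0), Real.rpow_natCast] at h
  · have hlo : ((⌊Real.logb 2 d⁻¹⌋₊ + 1 : ℕ) : ℝ) ≤ Real.logb 2 d⁻¹ + 1 := by
      push_cast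
      linarith [Nat.floor_le hlog0]
    have h := Real.rpow_le_rpow_of_exponent_le one_le_two hlo
    rwa [Real.rpow_add two_pos, Real.rpow_logb two_pos (by norm_num) (inv_pos.mpr hd0),
      Real.rpow_one, Real.rpow_natCast, mul_comm] at h

lemma dyadic_bound_low {d : ℝ} {n : ℕ} (hd0 : 0 < d) (e : ℝ) (he : 0 ≤ e)
    (h : d⁻¹ < (2:ℝ)^n) : ((2:ℝ)^(-e))^n ≤ d ^ e := by
  rw [rpow_pow_comm]
  have h2n : (0:ℝ) < (2:ℝ)^n := by positivity
  have hde : (0:ℝ) < d ^ e := Real.rpow_pos_of_pos hd0 e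
  have h1 : (d⁻¹)^e ≤ ((2:ℝ)^n : ℝ)^e := Real.rpow_le_rpow (by positivity) h.le he
  rw [Real.inv_rpow hd0.le] at h1
  have h2 : (((2:ℝ)^n : ℝ)^e)⁻¹ ≤ d^e := inv_le_of_inv_le₀ hde h1
  rwa [← Real.rpow_neg h2n.le] at h2

lemma dyadic_bound_high {d : ℝ} {n : ℕ} (hd0 : 0 < d) (e : ℝ) (he0 : 0 ≤ e) (he1 : e ≤ 1)
    (h : (2:ℝ)^n ≤ 2 * d⁻¹) : ((2:ℝ)^e)^n ≤ 2 * d ^ (-e) := by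
  rw [rpow_pow_comm]
  have h1 : ((2:ℝ)^n : ℝ)^e ≤ (2 * d⁻¹)^e := Real.rpow_le_rpow (by positivity) h he0
  refine h1.trans ?_
  rw [Real.mul_rpow (by norm_num) (by positivity), Real.inv_rpow hd0.le, ← Real.rpow_neg hd0.le]
  have h2 : (2:ℝ)^e ≤ 2 := by
    nth_rewrite 2 [show (2:ℝ) = (2:ℝ)^(1:ℝ) by rw [Real.rpow_one]]
    exact Real.rpow_le_rpow_of_exponent_le one_le_two he1
  exact mul_le_mul_of_nonneg_right h2 (Real.rpow_nonneg hd0.le _)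

end Helpers3

lemma fderiv_iter_sub_norm {X : Type*} [NormedAddCommGroup X] [NormedSpace ℝ X]
    (F : X → ℝ) (m : ℕ) (y z : X) :
    ‖fderiv ℝ (iteratedFDeriv ℝ m F) y - fderiv ℝ (iteratedFDeriv ℝ m F) z‖ =
    ‖iteratedFDeriv ℝ (m+1) F y - iteratedFDeriv ℝ (m+1) F z‖ := by
  have h1 : fderiv ℝ (iteratedFDeriv ℝ m F) y =
      (continuousMultilinearCurryLeftEquiv ℝ (fun _ : Fin (m+1) => X) ℝ)
        (iteratedFDeriv ℝ (m+1) F y) := rfl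
  have h2 : fderiv ℝ (iteratedFDeriv ℝ m F) z =
      (continuousMultilinearCurryLeftEquiv ℝ (fun _ : Fin (m+1) => X) ℝ)
        (iteratedFDeriv ℝ (m+1) F z) := rfl
  rw [h1, h2, ← (continuousMultilinearCurryLeftEquiv ℝ (fun _ : Fin (m+1) => X) ℝ).map_sub,
    (continuousMultilinearCurryLeftEquiv ℝ (fun _ : Fin (m+1) => X) ℝ).norm_map]

lemma LK : ∀ k : ℕ, ∃ C : ℝ, 1 ≤ C ∧ ∀ σ : ℝ, 0 < σ → σ ≤ 1 →
    ∀ (X : Type) [NormedAddCommGroup X] [NormedSpace ℝ X], ∀ (g : X → ℝ) (A H B : ℝ),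
    0 ≤ H → ContDiff ℝ k g → (∀ x, ‖g x‖ ≤ A) →
    (∀ x y, ‖iteratedFDeriv ℝ k g x - iteratedFDeriv ℝ k g y‖ ≤ H * ‖x - y‖ ^ σ) →
    (∀ j, j ≤ k → ∀ x, ‖iteratedFDeriv ℝ j g x‖ ≤ B) →
    ∀ j, j ≤ k → ∀ r : ℝ, 0 < r → ∀ x,
      ‖iteratedFDeriv ℝ j g x‖ ≤ C * (A * r ^ (-(j:ℝ)) + H * r ^ ((k:ℝ) + σ - (j:ℝ))) := by
  intro k
  induction k with
  | zero =>
    refine ⟨1, le_rfl, ?_⟩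
    intro σ hσ0 hσ1 X _ _ g A H B hH hg hA hHol hB j hj r hr x
    obtain rfl : j = 0 := Nat.le_zero.mp hj
    have h0 : ‖iteratedFDeriv ℝ 0 g x‖ = ‖g x‖ := norm_iteratedFDeriv_zero
    have h2 : r ^ (-((0:ℕ):ℝ)) = 1 := by norm_num
    have h1 : (0:ℝ) < r ^ (((0:ℕ):ℝ) + σ - ((0:ℕ):ℝ)) := Real.rpow_pos_of_pos hr _
    rw [h0, h2]
    have h3 := hA x
    nlinarith [mul_nonneg hH h1.le]
  | succ k IH =>
    obtain ⟨C, hC1, hC⟩ := IH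
    have hCpos : 0 < C := lt_of_lt_of_le one_pos hC1
    set C' : ℝ := 4*C*(4*C)^k + 2 with hC'def
    have hC'2 : 2 ≤ C' := by
      have : (0:ℝ) ≤ 4*C*(4*C)^k := by positivity
      linarith
    have hC'0 : 0 < C' := by linarith
    refine ⟨C * (1 + C'), by nlinarith, ?_⟩
    intro σ hσ0 hσ1 X _ _ g A H B hH hg hA hHol hB
    have hA0 : 0 ≤ A := (norm_nonneg _).trans (hA 0)
    set S : Set ℝ := Set.range (fun x : X => ‖iteratedFDeriv ℝ (k+1) g x‖) with hSdef
    have hSne : S.Nonempty := ⟨_, ⟨0, rfl⟩⟩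
    have hSbdd : BddAbove S := by
      refine ⟨B, ?_⟩
      rintro y ⟨x, rfl⟩
      exact hB (k+1) le_rfl x
    set T : ℝ := sSup S with hTdef
    have hTb : ∀ x : X, ‖iteratedFDeriv ℝ (k+1) g x‖ ≤ T :=
      fun x => le_csSup hSbdd ⟨x, rfl⟩
    have hT0 : 0 ≤ T := (norm_nonneg _).trans (hTb 0)
    have hdiff : Differentiable ℝ (iteratedFDeriv ℝ k g) :=
      hg.differentiable_iteratedFDeriv (by exact_mod_cast Nat.lt_succ_self k)
    have hfd : ∀ y : X, fderiv ℝ (iteratedFDeriv ℝ k g) y =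
        (continuousMultilinearCurryLeftEquiv ℝ (fun _ : Fin (k+1) => X) ℝ)
          (iteratedFDeriv ℝ (k+1) g y) := fun y => rfl
    have hfdnorm : ∀ y : X, ‖fderiv ℝ (iteratedFDeriv ℝ k g) y‖ =
        ‖iteratedFDeriv ℝ (k+1) g y‖ := fun y => norm_fderiv_iteratedFDeriv
    have hfdsub : ∀ y z : X, ‖fderiv ℝ (iteratedFDeriv ℝ k g) y -
        fderiv ℝ (iteratedFDeriv ℝ k g) z‖ =
        ‖iteratedFDeriv ℝ (k+1) g y - iteratedFDeriv ℝ (k+1) g z‖ := by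
      intro y z
      set e := continuousMultilinearCurryLeftEquiv ℝ (fun _ : Fin (k+1) => X) ℝ with hedef
      rw [hfd y, hfd z, ← e.map_sub, e.norm_map]
    have hLip : ∀ y z : X, ‖iteratedFDeriv ℝ k g y - iteratedFDeriv ℝ k g z‖ ≤ T * ‖y - z‖ :=
      mv_lip hdiff (fun y => by rw [hfdnorm y]; exact hTb y)
    have hIH := hC 1 one_pos le_rfl X g A T B hT0
      (hg.of_le (by exact_mod_cast Nat.le_succ k)) hA
      (fun x y => by rw [Real.rpow_one]; exact hLip x y)
      (fun j hj x => hB j (hj.trans (Nat.le_succ k)) x)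
    have htop : ∀ s : ℝ, 0 < s → ∀ r : ℝ, 0 < r → ∀ x : X,
        ‖iteratedFDeriv ℝ (k+1) g x‖ ≤
          2 * (C * (A * r ^ (-(k:ℝ)) + T * r)) / s + H * s ^ σ := by
      intro s hs r hr x
      have hKbd : ∀ y : X, ‖iteratedFDeriv ℝ k g y‖ ≤ C * (A * r ^ (-(k:ℝ)) + T * r) := by
        intro y
        have h := hIH k le_rfl r hr y
        have he : (k:ℝ) + 1 - (k:ℝ) = 1 := by ring
        rwa [he, Real.rpow_one] at h
      have h := landau_step hdiff hσ0 hH hKbd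
        (fun y z => by rw [hfdsub y z]; exact hHol y z) hs x
      rwa [hfdnorm x] at h
    have hT : ∀ s : ℝ, 0 < s → T ≤ C' * (A * s ^ (-((k:ℝ)+1)) + H * s ^ σ) := by
      intro s hs
      have hr : 0 < s / (4*C) := by positivity
      have h1 : T ≤ 2 * (C * (A * ((s/(4*C)) ^ (-(k:ℝ))) + T * (s/(4*C)))) / s + H * s ^ σ := by
        apply csSup_le hSne
        rintro y ⟨x, rfl⟩
        exact htop s hs _ hr x
      have hpow : (s/(4*C)) ^ (-(k:ℝ)) = (4*C)^k * s ^ (-(k:ℝ)) := by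
        rw [rpow_neg_nat hr, rpow_neg_nat hs, div_pow, inv_div]
        field_simp
      rw [hpow] at h1
      have hs' : s ≠ 0 := ne_of_gt hs
      have h2 : 2 * (C * (A * ((4*C)^k * s ^ (-(k:ℝ))) + T * (s/(4*C)))) / s
          = 2*C*(4*C)^k * A * (s ^ (-(k:ℝ)) / s) + T/2 := by
        field_simp
        ring
      have h3 : s ^ (-(k:ℝ)) / s = s ^ (-((k:ℝ)+1)) := by
        rw [rpow_neg_nat hs, show -((k:ℝ)+1) = -(((k+1:ℕ)):ℝ) by push_cast; ring,
          rpow_neg_nat hs, pow_succ]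
        field_simp
      rw [h2, h3] at h1
      have p1 : 0 ≤ A * s ^ (-((k:ℝ)+1)) := by positivity
      have p2 : 0 ≤ H * s ^ σ := by positivity
      have q0 : (0:ℝ) ≤ 4*C*(4*C)^k := by positivity
      nlinarith
    intro j hj r hr x
    rcases Nat.eq_or_lt_of_le hj with rfl | hlt
    · have h2 := hT r hr
      have hcast1 : -(((k+1:ℕ)):ℝ) = -((k:ℝ)+1) := by push_cast; ring
      have hcast2 : (((k+1:ℕ)):ℝ) + σ - (((k+1:ℕ)):ℝ) = σ := by ring
      calc ‖iteratedFDeriv ℝ (k+1) g x‖ ≤ T := hTb x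
        _ ≤ C' * (A * r ^ (-((k:ℝ)+1)) + H * r ^ σ) := h2
        _ ≤ C * (1+C') * (A * r ^ (-(((k+1:ℕ)):ℝ)) + H * r ^ ((((k+1:ℕ)):ℝ) + σ - (((k+1:ℕ)):ℝ))) := by
            rw [hcast1, hcast2]
            have hpos : 0 ≤ A * r ^ (-((k:ℝ)+1)) + H * r ^ σ := by positivity
            have hcc : C' ≤ C * (1 + C') := by nlinarith
            have := mul_le_mul_of_nonneg_right hcc hpos
            linarith
    · have hjk : j ≤ k := Nat.lt_succ_iff.mp hlt
      have h1 := hIH j hjk r hr x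
      have h2 := hT r hr
      have hrp : 0 < r ^ ((k:ℝ) + 1 - (j:ℝ)) := Real.rpow_pos_of_pos hr _
      have e1 : r ^ (-((k:ℝ)+1)) * r ^ ((k:ℝ)+1-(j:ℝ)) = r ^ (-(j:ℝ)) := by
        rw [← Real.rpow_add hr]; congr 1; ring
      have e2 : r ^ σ * r ^ ((k:ℝ)+1-(j:ℝ)) = r ^ ((((k+1:ℕ)):ℝ) + σ - (j:ℝ)) := by
        rw [← Real.rpow_add hr]; congr 1; push_cast; ring
      set P : ℝ := A * r ^ (-(j:ℝ)) with hPdef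
      set Q : ℝ := H * r ^ ((((k+1:ℕ)):ℝ) + σ - (j:ℝ)) with hQdef
      have hP0 : 0 ≤ P := by rw [hPdef]; positivity
      have hQ0 : 0 ≤ Q := by rw [hQdef]; positivity
      have key : (A * r ^ (-((k:ℝ)+1)) + H * r ^ σ) * r ^ ((k:ℝ)+1-(j:ℝ)) = P + Q := by
        rw [add_mul, mul_assoc, mul_assoc, e1, e2]
      have h3 : T * r ^ ((k:ℝ)+1-(j:ℝ)) ≤ C' * (P + Q) := by
        rw [← key, ← mul_assoc]
        exact mul_le_mul_of_nonneg_right h2 hrp.le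
      calc ‖iteratedFDeriv ℝ j g x‖ ≤ C * (P + T * r ^ ((k:ℝ)+1-(j:ℝ))) := h1
        _ ≤ C * (P + C' * (P + Q)) := by
            apply mul_le_mul_of_nonneg_left _ hCpos.le
            exact add_le_add le_rfl h3
        _ ≤ C * (1 + C') * (P + Q) := by
            have hid : C * (1+C') * (P + Q) = C * (P + C' * (P + Q)) + C * Q := by ring
            linarith [mul_nonneg hCpos.le hQ0]

set_option maxHeartbeats 1000000 in
lemma master (β γ σ : ℝ) (k : ℕ) (hσ0 : 0 < σ) (hσ1 : σ ≤ 1) (hβ : β = (k:ℝ) + σ)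
    (hβpos : 0 < β) (hγ0 : 0 < γ) (hγ1 : γ < 1) (l : ℕ)
    (hlθ : (l:ℝ) < γ * β) (hlk : l ≤ k) :
    ∃ C : ℝ, 0 < C ∧
      ∀ (X : Type) [NormedAddCommGroup X] [NormedSpace ℝ X],
      ∀ (f : X → ℝ) (N : ℝ), 0 < N → Continuous f →
      (∀ ξ : ℝ, 0 < ξ → ∃ (a b : X → ℝ) (Ma Mb : ℝ),
          (∀ x, f x = a x + b x) ∧ Continuous a ∧ (∀ x, |a x| ≤ Ma) ∧
          ContDiff ℝ k b ∧
          (∀ x, |b x| + ∑ j ∈ Finset.Icc 1 k, ‖iteratedFDeriv ℝ j b x‖ ≤ Mb) ∧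
          (∀ x y, ‖iteratedFDeriv ℝ k b x - iteratedFDeriv ℝ k b y‖ ≤ Mb * ‖x - y‖ ^ σ) ∧
          Ma + ξ * Mb ≤ N * ξ ^ γ) →
      ContDiff ℝ l f ∧
      (∀ j, j ≤ l → ∀ x, ‖iteratedFDeriv ℝ j f x‖ ≤ C * N) ∧
      (γ * β < (l:ℝ) + 1 → ∀ x y : X,
        ‖iteratedFDeriv ℝ l f x - iteratedFDeriv ℝ l f y‖ ≤
          C * N * ‖x - y‖ ^ (γ * β - (l:ℝ))) ∧
      (γ * β = (l:ℝ) + 1 → ∀ x h : X,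
        ‖iteratedFDeriv ℝ l f (x + 2 • h) - 2 • iteratedFDeriv ℝ l f (x + h)
          + iteratedFDeriv ℝ l f x‖ ≤ C * N * ‖h‖) := by
  obtain ⟨C0, hC01, hC0⟩ := LK k
  have hC0pos : 0 < C0 := lt_of_lt_of_le one_pos hC01
  obtain ⟨θ, hθdef⟩ : ∃ θ : ℝ, θ = γ * β := ⟨_, rfl⟩
  rw [← hθdef]
  have hθ0 : 0 < θ := by rw [hθdef]; positivity
  have hθβ : θ < β := by rw [hθdef]; nlinarith
  have hlθ' : (l:ℝ) < θ := by rw [hθdef]; exact hlθ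
  have hkβ : (k:ℝ) < β := by rw [hβ]; linarith
  obtain ⟨cH, hcHdef⟩ : ∃ x : ℝ, x = 1 + 2 ^ (β - θ) := ⟨_, rfl⟩
  have hcH0 : 0 < cH := by
    have : (0:ℝ) < 2 ^ (β - θ) := Real.rpow_pos_of_pos two_pos _
    rw [hcHdef]; linarith
  obtain ⟨K, hKdef⟩ : ∃ x : ℝ, x = C0 * (2 + cH) := ⟨_, rfl⟩
  have hK0 : 0 < K := by rw [hKdef]; positivity
  obtain ⟨ρ, hρdef⟩ : ∃ x : ℝ, x = (2:ℝ) ^ ((l:ℝ) - θ) := ⟨_, rfl⟩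
  have hρ0 : 0 < ρ := by rw [hρdef]; exact Real.rpow_pos_of_pos two_pos _
  have hρ1 : ρ < 1 := by
    rw [hρdef]
    exact Real.rpow_lt_one_of_one_lt_of_neg one_lt_two (by linarith)
  obtain ⟨G, hGdef⟩ : ∃ x : ℝ, x = (1 - ρ)⁻¹ := ⟨_, rfl⟩
  have hG0 : 0 < G := by rw [hGdef]; exact inv_pos.mpr (by linarith)
  obtain ⟨cs, hcsdef⟩ : ∃ x : ℝ, x = 1 + K * G := ⟨_, rfl⟩
  have hcs0 : 0 < cs := by rw [hcsdef]; positivity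
  obtain ⟨α, hαdef⟩ : ∃ x : ℝ, x = θ - (l:ℝ) := ⟨_, rfl⟩
  have hα0 : 0 < α := by rw [hαdef]; linarith
  obtain ⟨τ, hτdef⟩ : ∃ x : ℝ, x = if l = k then σ else 1 := ⟨_, rfl⟩
  have hτ0 : 0 < τ := by rw [hτdef]; split <;> [exact hσ0; norm_num]
  have hτ1 : τ ≤ 1 := by rw [hτdef]; split <;> [exact hσ1; norm_num]
  obtain ⟨μ, hμdef⟩ : ∃ x : ℝ, x = (2:ℝ) ^ (τ - α) := ⟨_, rfl⟩
  have hμ0 : 0 < μ := by rw [hμdef]; exact Real.rpow_pos_of_pos two_pos _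
  obtain ⟨s, hsdef⟩ : ∃ x : ℝ, x = if l + 1 = k then σ else 1 := ⟨_, rfl⟩
  have hs0 : 0 < s := by rw [hsdef]; split <;> [exact hσ0; norm_num]
  have hs1 : s ≤ 1 := by rw [hsdef]; split <;> [exact hσ1; norm_num]
  obtain ⟨ν, hνdef⟩ : ∃ x : ℝ, x = (2:ℝ) ^ s := ⟨_, rfl⟩
  have hν1 : 1 < ν := by
    rw [hνdef]
    exact Real.one_lt_rpow_iff_of_pos two_pos |>.mpr (Or.inl ⟨one_lt_two, hs0⟩)
  obtain ⟨KH, hKHdef⟩ : ∃ x : ℝ, x = K + cH := ⟨_, rfl⟩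
  have hKH0 : 0 < KH := by rw [hKHdef]; positivity
  obtain ⟨cHol, hcHoldef⟩ : ∃ x : ℝ, x = 2*(K*G) + 1 + 2*KH*(μ-1)⁻¹ + 2*cs := ⟨_, rfl⟩
  obtain ⟨cZyg, hcZygdef⟩ : ∃ x : ℝ, x = 4*(K*G) + 2 + 2*KH*(ν-1)⁻¹ + 4*cs := ⟨_, rfl⟩
  obtain ⟨C, hCdef⟩ : ∃ x : ℝ, x = cs + max 0 cHol + max 0 cZyg + 1 := ⟨_, rfl⟩
  have hmHol : (0:ℝ) ≤ max 0 cHol := le_max_left _ _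
  have hmZyg : (0:ℝ) ≤ max 0 cZyg := le_max_left _ _
  have hCpos : 0 < C := by rw [hCdef]; linarith
  have hcsC : cs ≤ C := by rw [hCdef]; linarith
  refine ⟨C, hCpos, ?_⟩
  intro X _ _ f N hN hfc hyp
  have hyp' : ∀ n : ℕ, ∃ (a b : X → ℝ) (Ma Mb : ℝ),
      (∀ x, f x = a x + b x) ∧ Continuous a ∧ (∀ x, |a x| ≤ Ma) ∧
      ContDiff ℝ k b ∧
      (∀ x, |b x| + ∑ j ∈ Finset.Icc 1 k, ‖iteratedFDeriv ℝ j b x‖ ≤ Mb) ∧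
      (∀ x y, ‖iteratedFDeriv ℝ k b x - iteratedFDeriv ℝ k b y‖ ≤ Mb * ‖x - y‖ ^ σ) ∧
      Ma + (2:ℝ) ^ (-(n:ℝ)*β) * Mb ≤ N * ((2:ℝ) ^ (-(n:ℝ)*β)) ^ γ :=
    fun n => hyp ((2:ℝ) ^ (-(n:ℝ)*β)) (Real.rpow_pos_of_pos two_pos _)
  choose a b Ma Mb hfab hacont haM hbCD hbM hbHol hKf using hyp'
  have hMa0 : ∀ n, 0 ≤ Ma n := fun n => (abs_nonneg _).trans (haM n 0)
  have hMb0 : ∀ n, 0 ≤ Mb n := by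
    intro n
    have h := hbM n 0
    have h2 : (0:ℝ) ≤ |b n 0| + ∑ j ∈ Finset.Icc 1 k, ‖iteratedFDeriv ℝ j (b n) 0‖ := by
      positivity
    linarith
  have hxg : ∀ n : ℕ, ((2:ℝ) ^ (-(n:ℝ)*β)) ^ γ = 2 ^ (-(n:ℝ)*θ) := by
    intro n
    rw [← Real.rpow_mul (by norm_num : (0:ℝ) ≤ 2)]
    congr 1
    rw [hθdef]; ring
  have hMaN : ∀ n : ℕ, Ma n ≤ N * 2 ^ (-(n:ℝ)*θ) := by
    intro n
    have h := hKf n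
    rw [hxg n] at h
    have h2 : 0 ≤ (2:ℝ)^(-(n:ℝ)*β) * Mb n :=
      mul_nonneg (Real.rpow_pos_of_pos two_pos _).le (hMb0 n)
    linarith
  have hMbN : ∀ n : ℕ, Mb n ≤ N * 2 ^ ((n:ℝ)*(β-θ)) := by
    intro n
    have h := hKf n
    rw [hxg n] at h
    have h1 : (2:ℝ)^(-(n:ℝ)*β) * Mb n ≤ N * 2^(-(n:ℝ)*θ) := by linarith [hMa0 n]
    have hp : (0:ℝ) < 2^((n:ℝ)*β) := Real.rpow_pos_of_pos two_pos _
    have h2 := mul_le_mul_of_nonneg_left h1 hp.le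
    have e1 : (2:ℝ)^((n:ℝ)*β) * ((2:ℝ)^(-(n:ℝ)*β) * Mb n) = Mb n := by
      rw [← mul_assoc, ← Real.rpow_add two_pos]
      norm_num
    have e2 : (2:ℝ)^((n:ℝ)*β) * (N * 2^(-(n:ℝ)*θ)) = N * 2^((n:ℝ)*(β-θ)) := by
      rw [mul_comm ((2:ℝ)^((n:ℝ)*β)) _, mul_assoc, ← Real.rpow_add two_pos]
      congr 2
      ring
    rw [e1, e2] at h2
    exact h2
  have hMb0N : Mb 0 ≤ N := by
    have h := hMbN 0
    norm_num at h
    exact h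
  have hbj : ∀ n : ℕ, ∀ j, j ≤ k → ∀ x, ‖iteratedFDeriv ℝ j (b n) x‖ ≤ Mb n := by
    intro n j hj x
    rcases Nat.eq_zero_or_pos j with rfl | hj0
    · have h := hbM n x
      have hsum0 : (0:ℝ) ≤ ∑ j ∈ Finset.Icc 1 k, ‖iteratedFDeriv ℝ j (b n) x‖ :=
        Finset.sum_nonneg fun i _ => norm_nonneg _
      rw [norm_iteratedFDeriv_zero, Real.norm_eq_abs]
      linarith
    · have hmem : j ∈ Finset.Icc 1 k := Finset.mem_Icc.mpr ⟨hj0, hj⟩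
      have h1 := Finset.single_le_sum
        (f := fun i => ‖iteratedFDeriv ℝ i (b n) x‖) (fun i _ => norm_nonneg _) hmem
      have h2 := hbM n x
      have h3 : (0:ℝ) ≤ |b n x| := abs_nonneg _
      linarith
  obtain ⟨g, hgdef⟩ : ∃ g : ℕ → X → ℝ, g = fun n x => b (n+1) x - b n x := ⟨_, rfl⟩
  have hgCD : ∀ n, ContDiff ℝ k (g n) := by
    intro n; rw [hgdef]; exact (hbCD (n+1)).sub (hbCD n)
  have hgsub : ∀ n : ℕ, ∀ j, j ≤ k → ∀ x, iteratedFDeriv ℝ j (g n) x =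
      iteratedFDeriv ℝ j (b (n+1)) x - iteratedFDeriv ℝ j (b n) x := by
    intro n j hj x
    rw [hgdef]
    exact iteratedFDeriv_sub_apply'' ((hbCD (n+1)).of_le (by exact_mod_cast hj))
      ((hbCD n).of_le (by exact_mod_cast hj)) x
  have hgA : ∀ n : ℕ, ∀ x, ‖g n x‖ ≤ 2*N*2^(-(n:ℝ)*θ) := by
    intro n x
    have e : g n x = a n x - a (n+1) x := by
      have h1 := hfab n x
      have h2 := hfab (n+1) x
      rw [hgdef]
      simp only
      linarith
    rw [e, Real.norm_eq_abs]
    have h3 : |a n x - a (n+1) x| ≤ Ma n + Ma (n+1) :=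
      (abs_sub _ _).trans (add_le_add (haM n x) (haM (n+1) x))
    have h4 : Ma (n+1) ≤ N * 2^(-(n:ℝ)*θ) := by
      refine (hMaN (n+1)).trans ?_
      have h5 : (2:ℝ)^(-((n+1:ℕ):ℝ)*θ) ≤ 2^(-(n:ℝ)*θ) := by
        apply Real.rpow_le_rpow_of_exponent_le one_le_two
        push_cast
        linarith [hθ0.le, mul_nonneg (Nat.cast_nonneg n : (0:ℝ) ≤ n) hθ0.le]
      exact mul_le_mul_of_nonneg_left h5 hN.le
    have h5 := hMaN n
    linarith
  have hgB : ∀ n : ℕ, ∀ j, j ≤ k → ∀ x, ‖iteratedFDeriv ℝ j (g n) x‖ ≤ Mb n + Mb (n+1) := by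
    intro n j hj x
    rw [hgsub n j hj x]
    calc ‖iteratedFDeriv ℝ j (b (n+1)) x - iteratedFDeriv ℝ j (b n) x‖
        ≤ ‖iteratedFDeriv ℝ j (b (n+1)) x‖ + ‖iteratedFDeriv ℝ j (b n) x‖ := norm_sub_le _ _
      _ ≤ Mb (n+1) + Mb n := add_le_add (hbj (n+1) j hj x) (hbj n j hj x)
      _ = Mb n + Mb (n+1) := by ring
  have hgH : ∀ n : ℕ, ∀ x y, ‖iteratedFDeriv ℝ k (g n) x - iteratedFDeriv ℝ k (g n) y‖ ≤
      (cH * (N * 2^((n:ℝ)*(β-θ)))) * ‖x - y‖^σ := by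
    intro n x y
    rw [hgsub n k le_rfl x, hgsub n k le_rfl y]
    have e : iteratedFDeriv ℝ k (b (n+1)) x - iteratedFDeriv ℝ k (b n) x -
        (iteratedFDeriv ℝ k (b (n+1)) y - iteratedFDeriv ℝ k (b n) y) =
        (iteratedFDeriv ℝ k (b (n+1)) x - iteratedFDeriv ℝ k (b (n+1)) y) -
        (iteratedFDeriv ℝ k (b n) x - iteratedFDeriv ℝ k (b n) y) := by abel
    rw [e]
    have h1 := hbHol (n+1) x y
    have h2 := hbHol n x y
    have hxy : (0:ℝ) ≤ ‖x - y‖^σ := Real.rpow_nonneg (norm_nonneg _) σ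
    have h3 : Mb (n+1) ≤ N * (2^(β-θ) * 2^((n:ℝ)*(β-θ))) := by
      refine (hMbN (n+1)).trans (le_of_eq ?_)
      rw [← Real.rpow_add two_pos]
      congr 1
      push_cast
      ring
    have h4 := hMbN n
    calc ‖(iteratedFDeriv ℝ k (b (n+1)) x - iteratedFDeriv ℝ k (b (n+1)) y) -
        (iteratedFDeriv ℝ k (b n) x - iteratedFDeriv ℝ k (b n) y)‖
        ≤ ‖iteratedFDeriv ℝ k (b (n+1)) x - iteratedFDeriv ℝ k (b (n+1)) y‖ +
          ‖iteratedFDeriv ℝ k (b n) x - iteratedFDeriv ℝ k (b n) y‖ := norm_sub_le _ _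
      _ ≤ Mb (n+1) * ‖x - y‖^σ + Mb n * ‖x - y‖^σ := add_le_add h1 h2
      _ ≤ (N * (2^(β-θ) * 2^((n:ℝ)*(β-θ)))) * ‖x - y‖^σ +
          (N * 2^((n:ℝ)*(β-θ))) * ‖x - y‖^σ := by gcongr
      _ = (cH * (N * 2^((n:ℝ)*(β-θ)))) * ‖x - y‖^σ := by rw [hcHdef]; ring
  -- the key LK estimate for the blocks, in geometric form
  have E1 : ∀ n : ℕ, ∀ j, j ≤ k → ∀ x, ‖iteratedFDeriv ℝ j (g n) x‖ ≤
      K * N * ((2:ℝ)^((j:ℝ)-θ))^n := by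
    intro n j hj x
    have hr : (0:ℝ) < 2^(-(n:ℝ)) := Real.rpow_pos_of_pos two_pos _
    have hH0 : (0:ℝ) ≤ cH * (N * 2^((n:ℝ)*(β-θ))) := by positivity
    have h := hC0 σ hσ0 hσ1 X (g n) (2*N*2^(-(n:ℝ)*θ)) (cH*(N*2^((n:ℝ)*(β-θ))))
      (Mb n + Mb (n+1)) hH0 (hgCD n) (hgA n) (hgH n) (hgB n) j hj (2^(-(n:ℝ))) hr x
    refine h.trans (le_of_eq ?_)
    have e1 : ((2:ℝ)^(-(n:ℝ)))^(-(j:ℝ)) = 2^((n:ℝ)*(j:ℝ)) := by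
      rw [← Real.rpow_mul (by norm_num : (0:ℝ) ≤ 2)]
      congr 1; ring
    have e2 : ((2:ℝ)^(-(n:ℝ)))^((k:ℝ)+σ-(j:ℝ)) = 2^(-(n:ℝ)*((k:ℝ)+σ-(j:ℝ))) := by
      rw [← Real.rpow_mul (by norm_num : (0:ℝ) ≤ 2)]
    rw [e1, e2]
    have q1 : (2:ℝ)^(-(n:ℝ)*θ) * 2^((n:ℝ)*(j:ℝ)) = 2^((n:ℝ)*((j:ℝ)-θ)) := by
      rw [← Real.rpow_add two_pos]; congr 1; ring
    have q2 : (2:ℝ)^((n:ℝ)*(β-θ)) * 2^(-(n:ℝ)*((k:ℝ)+σ-(j:ℝ))) = 2^((n:ℝ)*((j:ℝ)-θ)) := by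
      rw [← Real.rpow_add two_pos]; congr 1; rw [hβ]; ring
    calc C0 * (2*N*2^(-(n:ℝ)*θ) * 2^((n:ℝ)*(j:ℝ)) +
          cH*(N*2^((n:ℝ)*(β-θ))) * 2^(-(n:ℝ)*((k:ℝ)+σ-(j:ℝ))))
        = C0 * (2*N*(2^(-(n:ℝ)*θ) * 2^((n:ℝ)*(j:ℝ))) +
          cH*N*(2^((n:ℝ)*(β-θ)) * 2^(-(n:ℝ)*((k:ℝ)+σ-(j:ℝ))))) := by ring
      _ = C0 * (2*N*2^((n:ℝ)*((j:ℝ)-θ)) + cH*N*2^((n:ℝ)*((j:ℝ)-θ))) := by rw [q1, q2]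
      _ = K * N * (2:ℝ)^((n:ℝ)*((j:ℝ)-θ)) := by rw [hKdef]; ring
      _ = K * N * ((2:ℝ)^((j:ℝ)-θ))^n := by rw [two_rpow_natpow]
  
  -- convergence of b n to f
  have hbfdiff : ∀ n : ℕ, ∀ x, ‖b n x - f x‖ ≤ N * 2^(-(n:ℝ)*θ) := by
    intro n x
    have h1 := hfab n x
    have h2 : b n x - f x = -(a n x) := by linarith
    rw [h2, norm_neg, Real.norm_eq_abs]
    exact (haM n x).trans (hMaN n)
  have hbf : ∀ x : X, Tendsto (fun n : ℕ => b n x) atTop (𝓝 (f x)) := by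
    intro x
    have hgeo : Tendsto (fun n : ℕ => N * ((2:ℝ)^(-θ))^n) atTop (𝓝 0) := by
      have h := tendsto_pow_atTop_nhds_zero_of_lt_one
        (Real.rpow_pos_of_pos two_pos (-θ)).le
        (Real.rpow_lt_one_of_one_lt_of_neg one_lt_two (by linarith))
      have := h.const_mul N
      simpa using this
    have h0 : Tendsto (fun n : ℕ => b n x - f x) atTop (𝓝 0) := by
      apply squeeze_zero_norm _ hgeo
      intro n
      refine (hbfdiff n x).trans (le_of_eq ?_)
      rw [show -(n:ℝ)*θ = (n:ℝ)*(-θ) by ring, two_rpow_natpow]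
    have := h0.add (tendsto_const_nhds (x := f x) (f := atTop))
    simpa using this
  -- geometric step bound
  have hstepj : ∀ j, j ≤ l → ∀ n : ℕ, ∀ x : X,
      ‖iteratedFDeriv ℝ j (b (n+1)) x - iteratedFDeriv ℝ j (b n) x‖ ≤ K*N*ρ^n := by
    intro j hj n x
    rw [← hgsub n j (hj.trans hlk) x]
    refine (E1 n j (hj.trans hlk) x).trans ?_
    have h1 : ((2:ℝ)^((j:ℝ)-θ))^n ≤ ρ^n := by
      apply pow_le_pow_left₀ (Real.rpow_pos_of_pos two_pos _).le
      rw [hρdef]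
      apply Real.rpow_le_rpow_of_exponent_le one_le_two
      have : (j:ℝ) ≤ (l:ℝ) := by exact_mod_cast hj
      linarith
    have h2 : 0 ≤ K*N := by positivity
    exact mul_le_mul_of_nonneg_left h1 h2
  have hcauchy : ∀ j, j ≤ l → ∀ x : X, CauchySeq (fun n => iteratedFDeriv ℝ j (b n) x) := by
    intro j hj x
    apply cauchySeq_of_le_geometric ρ (K*N) hρ1
    intro n
    rw [dist_eq_norm, norm_sub_rev]
    exact hstepj j hj n x
  have hconv : ∀ (j : ℕ) (x : X), ∃ L : (ContinuousMultilinearMap ℝ (fun _ : Fin j => X) ℝ),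
      j ≤ l → Tendsto (fun n => iteratedFDeriv ℝ j (b n) x) atTop (𝓝 L) := by
    intro j x
    by_cases hj : j ≤ l
    · obtain ⟨L, hL⟩ := cauchySeq_tendsto_of_complete (hcauchy j hj x)
      exact ⟨L, fun _ => hL⟩
    · exact ⟨0, fun h => absurd h hj⟩
  choose Φ hΦ using hconv
  have htail : ∀ j, j ≤ l → ∀ n : ℕ, ∀ x : X,
      ‖Φ j x - iteratedFDeriv ℝ j (b n) x‖ ≤ K*N*G * ρ^n := by
    intro j hj n x
    have hbound : ∀ m, n ≤ m →
        ‖iteratedFDeriv ℝ j (b m) x - iteratedFDeriv ℝ j (b n) x‖ ≤ K*N*G*ρ^n := by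
      intro m hm
      have h1 := telescope_bound (v := fun i => iteratedFDeriv ℝ j (b i) x)
        (u := fun i => K*N*ρ^i) (fun i => hstepj j hj i x) hm
      refine h1.trans ?_
      have h2 : ∑ i ∈ Finset.Ico n m, K*N*ρ^i = (K*N) * ∑ i ∈ Finset.Ico n m, ρ^i := by
        rw [Finset.mul_sum]
      rw [h2]
      have h3 := geom_Ico_le hρ0.le hρ1 n m
      calc (K*N) * ∑ i ∈ Finset.Ico n m, ρ^i ≤ (K*N) * (ρ^n * (1-ρ)⁻¹) := by
            apply mul_le_mul_of_nonneg_left h3 (by positivity)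
        _ = K*N*G*ρ^n := by rw [hGdef]; ring
    have h1 : Tendsto (fun m => ‖iteratedFDeriv ℝ j (b m) x - iteratedFDeriv ℝ j (b n) x‖)
        atTop (𝓝 ‖Φ j x - iteratedFDeriv ℝ j (b n) x‖) :=
      ((hΦ j x hj).sub tendsto_const_nhds).norm
    exact le_of_tendsto h1 (eventually_atTop.mpr ⟨n, hbound⟩)
  have hunif : ∀ j, j ≤ l →
      TendstoUniformly (fun n (x : X) => iteratedFDeriv ℝ j (b n) x) (Φ j) atTop := by
    intro j hj
    apply tendstoUniformly_of_bound (u := fun n => K*N*G*ρ^n)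
      (fun n x => by rw [norm_sub_rev]; exact htail j hj n x)
    have hgeo := tendsto_pow_atTop_nhds_zero_of_lt_one hρ0.le hρ1
    have := hgeo.const_mul (K*N*G)
    simpa using this
  have hsup : ∀ j, j ≤ l → ∀ x : X, ‖Φ j x‖ ≤ cs * N := by
    intro j hj x
    have h1 : ‖Φ j x‖ ≤ ‖Φ j x - iteratedFDeriv ℝ j (b 0) x‖ +
        ‖iteratedFDeriv ℝ j (b 0) x‖ := by
      have := norm_add_le (Φ j x - iteratedFDeriv ℝ j (b 0) x) (iteratedFDeriv ℝ j (b 0) x)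
      simpa using this
    refine h1.trans ?_
    have h2 := htail j hj 0 x
    rw [pow_zero, mul_one] at h2
    have h3 := (hbj 0 j (hj.trans hlk) x).trans hMb0N
    rw [hcsdef]
    have h4 : K*N*G = K*G*N := by ring
    linarith
  -- Taylor series of f
  have hbTay : ∀ n, HasFTaylorSeriesUpTo (k:ℕ∞) (b n) (ftaylorSeries ℝ (b n)) := by
    intro n
    exact (contDiff_iff_ftaylorSeries (n := (k:ℕ∞))).mp (by exact_mod_cast hbCD n)
  have hTay : HasFTaylorSeriesUpTo (l : ℕ∞) f (fun x j => Φ j x) := by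
    refine ⟨?_, ?_, ?_⟩
    · intro x
      have h0 : Tendsto (fun n => iteratedFDeriv ℝ 0 (b n) x) atTop
          (𝓝 ((continuousMultilinearCurryFin0 ℝ X ℝ).symm (f x))) := by
        have hb := hbf x
        have hcont : Continuous (continuousMultilinearCurryFin0 ℝ X ℝ).symm :=
          (continuousMultilinearCurryFin0 ℝ X ℝ).symm.continuous
        have h1 := (hcont.tendsto (f x)).comp hb
        convert h1 using 2
        ext; simp
      have huniq := tendsto_nhds_unique (hΦ 0 x (Nat.zero_le l)) h0
      rw [huniq]
      rfl
    · intro m hm x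
      have hml : m < l := by exact_mod_cast hm
      have hml' : m + 1 ≤ l := hml
      have hf' : TendstoUniformly
          (fun n (y : X) => (iteratedFDeriv ℝ (m+1) (b n) y).curryLeft)
          (fun y => (Φ (m+1) y).curryLeft) atTop := by
        have hquant : ∀ (n : ℕ) (y : X),
            ‖(iteratedFDeriv ℝ (m+1) (b n) y).curryLeft - (Φ (m+1) y).curryLeft‖
              ≤ K*N*G*ρ^n := by
          intro n y
          rw [curryLeft_norm_sub, norm_sub_rev]
          exact htail (m+1) hml' n y
        have hlim : Tendsto (fun n : ℕ => K*N*G*ρ^n) atTop (𝓝 0) := by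
          have hgeo := tendsto_pow_atTop_nhds_zero_of_lt_one hρ0.le hρ1
          have := hgeo.const_mul (K*N*G)
          simpa using this
        exact tendstoUniformly_of_bound (E := X →L[ℝ] ContinuousMultilinearMap ℝ (fun _ : Fin m => X) ℝ) hquant hlim
      have hf : ∀ (n : ℕ) (y : X), HasFDerivAt (fun z => iteratedFDeriv ℝ m (b n) z)
          ((iteratedFDeriv ℝ (m+1) (b n) y).curryLeft) y := by
        intro n y
        have hmk : (m : ℕ∞) < (k : ℕ∞) := by exact_mod_cast lt_of_lt_of_le hml hlk
        exact (hbTay n).fderiv m (by exact_mod_cast hmk) y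
      have hfg : ∀ y : X, Tendsto (fun n => iteratedFDeriv ℝ m (b n) y) atTop
          (𝓝 (Φ m y)) := fun y => hΦ m y hml.le
      exact hasFDerivAt_of_tendstoUniformly hf' hf hfg x
    · intro m hm
      have hml : m ≤ l := by exact_mod_cast hm
      apply (hunif m hml).continuous
      refine Filter.Eventually.frequently (Filter.Eventually.of_forall ?_)
      intro n
      exact (hbCD n).continuous_iteratedFDeriv (by exact_mod_cast hml.trans hlk)
  have hCDf : ContDiff ℝ (l : ℕ∞) f := hTay.contDiff
  have hiter : ∀ j, j ≤ l → ∀ x : X, iteratedFDeriv ℝ j f x = Φ j x := by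
    intro j hj x
    exact (hTay.eq_iteratedFDeriv (by exact_mod_cast hj) x).symm
  refine ⟨by exact_mod_cast hCDf, ?_, ?_, ?_⟩
  · intro j hj x
    rw [hiter j hj x]
    refine (hsup j hj x).trans ?_
    exact mul_le_mul_of_nonneg_right hcsC hN.le

  · -- Hölder case
    intro hcase x y
    rw [hiter l le_rfl x, hiter l le_rfl y, ← hαdef]
    have hα1 : α < 1 := by rw [hαdef]; linarith
    have hατ : α < τ := by
      rw [hτdef]; split
      · rename_i hl
        have hlr : (l:ℝ) = (k:ℝ) := by exact_mod_cast hl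
        rw [hβ] at hθβ
        rw [hαdef, hlr]; linarith
      · linarith
    have hμ1 : 1 < μ := by
      rw [hμdef]
      exact Real.one_lt_rpow_iff_of_pos two_pos |>.mpr (Or.inl ⟨one_lt_two, by linarith⟩)
    have hKKH : K ≤ KH := by rw [hKHdef]; linarith
    have hcHKH : cH ≤ KH := by rw [hKHdef]; linarith
    -- step bounds at level l
    have hstepH : ∀ i : ℕ, ∀ u v : X,
        ‖iteratedFDeriv ℝ l (g i) u - iteratedFDeriv ℝ l (g i) v‖
          ≤ KH*N*μ^i * ‖u - v‖^τ := by
      intro i u v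
      by_cases hlken : l = k
      · have hτσ : τ = σ := by rw [hτdef, if_pos hlken]
        have heq : τ - α = β - θ := by
          have hlr : (l:ℝ) = (k:ℝ) := by exact_mod_cast hlken
          rw [hτσ, hαdef, hβ, hlr]; ring
        have hμeq : μ^i = 2^((i:ℝ)*(β-θ)) := by
          rw [hμdef, heq, two_rpow_natpow]
        rw [hlken]
        refine (hgH i u v).trans ?_
        rw [hμeq, hτσ]
        calc cH * (N * 2^((i:ℝ)*(β-θ))) * ‖u - v‖^σ
            ≤ KH * (N * 2^((i:ℝ)*(β-θ))) * ‖u - v‖^σ := by gcongr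
          _ = KH*N*2^((i:ℝ)*(β-θ)) * ‖u - v‖^σ := by ring
      · have hlltk : l < k := lt_of_le_of_ne hlk hlken
        have hτ1' : τ = 1 := by rw [hτdef, if_neg hlken]
        have hdiffg : Differentiable ℝ (iteratedFDeriv ℝ l (g i)) :=
          (hgCD i).differentiable_iteratedFDeriv (by exact_mod_cast hlltk)
        have hbound : ∀ z : X, ‖fderiv ℝ (iteratedFDeriv ℝ l (g i)) z‖
            ≤ K*N*((2:ℝ)^(((l+1:ℕ):ℝ)-θ))^i := by
          intro z
          rw [norm_fderiv_iteratedFDeriv]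
          exact E1 i (l+1) hlltk z
        have h2 := mv_lip hdiffg hbound u v
        refine h2.trans ?_
        have hμeq : μ = (2:ℝ)^(((l+1:ℕ):ℝ)-θ) := by
          rw [hμdef, hτ1', hαdef]; congr 1; push_cast; ring
        rw [hμeq, hτ1', Real.rpow_one]
        have hKle : K ≤ KH := hKKH
        calc K*N*((2:ℝ)^(((l+1:ℕ):ℝ)-θ))^i * ‖u - v‖
            ≤ KH*N*((2:ℝ)^(((l+1:ℕ):ℝ)-θ))^i * ‖u - v‖ := by gcongr
          _ = KH*N*((2:ℝ)^(((l+1:ℕ):ℝ)-θ))^i * ‖u - v‖ := rfl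
    have hstepH0 : ∀ u v : X, ‖iteratedFDeriv ℝ l (b 0) u - iteratedFDeriv ℝ l (b 0) v‖
        ≤ N * ‖u - v‖^τ := by
      intro u v
      by_cases hlken : l = k
      · have hτσ : τ = σ := by rw [hτdef, if_pos hlken]
        rw [hlken, hτσ]
        refine (hbHol 0 u v).trans ?_
        exact mul_le_mul_of_nonneg_right hMb0N (Real.rpow_nonneg (norm_nonneg _) σ)
      · have hlltk : l < k := lt_of_le_of_ne hlk hlken
        have hτ1' : τ = 1 := by rw [hτdef, if_neg hlken]
        rw [hτ1', Real.rpow_one]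
        apply mv_lip ((hbCD 0).differentiable_iteratedFDeriv (by exact_mod_cast hlltk))
        intro z
        rw [norm_fderiv_iteratedFDeriv]
        exact (hbj 0 (l+1) hlltk z).trans hMb0N
    -- degenerate case x = y
    rcases eq_or_ne x y with rfl | hxy
    · have h0 : ‖x - x‖ = 0 := by simp
      rw [sub_self, norm_zero]
      positivity
    have hd0 : (0:ℝ) < ‖x - y‖ := by
      rw [norm_pos_iff, sub_ne_zero]; exact hxy
    by_cases hd1 : 1 ≤ ‖x - y‖
    · have h1 : ‖Φ l x - Φ l y‖ ≤ 2*cs*N := by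
        calc ‖Φ l x - Φ l y‖ ≤ ‖Φ l x‖ + ‖Φ l y‖ := norm_sub_le _ _
          _ ≤ cs*N + cs*N := add_le_add (hsup l le_rfl x) (hsup l le_rfl y)
          _ = 2*cs*N := by ring
      refine h1.trans ?_
      have h2 : (1:ℝ) ≤ ‖x - y‖^α := by
        rw [show (1:ℝ) = (1:ℝ)^α by rw [Real.one_rpow]]
        exact Real.rpow_le_rpow (by norm_num) hd1 hα0.le
      have hμinv : (0:ℝ) < (μ-1)⁻¹ := inv_pos.mpr (by linarith)
      have h3 : 2*cs ≤ C := by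
        have h4 : 2*cs ≤ cHol := by
          rw [hcHoldef]
          have p1 : 0 ≤ 2*(K*G) := by positivity
          have p2 : 0 ≤ 2*KH*(μ-1)⁻¹ := by positivity
          linarith
        have h5 : cHol ≤ max 0 cHol := le_max_right _ _
        rw [hCdef]; linarith
      calc 2*cs*N ≤ C*N := mul_le_mul_of_nonneg_right h3 hN.le
        _ ≤ C*N*‖x - y‖^α := le_mul_of_one_le_right (by positivity) h2
    · push_neg at hd1
      obtain ⟨n, hn1, hn2⟩ := exists_dyadic ‖x - y‖ hd0 hd1
      have hρn : ρ^n ≤ ‖x - y‖^α := by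
        have h := dyadic_bound_low hd0 α hα0.le hn1
        have hρα : ρ = (2:ℝ)^(-α) := by rw [hρdef, hαdef]; congr 1; ring
        rwa [← hρα] at h
      have hμinv : (0:ℝ) < (μ-1)⁻¹ := inv_pos.mpr (by linarith)
      -- middle telescope
      have hv : ∀ i : ℕ,
          ‖(iteratedFDeriv ℝ l (b (i+1)) x - iteratedFDeriv ℝ l (b (i+1)) y) -
            (iteratedFDeriv ℝ l (b i) x - iteratedFDeriv ℝ l (b i) y)‖ ≤
            KH*N*‖x - y‖^τ * μ^i := by
        intro i
        have e : (iteratedFDeriv ℝ l (b (i+1)) x - iteratedFDeriv ℝ l (b (i+1)) y) -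
            (iteratedFDeriv ℝ l (b i) x - iteratedFDeriv ℝ l (b i) y)
            = iteratedFDeriv ℝ l (g i) x - iteratedFDeriv ℝ l (g i) y := by
          rw [hgsub i l hlk x, hgsub i l hlk y]; abel
        rw [e]
        refine (hstepH i x y).trans (le_of_eq ?_)
        ring
      have hmid : ‖iteratedFDeriv ℝ l (b n) x - iteratedFDeriv ℝ l (b n) y‖ ≤
          N*‖x - y‖^τ + KH*N*‖x - y‖^τ * (μ^n * (μ-1)⁻¹) := by
        have h1 := telescope_bound
          (v := fun i => iteratedFDeriv ℝ l (b i) x - iteratedFDeriv ℝ l (b i) y)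
          (u := fun i => KH*N*‖x - y‖^τ * μ^i) hv (Nat.zero_le n)
        have h2 : ∑ i ∈ Finset.Ico 0 n, KH*N*‖x - y‖^τ * μ^i
            = KH*N*‖x - y‖^τ * ∑ i ∈ Finset.range n, μ^i := by
          rw [← Finset.range_eq_Ico, Finset.mul_sum]
        have h3 : ∑ i ∈ Finset.range n, μ^i ≤ μ^n * (μ-1)⁻¹ := by
          rw [geom_sum_eq (ne_of_gt hμ1), div_eq_mul_inv]
          apply mul_le_mul_of_nonneg_right _ (inv_nonneg.mpr (by linarith))
          linarith [pow_pos hμ0 n]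
        have h4 : ‖iteratedFDeriv ℝ l (b n) x - iteratedFDeriv ℝ l (b n) y‖ ≤
            ‖(iteratedFDeriv ℝ l (b n) x - iteratedFDeriv ℝ l (b n) y) -
              (iteratedFDeriv ℝ l (b 0) x - iteratedFDeriv ℝ l (b 0) y)‖ +
            ‖iteratedFDeriv ℝ l (b 0) x - iteratedFDeriv ℝ l (b 0) y‖ := by
          have := norm_add_le
            ((iteratedFDeriv ℝ l (b n) x - iteratedFDeriv ℝ l (b n) y) -
              (iteratedFDeriv ℝ l (b 0) x - iteratedFDeriv ℝ l (b 0) y))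
            (iteratedFDeriv ℝ l (b 0) x - iteratedFDeriv ℝ l (b 0) y)
          simpa using this
        refine h4.trans ?_
        have h5 := h1.trans (le_of_eq h2)
        have h6 : KH*N*‖x - y‖^τ * ∑ i ∈ Finset.range n, μ^i ≤
            KH*N*‖x - y‖^τ * (μ^n * (μ-1)⁻¹) :=
          mul_le_mul_of_nonneg_left h3 (by positivity)
        have h7 := hstepH0 x y
        linarith
      have hμn : μ^n * ‖x - y‖^τ ≤ 2*‖x - y‖^α := by
        have h1 := dyadic_bound_high hd0 (τ - α) (by linarith) (by linarith) hn2
        rw [← hμdef] at h1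
        have h2 := mul_le_mul_of_nonneg_right h1
          (Real.rpow_nonneg (norm_nonneg (x - y)) τ)
        have h3 : 2*‖x - y‖^(-(τ-α)) * ‖x - y‖^τ = 2*‖x - y‖^α := by
          rw [mul_assoc, ← Real.rpow_add hd0]
          congr 2
          ring
        rwa [h3] at h2
      have hτα : ‖x - y‖^τ ≤ ‖x - y‖^α :=
        Real.rpow_le_rpow_of_exponent_ge hd0 hd1.le hατ.le
      -- final assembly
      have hsplit : ‖Φ l x - Φ l y‖ ≤
          ‖Φ l x - iteratedFDeriv ℝ l (b n) x‖ +
          ‖iteratedFDeriv ℝ l (b n) x - iteratedFDeriv ℝ l (b n) y‖ +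
          ‖Φ l y - iteratedFDeriv ℝ l (b n) y‖ := by
        have e : Φ l x - Φ l y = (Φ l x - iteratedFDeriv ℝ l (b n) x) +
            (iteratedFDeriv ℝ l (b n) x - iteratedFDeriv ℝ l (b n) y) +
            -(Φ l y - iteratedFDeriv ℝ l (b n) y) := by abel
        rw [e]
        calc ‖(Φ l x - iteratedFDeriv ℝ l (b n) x) +
            (iteratedFDeriv ℝ l (b n) x - iteratedFDeriv ℝ l (b n) y) +
            -(Φ l y - iteratedFDeriv ℝ l (b n) y)‖
            ≤ ‖(Φ l x - iteratedFDeriv ℝ l (b n) x) +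
              (iteratedFDeriv ℝ l (b n) x - iteratedFDeriv ℝ l (b n) y)‖ +
              ‖-(Φ l y - iteratedFDeriv ℝ l (b n) y)‖ := norm_add_le _ _
          _ ≤ ‖Φ l x - iteratedFDeriv ℝ l (b n) x‖ +
              ‖iteratedFDeriv ℝ l (b n) x - iteratedFDeriv ℝ l (b n) y‖ +
              ‖-(Φ l y - iteratedFDeriv ℝ l (b n) y)‖ := by
                gcongr
                exact norm_add_le _ _
          _ = _ := by rw [norm_neg]
      have hT1 : ‖Φ l x - iteratedFDeriv ℝ l (b n) x‖ ≤ K*N*G*‖x - y‖^α := by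
        refine (htail l le_rfl n x).trans ?_
        exact mul_le_mul_of_nonneg_left hρn (by positivity)
      have hT1' : ‖Φ l y - iteratedFDeriv ℝ l (b n) y‖ ≤ K*N*G*‖x - y‖^α := by
        refine (htail l le_rfl n y).trans ?_
        exact mul_le_mul_of_nonneg_left hρn (by positivity)
      have hT2 : N*‖x - y‖^τ ≤ N*‖x - y‖^α := mul_le_mul_of_nonneg_left hτα hN.le
      have hT3 : KH*N*‖x - y‖^τ * (μ^n * (μ-1)⁻¹) ≤
          KH*N*(μ-1)⁻¹ * (2*‖x - y‖^α) := by
        have h1 : KH*N*‖x - y‖^τ * (μ^n * (μ-1)⁻¹)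
            = KH*N*(μ-1)⁻¹ * (μ^n * ‖x - y‖^τ) := by ring
        rw [h1]
        exact mul_le_mul_of_nonneg_left hμn (by positivity)
      have hfin : K*N*G*‖x - y‖^α + (N*‖x - y‖^α + KH*N*(μ-1)⁻¹*(2*‖x - y‖^α)) +
          K*N*G*‖x - y‖^α ≤ C*N*‖x - y‖^α := by
        have hcoef : 2*(K*G) + 1 + 2*KH*(μ-1)⁻¹ ≤ C := by
          have h4 : 2*(K*G) + 1 + 2*KH*(μ-1)⁻¹ ≤ cHol := by
            rw [hcHoldef]; linarith
          have h5 : cHol ≤ max 0 cHol := le_max_right _ _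
          rw [hCdef]; linarith
        have hD0 : (0:ℝ) ≤ N*‖x - y‖^α := by positivity
        have := mul_le_mul_of_nonneg_right hcoef hD0
        calc K*N*G*‖x - y‖^α + (N*‖x - y‖^α + KH*N*(μ-1)⁻¹*(2*‖x - y‖^α)) +
            K*N*G*‖x - y‖^α
            = (2*(K*G) + 1 + 2*KH*(μ-1)⁻¹) * (N*‖x - y‖^α) := by ring
          _ ≤ C * (N*‖x - y‖^α) := this
          _ = C*N*‖x - y‖^α := by ring
      linarith [hsplit, hT1, hT1', hmid, hT2, hT3]
  · -- Zygmund case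
    intro hcase x h
    rw [hiter l le_rfl (x + 2•h), hiter l le_rfl (x + h), hiter l le_rfl x]
    have hl1k' : l + 1 ≤ k := by
      have h1 : ((l:ℝ)+1) < (k:ℝ) + 1 := by
        rw [← hcase]; rw [hβ] at hθβ; linarith
      have h2 : l + 1 < k + 1 := by exact_mod_cast h1
      omega
    have hllk : l < k := by omega
    have hKKH : K ≤ KH := by rw [hKHdef]; linarith
    have hcHKH : cH ≤ KH := by rw [hKHdef]; linarith
    have hνinv : (0:ℝ) < (ν-1)⁻¹ := inv_pos.mpr (by linarith)
    -- second-difference bounds for the blocks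
    have hstepZ : ∀ i : ℕ, ∀ u w : X,
        ‖iteratedFDeriv ℝ l (g i) (u + 2•w) - 2•iteratedFDeriv ℝ l (g i) (u + w)
          + iteratedFDeriv ℝ l (g i) u‖ ≤ (KH*N*‖w‖^s*‖w‖) * ν^i := by
      intro i u w
      have hdiffg : Differentiable ℝ (iteratedFDeriv ℝ l (g i)) :=
        (hgCD i).differentiable_iteratedFDeriv (by exact_mod_cast hllk)
      by_cases hl1keq : l + 1 = k
      · have hsσ : s = σ := by rw [hsdef, if_pos hl1keq]
        have hβθσ : β - θ = σ := by
          have hlr : ((l:ℝ)+1) = (k:ℝ) := by exact_mod_cast hl1keq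
          rw [hβ, hcase, ← hlr]; ring
        have hνi : ν^i = 2^((i:ℝ)*(β-θ)) := by
          rw [hνdef, hsσ, ← hβθσ, two_rpow_natpow]
        have hc : ∀ z : X, ‖fderiv ℝ (iteratedFDeriv ℝ l (g i)) (z + w) -
            fderiv ℝ (iteratedFDeriv ℝ l (g i)) z‖ ≤ KH*N*ν^i*‖w‖^s := by
          intro z
          rw [fderiv_iter_sub_norm, hl1keq]
          refine (hgH i (z+w) z).trans ?_
          rw [show z + w - z = w by abel, hνi, hsσ]
          calc cH * (N * 2^((i:ℝ)*(β-θ))) * ‖w‖^σ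
              ≤ KH * (N * 2^((i:ℝ)*(β-θ))) * ‖w‖^σ := by gcongr
            _ = KH*N*2^((i:ℝ)*(β-θ))*‖w‖^σ := by ring
        have hsd := second_diff_bound hdiffg w hc u
        refine hsd.trans (le_of_eq ?_)
        ring
      · have hsone : s = 1 := by rw [hsdef, if_neg hl1keq]
        have hl2k : l + 2 ≤ k := by omega
        have hνeq : ((2:ℝ)^(((l+2:ℕ):ℝ)-θ)) = ν := by
          rw [hνdef, hsone]
          congr 1
          push_cast
          rw [hcase]; ring
        have hin : ∀ z : X, ‖fderiv ℝ (iteratedFDeriv ℝ (l+1) (g i)) z‖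
            ≤ K*N*((2:ℝ)^(((l+2:ℕ):ℝ)-θ))^i := by
          intro z
          rw [norm_fderiv_iteratedFDeriv]
          exact E1 i (l+2) hl2k z
        have hdiffg1 : Differentiable ℝ (iteratedFDeriv ℝ (l+1) (g i)) :=
          (hgCD i).differentiable_iteratedFDeriv (by exact_mod_cast (by omega : l+1 < k))
        have hc : ∀ z : X, ‖fderiv ℝ (iteratedFDeriv ℝ l (g i)) (z + w) -
            fderiv ℝ (iteratedFDeriv ℝ l (g i)) z‖ ≤ K*N*ν^i*‖w‖ := by
          intro z
          rw [fderiv_iter_sub_norm]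
          have := mv_lip hdiffg1 hin (z+w) z
          rw [show z + w - z = w by abel, hνeq] at this
          refine this.trans (le_of_eq ?_)
          ring
        have hsd := second_diff_bound hdiffg w hc u
        refine hsd.trans ?_
        rw [hsone, Real.rpow_one]
        have e : KH*N*‖w‖*‖w‖*ν^i = KH*N*ν^i*‖w‖*‖w‖ := by ring
        calc K*N*ν^i*‖w‖*‖w‖ ≤ KH*N*ν^i*‖w‖*‖w‖ := by gcongr
          _ = KH*N*‖w‖*‖w‖*ν^i := by ring
    have hstepZ0 : ∀ u w : X,
        ‖iteratedFDeriv ℝ l (b 0) (u + 2•w) - 2•iteratedFDeriv ℝ l (b 0) (u + w)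
          + iteratedFDeriv ℝ l (b 0) u‖ ≤ 2*N*‖w‖ := by
      intro u w
      have hdiffb : Differentiable ℝ (iteratedFDeriv ℝ l (b 0)) :=
        (hbCD 0).differentiable_iteratedFDeriv (by exact_mod_cast hllk)
      have hc : ∀ z : X, ‖fderiv ℝ (iteratedFDeriv ℝ l (b 0)) (z + w) -
          fderiv ℝ (iteratedFDeriv ℝ l (b 0)) z‖ ≤ 2*N := by
        intro z
        rw [fderiv_iter_sub_norm]
        calc ‖iteratedFDeriv ℝ (l+1) (b 0) (z+w) - iteratedFDeriv ℝ (l+1) (b 0) z‖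
            ≤ ‖iteratedFDeriv ℝ (l+1) (b 0) (z+w)‖ + ‖iteratedFDeriv ℝ (l+1) (b 0) z‖ :=
              norm_sub_le _ _
          _ ≤ Mb 0 + Mb 0 := add_le_add (hbj 0 (l+1) hl1k' _) (hbj 0 (l+1) hl1k' _)
          _ ≤ 2*N := by linarith [hMb0N]
      exact second_diff_bound hdiffb w hc u
    -- degenerate case h = 0
    rcases eq_or_ne h (0:X) with rfl | hh0
    · simp only [smul_zero, add_zero]
      have e : Φ l x - 2•Φ l x + Φ l x = 0 := by rw [two_smul]; abel
      rw [e, norm_zero, norm_zero, mul_zero]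
    have hd0 : (0:ℝ) < ‖h‖ := norm_pos_iff.mpr hh0
    by_cases hd1 : 1 ≤ ‖h‖
    · have h1 : ‖Φ l (x+2•h) - 2•Φ l (x+h) + Φ l x‖ ≤ 4*cs*N := by
        calc ‖Φ l (x+2•h) - 2•Φ l (x+h) + Φ l x‖
            ≤ ‖Φ l (x+2•h) - 2•Φ l (x+h)‖ + ‖Φ l x‖ := norm_add_le _ _
          _ ≤ ‖Φ l (x+2•h)‖ + ‖2•Φ l (x+h)‖ + ‖Φ l x‖ := by
              gcongr
              exact norm_sub_le _ _
          _ ≤ ‖Φ l (x+2•h)‖ + (‖Φ l (x+h)‖ + ‖Φ l (x+h)‖) + ‖Φ l x‖ := by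
              gcongr
              rw [two_smul]
              exact norm_add_le _ _
          _ ≤ cs*N + (cs*N + cs*N) + cs*N := by
              gcongr <;> exact hsup l le_rfl _
          _ = 4*cs*N := by ring
      refine h1.trans ?_
      have h3 : 4*cs ≤ C := by
        have h4 : 4*cs ≤ cZyg := by
          rw [hcZygdef]
          have p1 : 0 ≤ 4*(K*G) := by positivity
          have p2 : 0 ≤ 2*KH*(ν-1)⁻¹ := by positivity
          linarith
        have h5 : cZyg ≤ max 0 cZyg := le_max_right _ _
        rw [hCdef]; linarith
      calc 4*cs*N ≤ C*N := mul_le_mul_of_nonneg_right h3 hN.le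
        _ ≤ C*N*‖h‖ := le_mul_of_one_le_right (by positivity) hd1
    · push_neg at hd1
      obtain ⟨n, hn1, hn2⟩ := exists_dyadic ‖h‖ hd0 hd1
      have hρn : ρ^n ≤ ‖h‖ := by
        have hρe : ρ = (2:ℝ)^(-(1:ℝ)) := by
          rw [hρdef]
          congr 1
          rw [hcase]; ring
        have h1 := dyadic_bound_low hd0 1 (by norm_num) hn1
        rw [Real.rpow_one] at h1
        rwa [← hρe] at h1
      have hνn : ν^n * ‖h‖^s ≤ 2 := by
        have h1 := dyadic_bound_high hd0 s hs0.le hs1 hn2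
        rw [← hνdef] at h1
        have h2 := mul_le_mul_of_nonneg_right h1 (Real.rpow_nonneg hd0.le s)
        have h3 : 2*‖h‖^(-s) * ‖h‖^s = 2 := by
          rw [mul_assoc, ← Real.rpow_add hd0]
          norm_num
        rwa [h3] at h2
      -- telescope for second differences
      have hv : ∀ i : ℕ,
          ‖(iteratedFDeriv ℝ l (b (i+1)) (x+2•h) - 2•iteratedFDeriv ℝ l (b (i+1)) (x+h)
              + iteratedFDeriv ℝ l (b (i+1)) x) -
            (iteratedFDeriv ℝ l (b i) (x+2•h) - 2•iteratedFDeriv ℝ l (b i) (x+h)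
              + iteratedFDeriv ℝ l (b i) x)‖ ≤ (KH*N*‖h‖^s*‖h‖) * ν^i := by
        intro i
        have e : (iteratedFDeriv ℝ l (b (i+1)) (x+2•h) - 2•iteratedFDeriv ℝ l (b (i+1)) (x+h)
              + iteratedFDeriv ℝ l (b (i+1)) x) -
            (iteratedFDeriv ℝ l (b i) (x+2•h) - 2•iteratedFDeriv ℝ l (b i) (x+h)
              + iteratedFDeriv ℝ l (b i) x) =
            iteratedFDeriv ℝ l (g i) (x+2•h) - 2•iteratedFDeriv ℝ l (g i) (x+h)
              + iteratedFDeriv ℝ l (g i) x := by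
          rw [hgsub i l hlk (x+2•h), hgsub i l hlk (x+h), hgsub i l hlk x,
            two_smul, two_smul, two_smul]
          abel
        rw [e]
        exact hstepZ i x h
      have hmid : ‖iteratedFDeriv ℝ l (b n) (x+2•h) - 2•iteratedFDeriv ℝ l (b n) (x+h)
          + iteratedFDeriv ℝ l (b n) x‖ ≤
          2*N*‖h‖ + (KH*N*‖h‖^s*‖h‖) * (ν^n * (ν-1)⁻¹) := by
        have h1 := telescope_bound
          (v := fun i => iteratedFDeriv ℝ l (b i) (x+2•h) - 2•iteratedFDeriv ℝ l (b i) (x+h)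
            + iteratedFDeriv ℝ l (b i) x)
          (u := fun i => (KH*N*‖h‖^s*‖h‖) * ν^i) hv (Nat.zero_le n)
        have h2 : ∑ i ∈ Finset.Ico 0 n, (KH*N*‖h‖^s*‖h‖) * ν^i
            = (KH*N*‖h‖^s*‖h‖) * ∑ i ∈ Finset.range n, ν^i := by
          rw [← Finset.range_eq_Ico, Finset.mul_sum]
        have h3 : ∑ i ∈ Finset.range n, ν^i ≤ ν^n * (ν-1)⁻¹ := by
          rw [geom_sum_eq (ne_of_gt hν1), div_eq_mul_inv]
          apply mul_le_mul_of_nonneg_right _ (inv_nonneg.mpr (by linarith))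
          linarith [pow_pos (by linarith : (0:ℝ) < ν) n]
        have h4 : ‖iteratedFDeriv ℝ l (b n) (x+2•h) - 2•iteratedFDeriv ℝ l (b n) (x+h)
            + iteratedFDeriv ℝ l (b n) x‖ ≤
            ‖(iteratedFDeriv ℝ l (b n) (x+2•h) - 2•iteratedFDeriv ℝ l (b n) (x+h)
              + iteratedFDeriv ℝ l (b n) x) -
             (iteratedFDeriv ℝ l (b 0) (x+2•h) - 2•iteratedFDeriv ℝ l (b 0) (x+h)
              + iteratedFDeriv ℝ l (b 0) x)‖ +
            ‖iteratedFDeriv ℝ l (b 0) (x+2•h) - 2•iteratedFDeriv ℝ l (b 0) (x+h)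
              + iteratedFDeriv ℝ l (b 0) x‖ := by
          have := norm_add_le
            ((iteratedFDeriv ℝ l (b n) (x+2•h) - 2•iteratedFDeriv ℝ l (b n) (x+h)
              + iteratedFDeriv ℝ l (b n) x) -
             (iteratedFDeriv ℝ l (b 0) (x+2•h) - 2•iteratedFDeriv ℝ l (b 0) (x+h)
              + iteratedFDeriv ℝ l (b 0) x))
            (iteratedFDeriv ℝ l (b 0) (x+2•h) - 2•iteratedFDeriv ℝ l (b 0) (x+h)
              + iteratedFDeriv ℝ l (b 0) x)
          simpa using this
        refine h4.trans ?_
        have h5 := h1.trans (le_of_eq h2)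
        have h6 : (KH*N*‖h‖^s*‖h‖) * ∑ i ∈ Finset.range n, ν^i ≤
            (KH*N*‖h‖^s*‖h‖) * (ν^n * (ν-1)⁻¹) :=
          mul_le_mul_of_nonneg_left h3 (by positivity)
        have h7 := hstepZ0 x h
        linarith
      -- assemble
      have hsplit := sd_diff (Φ l) (fun z => iteratedFDeriv ℝ l (b n) z) x h
      have hT1 : ‖Φ l (x+2•h) - iteratedFDeriv ℝ l (b n) (x+2•h)‖ ≤ K*N*G*‖h‖ := by
        refine (htail l le_rfl n (x+2•h)).trans ?_
        exact mul_le_mul_of_nonneg_left hρn (by positivity)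
      have hT2 : ‖Φ l (x+h) - iteratedFDeriv ℝ l (b n) (x+h)‖ ≤ K*N*G*‖h‖ := by
        refine (htail l le_rfl n (x+h)).trans ?_
        exact mul_le_mul_of_nonneg_left hρn (by positivity)
      have hT3 : ‖Φ l x - iteratedFDeriv ℝ l (b n) x‖ ≤ K*N*G*‖h‖ := by
        refine (htail l le_rfl n x).trans ?_
        exact mul_le_mul_of_nonneg_left hρn (by positivity)
      have hT4 : (KH*N*‖h‖^s*‖h‖) * (ν^n * (ν-1)⁻¹) ≤ KH*N*(ν-1)⁻¹*(2*‖h‖) := by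
        have e : (KH*N*‖h‖^s*‖h‖) * (ν^n * (ν-1)⁻¹)
            = (KH*N*(ν-1)⁻¹*‖h‖) * (ν^n * ‖h‖^s) := by ring
        rw [e]
        have := mul_le_mul_of_nonneg_left hνn
          (by positivity : (0:ℝ) ≤ KH*N*(ν-1)⁻¹*‖h‖)
        refine this.trans (le_of_eq ?_)
        ring
      have htri : ‖Φ l (x+2•h) - 2•Φ l (x+h) + Φ l x‖ ≤
          ‖(Φ l (x+2•h) - 2•Φ l (x+h) + Φ l x) -
            (iteratedFDeriv ℝ l (b n) (x+2•h) - 2•iteratedFDeriv ℝ l (b n) (x+h)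
              + iteratedFDeriv ℝ l (b n) x)‖ +
          ‖iteratedFDeriv ℝ l (b n) (x+2•h) - 2•iteratedFDeriv ℝ l (b n) (x+h)
              + iteratedFDeriv ℝ l (b n) x‖ := by
        have := norm_add_le
          ((Φ l (x+2•h) - 2•Φ l (x+h) + Φ l x) -
            (iteratedFDeriv ℝ l (b n) (x+2•h) - 2•iteratedFDeriv ℝ l (b n) (x+h)
              + iteratedFDeriv ℝ l (b n) x))
          (iteratedFDeriv ℝ l (b n) (x+2•h) - 2•iteratedFDeriv ℝ l (b n) (x+h)
              + iteratedFDeriv ℝ l (b n) x)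
        simpa using this
      have hfin : 4*(K*N*G*‖h‖) + (2*N*‖h‖ + KH*N*(ν-1)⁻¹*(2*‖h‖)) ≤ C*N*‖h‖ := by
        have hcoef : 4*(K*G) + 2 + 2*KH*(ν-1)⁻¹ ≤ C := by
          have h4 : 4*(K*G) + 2 + 2*KH*(ν-1)⁻¹ ≤ cZyg := by
            rw [hcZygdef]; linarith
          have h5 : cZyg ≤ max 0 cZyg := le_max_right _ _
          rw [hCdef]; linarith
        have hD0 : (0:ℝ) ≤ N*‖h‖ := by positivity
        have := mul_le_mul_of_nonneg_right hcoef hD0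
        calc 4*(K*N*G*‖h‖) + (2*N*‖h‖ + KH*N*(ν-1)⁻¹*(2*‖h‖))
            = (4*(K*G) + 2 + 2*KH*(ν-1)⁻¹) * (N*‖h‖) := by ring
          _ ≤ C * (N*‖h‖) := this
          _ = C*N*‖h‖ := by ring
      linarith [htri, hsplit, hT1, hT2, hT3, hmid, hT4]



/-- The real interpolation space (C_b(X), C_b^β(X))_{γ,∞} (β = k + σ, σ ∈ (0,1])
embeds continuously into C_b^{γβ}(X) when γβ is not an integer, and into the
Zygmund space Z_b^{γβ}(X) when γβ is an integer.  Membership in the interpolation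
space with norm ≤ N is expressed through the K-functional decompositions
f = a + b, ‖a‖_∞ + ξ‖b‖_{C_b^β} ≤ N ξ^γ. -/
theorem stmt7 (β γ σ : ℝ) (k : ℕ) (hσ : σ ∈ Set.Ioc (0:ℝ) 1) (hβ : β = (k:ℝ) + σ)
    (hβpos : 0 < β) (hγ : γ ∈ Set.Ioo (0:ℝ) 1) :
    ∃ C : ℝ, 0 < C ∧
      ∀ (X : Type) [NormedAddCommGroup X] [NormedSpace ℝ X]
        (f : X → ℝ) (N : ℝ), 0 < N →
        Continuous f →
        (∀ ξ : ℝ, 0 < ξ → ∃ (a b : X → ℝ) (Ma Mb : ℝ),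
          (∀ x, f x = a x + b x) ∧ Continuous a ∧ (∀ x, |a x| ≤ Ma) ∧
          ContDiff ℝ k b ∧
          (∀ x, |b x| + ∑ j ∈ Finset.Icc 1 k, ‖iteratedFDeriv ℝ j b x‖ ≤ Mb) ∧
          (∀ x y, ‖iteratedFDeriv ℝ k b x - iteratedFDeriv ℝ k b y‖ ≤ Mb * ‖x - y‖ ^ σ) ∧
          Ma + ξ * Mb ≤ N * ξ ^ γ) →
        -- noninteger case: f ∈ C_b^{γβ}(X)
        ((∀ m : ℕ, (m:ℝ) ≠ γ * β) →
          ContDiff ℝ (⌊γ * β⌋₊) f ∧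
          (∀ x, |f x| + ∑ j ∈ Finset.Icc 1 (⌊γ * β⌋₊), ‖iteratedFDeriv ℝ j f x‖ ≤ C * N) ∧
          (∀ x y, ‖iteratedFDeriv ℝ (⌊γ * β⌋₊) f x - iteratedFDeriv ℝ (⌊γ * β⌋₊) f y‖ ≤
            C * N * ‖x - y‖ ^ (γ * β - (⌊γ * β⌋₊ : ℝ)))) ∧
        -- integer case: f ∈ Z_b^{γβ}(X)
        (∀ m : ℕ, (m:ℝ) = γ * β →
          ContDiff ℝ (m - 1) f ∧
          (∀ x, |f x| + ∑ j ∈ Finset.Icc 1 (m - 1), ‖iteratedFDeriv ℝ j f x‖ ≤ C * N) ∧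
          (∀ x h : X, ‖iteratedFDeriv ℝ (m - 1) f (x + 2 • h)
              - 2 • iteratedFDeriv ℝ (m - 1) f (x + h)
              + iteratedFDeriv ℝ (m - 1) f x‖ ≤ C * N * ‖h‖)) := by
  obtain ⟨hσ0, hσ1⟩ := hσ
  obtain ⟨hγ0, hγ1⟩ := hγ
  have hθ0 : 0 < γ * β := mul_pos hγ0 hβpos
  have hθk1 : γ * β < (k:ℝ) + 1 := by nlinarith
  by_cases hint : ∃ m : ℕ, (m:ℝ) = γ * β
  · -- integer case
    obtain ⟨m0, hm0⟩ := hint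
    have hm0pos : 1 ≤ m0 := by
      by_contra hcon
      push_neg at hcon
      have h0 : m0 = 0 := by omega
      subst h0
      simp only [Nat.cast_zero] at hm0
      linarith
    have hl1 : m0 - 1 + 1 = m0 := by omega
    have hlθ : ((m0 - 1 : ℕ):ℝ) < γ * β := by
      rw [← hm0]
      exact_mod_cast (by omega : m0 - 1 < m0)
    have hlk : m0 - 1 ≤ k := by
      have h1 : (m0:ℝ) < ((k+1:ℕ):ℝ) := by rw [hm0]; push_cast; exact hθk1
      have h2 : m0 < k + 1 := by exact_mod_cast h1
      omega
    obtain ⟨C, hC, hmain⟩ := master β γ σ k hσ0 hσ1 hβ hβpos hγ0 hγ1 (m0 - 1) hlθ hlk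
    refine ⟨((k:ℝ)+1)*C, by positivity, ?_⟩
    intro X _ _ f N hN hfc hyp
    obtain ⟨hCD, hbound, hHol, hZyg⟩ := hmain X f N hN hfc hyp
    constructor
    · intro hnint
      exact absurd hm0 (hnint m0)
    · intro m hm
      have hmm : m = m0 := by
        have h : (m:ℝ) = (m0:ℝ) := by rw [hm, hm0]
        exact_mod_cast h
      subst hmm
      refine ⟨hCD, ?_, ?_⟩
      · intro x
        have h0 : |f x| ≤ C*N := by
          have := hbound 0 (Nat.zero_le _) x
          rwa [norm_iteratedFDeriv_zero, Real.norm_eq_abs] at this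
        have h1 : ∑ j ∈ Finset.Icc 1 (m - 1), ‖iteratedFDeriv ℝ j f x‖ ≤
            ∑ _j ∈ Finset.Icc 1 (m - 1), C*N := by
          apply Finset.sum_le_sum
          intro j hj
          exact hbound j (Finset.mem_Icc.mp hj).2 x
        have h2 : ∑ _j ∈ Finset.Icc 1 (m - 1), C*N = ((m - 1 : ℕ):ℝ) * (C*N) := by
          rw [Finset.sum_const, Nat.card_Icc, nsmul_eq_mul]
          norm_num
        have h3 : ((m - 1:ℕ):ℝ) ≤ (k:ℝ) := by exact_mod_cast hlk
        have hCN : 0 ≤ C*N := by positivity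
        calc |f x| + ∑ j ∈ Finset.Icc 1 (m - 1), ‖iteratedFDeriv ℝ j f x‖
            ≤ C*N + ((m - 1:ℕ):ℝ) * (C*N) := by
              rw [← h2]; exact add_le_add h0 h1
          _ ≤ C*N + (k:ℝ)*(C*N) := by nlinarith
          _ = ((k:ℝ)+1)*C*N := by ring
      · intro x h2
        have hcond : γ * β = ((m - 1:ℕ):ℝ) + 1 := by
          rw [← hm]
          have : ((m - 1:ℕ):ℝ) + 1 = ((m - 1 + 1 : ℕ):ℝ) := by push_cast; ring
          rw [this, hl1]
        refine (hZyg hcond x h2).trans ?_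
        have hh0 : (0:ℝ) ≤ ‖h2‖ := norm_nonneg _
        nlinarith [mul_nonneg (mul_nonneg hC.le hN.le) hh0,
          mul_nonneg (Nat.cast_nonneg k : (0:ℝ) ≤ k)
            (mul_nonneg (mul_nonneg hC.le hN.le) hh0)]
  · -- noninteger case
    push_neg at hint
    have hlθ : ((⌊γ * β⌋₊ : ℕ):ℝ) < γ * β :=
      lt_of_le_of_ne (Nat.floor_le hθ0.le) (hint _)
    have hlk : ⌊γ * β⌋₊ ≤ k := by
      have h1 : ⌊γ * β⌋₊ < k + 1 :=
        (Nat.floor_lt hθ0.le).mpr (by exact_mod_cast hθk1)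
      omega
    obtain ⟨C, hC, hmain⟩ := master β γ σ k hσ0 hσ1 hβ hβpos hγ0 hγ1 ⌊γ * β⌋₊ hlθ hlk
    refine ⟨((k:ℝ)+1)*C, by positivity, ?_⟩
    intro X _ _ f N hN hfc hyp
    obtain ⟨hCD, hbound, hHol, hZyg⟩ := hmain X f N hN hfc hyp
    constructor
    · intro _
      refine ⟨hCD, ?_, ?_⟩
      · intro x
        have h0 : |f x| ≤ C*N := by
          have := hbound 0 (Nat.zero_le _) x
          rwa [norm_iteratedFDeriv_zero, Real.norm_eq_abs] at this
        have h1 : ∑ j ∈ Finset.Icc 1 ⌊γ * β⌋₊, ‖iteratedFDeriv ℝ j f x‖ ≤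
            ∑ _j ∈ Finset.Icc 1 ⌊γ * β⌋₊, C*N := by
          apply Finset.sum_le_sum
          intro j hj
          exact hbound j (Finset.mem_Icc.mp hj).2 x
        have h2 : ∑ _j ∈ Finset.Icc 1 ⌊γ * β⌋₊, C*N = ((⌊γ * β⌋₊:ℕ):ℝ) * (C*N) := by
          rw [Finset.sum_const, Nat.card_Icc, nsmul_eq_mul]
          norm_num
        have h3 : ((⌊γ * β⌋₊:ℕ):ℝ) ≤ (k:ℝ) := by exact_mod_cast hlk
        have hCN : 0 ≤ C*N := by positivity
        calc |f x| + ∑ j ∈ Finset.Icc 1 ⌊γ * β⌋₊, ‖iteratedFDeriv ℝ j f x‖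
            ≤ C*N + ((⌊γ * β⌋₊:ℕ):ℝ) * (C*N) := by
              rw [← h2]; exact add_le_add h0 h1
          _ ≤ C*N + (k:ℝ)*(C*N) := by nlinarith
          _ = ((k:ℝ)+1)*C*N := by ring
      · intro x y
        have hcond : γ * β < ((⌊γ * β⌋₊:ℕ):ℝ) + 1 := Nat.lt_floor_add_one _
        refine (hHol hcond x y).trans ?_
        have hh0 : (0:ℝ) ≤ ‖x - y‖ ^ (γ * β - (⌊γ * β⌋₊:ℝ)) :=
          Real.rpow_nonneg (norm_nonneg _) _
        nlinarith [mul_nonneg (mul_nonneg hC.le hN.le) hh0,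
          mul_nonneg (Nat.cast_nonneg k : (0:ℝ) ≤ k)
            (mul_nonneg (mul_nonneg hC.le hN.le) hh0)]
    · intro m hm
      exact absurd hm (hint m)
end

section
/- Let P_t be a semigroup on C_b(X) with ‖P_t‖ ≤ M for all t (β ≤ 0 case), (t,x) ↦ P_t f(x) continuous, and generator L. For f ∈ C_b(X) and α ∈ (0,1), if sup_{t>0} t^{−α}‖P_t f − f‖_∞ < ∞ then sup_{λ>0} ‖λ^α L R(λ,L) f‖_∞ ≤ Γ(α+1) · sup_{t>0} t^{−α}‖P_t f − f‖_∞. -/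
open MeasureTheory Set BoundedContinuousFunction Real

/-!
Since `l ∫₀^∞ e^{-lt} dt = 1`, we have `l R(l) f - f = l ∫₀^∞ e^{-lt} (P_t f - f) dt`, so the
Hölder bound `‖P_t f - f‖ ≤ K t^α` gives `‖l R(l) f - f‖ ≤ l K ∫₀^∞ t^α e^{-lt} dt = Γ(α+1) K / l^α`.
The estimate is proved pointwise in `x`, where it is a statement about a scalar Laplace transform.
-/

lemma integral_rpow_mul_exp_neg_mul_Ioi_of_neg_one_lt {α l : ℝ} (hα : -1 < α) (hl : 0 < l) :
    ∫ t in Ioi (0 : ℝ), t ^ α * exp (-l * t) = Gamma (α + 1) / l ^ (α + 1) := by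
  have := integral_rpow_mul_exp_neg_mul_Ioi (a := α + 1) (by linarith) hl
  simp only [add_sub_cancel_right, one_div, inv_rpow hl.le] at this
  simp only [neg_mul, this, div_eq_inv_mul]

lemma integrableOn_exp_neg_mul_mul {h : ℝ → ℝ} {C l : ℝ} (hl : 0 < l)
    (hh : ContinuousOn h (Ioi 0)) (hC : ∀ t, 0 < t → |h t| ≤ C) :
    IntegrableOn (fun t => exp (-l * t) * h t) (Ioi 0) :=
  (exp_neg_integrableOn_Ioi 0 hl).mul_bdd (hh.aestronglyMeasurable measurableSet_Ioi)
    ((ae_restrict_iff' measurableSet_Ioi).2 (Filter.Eventually.of_forall hC))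

lemma abs_mul_integral_exp_neg_mul_sub_le {g : ℝ → ℝ} {c K α l : ℝ} (hα : -1 < α) (hl : 0 < l)
    (hg : IntegrableOn (fun t => exp (-l * t) * g t) (Ioi 0))
    (hK : ∀ t, 0 < t → |g t - c| ≤ K * t ^ α) :
    |l * (∫ t in Ioi (0 : ℝ), exp (-l * t) * g t) - c| ≤ Gamma (α + 1) * K / l ^ α := by
  have hexp : IntegrableOn (fun t => exp (-l * t)) (Ioi 0) := exp_neg_integrableOn_Ioi 0 hl
  have hmass : ∫ t in Ioi (0 : ℝ), exp (-l * t) = 1 / l := by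
    rw [integral_exp_mul_Ioi (neg_neg_of_pos hl)]
    simp
  have hmoment := integral_rpow_mul_exp_neg_mul_Ioi_of_neg_one_lt hα hl
  have hmoment_int : IntegrableOn (fun t => t ^ α * exp (-l * t)) (Ioi 0) := by
    refine Integrable.of_integral_ne_zero ?_
    rw [hmoment]
    exact (div_pos (Gamma_pos_of_pos (by linarith)) (rpow_pos_of_pos hl _)).ne'
  have hcentered : l * (∫ t in Ioi (0 : ℝ), exp (-l * t) * g t) - c
      = l * ∫ t in Ioi (0 : ℝ), exp (-l * t) * (g t - c) := by
    simp only [mul_sub, integral_sub hg (hexp.mul_const c), integral_mul_const, hmass]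
    field_simp
  rw [hcentered, abs_mul, abs_of_pos hl, ← norm_eq_abs]
  calc l * ‖∫ t in Ioi (0 : ℝ), exp (-l * t) * (g t - c)‖
      ≤ l * ∫ t in Ioi (0 : ℝ), K * (t ^ α * exp (-l * t)) := by
        refine mul_le_mul_of_nonneg_left (norm_integral_le_of_norm_le
          (hmoment_int.const_mul K) ?_) hl.le
        filter_upwards [self_mem_ae_restrict measurableSet_Ioi] with t ht
        have := mul_le_mul_of_nonneg_left (hK t ht) (exp_pos (-l * t)).le
        rw [norm_mul, norm_of_nonneg (exp_pos _).le, norm_eq_abs]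
        linarith
    _ = Gamma (α + 1) * K / l ^ α := by
        rw [integral_const_mul, hmoment, rpow_add_one hl.ne']
        field_simp

theorem stmt12_general (X : Type) [NormedAddCommGroup X] [NormedSpace ℝ X]
    (P : ℝ → (X →ᵇ ℝ) →L[ℝ] (X →ᵇ ℝ)) (M : ℝ)
    (hbound : ∀ t : ℝ, 0 ≤ t → ‖P t‖ ≤ M)
    (hcont : ∀ f : X →ᵇ ℝ,
      ContinuousOn (fun p : ℝ × X => P p.1 f p.2) (Set.Ici 0 ×ˢ Set.univ))
    (L : (X →ᵇ ℝ) → (X →ᵇ ℝ))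
    (R : ℝ → (X →ᵇ ℝ) →L[ℝ] (X →ᵇ ℝ))
    (hR : ∀ l : ℝ, 0 < l → ∀ f : X →ᵇ ℝ, ∀ x : X,
      R l f x = ∫ t in Set.Ioi (0:ℝ), Real.exp (-l * t) * P t f x)
    (α : ℝ) (hα : α ∈ Set.Ioo (0:ℝ) 1) (f : X →ᵇ ℝ) (K : ℝ)
    (hK : ∀ t : ℝ, 0 < t → ‖P t f - f‖ ≤ K * t ^ α) :
    ∀ l : ℝ, 0 < l → l ^ α * ‖l • R l f - f‖ ≤ Real.Gamma (α + 1) * K := by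
  intro l hl
  rw [← le_div_iff₀' (rpow_pos_of_pos hl α), norm_le_of_nonempty]
  intro x
  have hcont_x : ContinuousOn (fun t => P t f x) (Ioi 0) :=
    ((hcont f).comp (continuous_id.prodMk continuous_const).continuousOn
      fun _ ht => ⟨ht, mem_univ x⟩).mono Ioi_subset_Ici_self
  have hbound_x : ∀ t, 0 < t → |P t f x| ≤ M * ‖f‖ := fun t ht =>
    ((P t f).norm_coe_le_norm x).trans
      (((P t).le_opNorm f).trans (mul_le_mul_of_nonneg_right (hbound t ht.le) (norm_nonneg f)))
  have hK_x : ∀ t, 0 < t → |P t f x - f x| ≤ K * t ^ α := fun t ht =>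
    ((P t f - f).norm_coe_le_norm x).trans (hK t ht)
  have hscalar := abs_mul_integral_exp_neg_mul_sub_le (by linarith [hα.1]) hl
    (integrableOn_exp_neg_mul_mul hl hcont_x hbound_x) hK_x
  simpa [hR l hl f x] using hscalar

/-- For a bounded semigroup P_t on C_b(X) (case β ≤ 0 : ‖P_t‖ ≤ M) with generator L:
if sup_{t>0} t^{-α}‖P_t f − f‖_∞ ≤ K then for every λ > 0,
‖λ^α L R(λ,L) f‖_∞ = λ^α ‖λR(λ,L)f − f‖_∞ ≤ Γ(α+1) K. -/
theorem stmt12 (X : Type) [NormedAddCommGroup X] [NormedSpace ℝ X]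
    (P : ℝ → (X →ᵇ ℝ) →L[ℝ] (X →ᵇ ℝ)) (M : ℝ) (hM : 0 < M)
    (hP0 : P 0 = ContinuousLinearMap.id ℝ (X →ᵇ ℝ))
    (hsem : ∀ s t : ℝ, 0 ≤ s → 0 ≤ t → P (s + t) = (P s).comp (P t))
    (hbound : ∀ t : ℝ, 0 ≤ t → ‖P t‖ ≤ M)
    (hcont : ∀ f : X →ᵇ ℝ,
      ContinuousOn (fun p : ℝ × X => P p.1 f p.2) (Set.Ici 0 ×ˢ Set.univ))
    (D : Set (X →ᵇ ℝ)) (L : (X →ᵇ ℝ) → (X →ᵇ ℝ))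
    (R : ℝ → (X →ᵇ ℝ) →L[ℝ] (X →ᵇ ℝ))
    (hR : ∀ l : ℝ, 0 < l → ∀ f : X →ᵇ ℝ, ∀ x : X,
      R l f x = ∫ t in Set.Ioi (0:ℝ), Real.exp (-l * t) * P t f x)
    (hRD : ∀ l : ℝ, 0 < l → ∀ f : X →ᵇ ℝ, R l f ∈ D ∧ l • R l f - L (R l f) = f)
    (hLR : ∀ l : ℝ, 0 < l → ∀ g ∈ D, R l (l • g - L g) = g)
    (α : ℝ) (hα : α ∈ Set.Ioo (0:ℝ) 1) (f : X →ᵇ ℝ) (K : ℝ)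
    (hK : ∀ t : ℝ, 0 < t → ‖P t f - f‖ ≤ K * t ^ α) :
    ∀ l : ℝ, 0 < l → l ^ α * ‖l • R l f - f‖ ≤ Real.Gamma (α + 1) * K :=
  stmt12_general X P M hbound hcont L R hR α hα f K hK
end

section
/- Let P_t be a semigroup on C_b(X), bounded uniformly in t, with generator L, such that: (i) t ↦ P_t f(x) is differentiable with derivative P_t L f(x) for f ∈ D(L); (ii) P_s commutes with L on D(L). Then for f ∈ D(L) with Lf in the closure of D(L), the function t ↦ P_t f belongs to C^1([0,∞); C_b(X)) with derivative P_t L f; conversely, if t ↦ P_t f is continuously differentiable from [0,∞) to C_b(X), then f ∈ D(L) and Lf lies in the closure of D(L). -/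
open MeasureTheory Set Filter Topology BoundedContinuousFunction

private lemma aux_tendsto_Ici {E : Type*} [NormedAddCommGroup E] [NormedSpace ℝ E]
    (P : ℝ → E →L[ℝ] E) (hP0 : P 0 = ContinuousLinearMap.id ℝ E)
    (g : E) (h0 : Tendsto (fun t : ℝ => P t g) (𝓝[>] (0:ℝ)) (𝓝 g)) :
    Tendsto (fun t : ℝ => P t g) (𝓝[Set.Ici (0:ℝ)] 0) (𝓝 g) := by
  rw [← Set.Ioi_union_left, nhdsWithin_union, tendsto_sup]
  refine ⟨h0, ?_⟩
  rw [nhdsWithin_singleton]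
  have h1 : P 0 g = g := by simp [hP0]
  simpa [h1] using tendsto_pure_nhds (fun t : ℝ => P t g) 0

private lemma aux_strongCont {E : Type*} [NormedAddCommGroup E] [NormedSpace ℝ E]
    (P : ℝ → E →L[ℝ] E) (M w : ℝ) (hM : 0 < M)
    (hP0 : P 0 = ContinuousLinearMap.id ℝ E)
    (hsem : ∀ s t : ℝ, 0 ≤ s → 0 ≤ t → P (s + t) = (P s).comp (P t))
    (hbound : ∀ t : ℝ, 0 ≤ t → ‖P t‖ ≤ M * Real.exp (w * t))
    (g : E) (h0 : Tendsto (fun t : ℝ => P t g) (𝓝[>] (0:ℝ)) (𝓝 g)) :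
    ContinuousOn (fun t : ℝ => P t g) (Set.Ici 0) := by
  have h0' := aux_tendsto_Ici P hP0 g h0
  intro t ht
  have hleft : Tendsto (fun y : ℝ => P y g) (𝓝[Set.Icc 0 t] t) (𝓝 (P t g)) := by
    rw [tendsto_iff_norm_sub_tendsto_zero]
    have hmap : Tendsto (fun y : ℝ => t - y) (𝓝[Set.Icc 0 t] t) (𝓝[Set.Ici 0] 0) := by
      apply tendsto_nhdsWithin_of_tendsto_nhds_of_eventually_within
      · have h2 : Tendsto (fun y : ℝ => t - y) (𝓝 t) (𝓝 (t - t)) :=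
          tendsto_const_nhds.sub tendsto_id
        simpa using h2.mono_left nhdsWithin_le_nhds
      · filter_upwards [self_mem_nhdsWithin] with y hy
        exact sub_nonneg.2 hy.2
    have hPt : Tendsto (fun y : ℝ => ‖P (t - y) g - g‖) (𝓝[Set.Icc 0 t] t) (𝓝 0) :=
      tendsto_iff_norm_sub_tendsto_zero.1 (h0'.comp hmap)
    have hlim : Tendsto (fun y : ℝ => M * Real.exp (|w| * t) * ‖P (t - y) g - g‖)
        (𝓝[Set.Icc 0 t] t) (𝓝 0) := by
      simpa using hPt.const_mul (M * Real.exp (|w| * t))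
    apply squeeze_zero' ?_ ?_ hlim
    · filter_upwards with y; positivity
    · filter_upwards [self_mem_nhdsWithin] with y hy
      obtain ⟨hy0, hyt⟩ := hy
      have hsem' : P t = (P y).comp (P (t - y)) := by
        have h3 := hsem y (t - y) hy0 (sub_nonneg.2 hyt)
        rwa [show y + (t - y) = t by ring] at h3
      have heq : P y g - P t g = P y (g - P (t - y) g) := by
        rw [hsem']; simp
      rw [heq]
      calc ‖P y (g - P (t - y) g)‖ ≤ ‖P y‖ * ‖g - P (t - y) g‖ := (P y).le_opNorm _
        _ ≤ M * Real.exp (|w| * t) * ‖P (t - y) g - g‖ := by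
            rw [norm_sub_rev g]
            apply mul_le_mul_of_nonneg_right _ (norm_nonneg _)
            calc ‖P y‖ ≤ M * Real.exp (w * y) := hbound y hy0
              _ ≤ M * Real.exp (|w| * t) := by
                  apply mul_le_mul_of_nonneg_left _ hM.le
                  apply Real.exp_le_exp.2
                  calc w * y ≤ |w| * y := mul_le_mul_of_nonneg_right (le_abs_self w) hy0
                    _ ≤ |w| * t := mul_le_mul_of_nonneg_left hyt (abs_nonneg w)
  have hright : Tendsto (fun y : ℝ => P y g) (𝓝[Set.Ici t] t) (𝓝 (P t g)) := by
    rw [tendsto_iff_norm_sub_tendsto_zero]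
    have hmap : Tendsto (fun y : ℝ => y - t) (𝓝[Set.Ici t] t) (𝓝[Set.Ici 0] 0) := by
      apply tendsto_nhdsWithin_of_tendsto_nhds_of_eventually_within
      · have h2 : Tendsto (fun y : ℝ => y - t) (𝓝 t) (𝓝 (t - t)) :=
          tendsto_id.sub tendsto_const_nhds
        simpa using h2.mono_left nhdsWithin_le_nhds
      · filter_upwards [self_mem_nhdsWithin] with y hy
        exact sub_nonneg.2 (Set.mem_Ici.1 hy)
    have hPt : Tendsto (fun y : ℝ => ‖P (y - t) g - g‖) (𝓝[Set.Ici t] t) (𝓝 0) :=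
      tendsto_iff_norm_sub_tendsto_zero.1 (h0'.comp hmap)
    have hlim : Tendsto (fun y : ℝ => ‖P t‖ * ‖P (y - t) g - g‖)
        (𝓝[Set.Ici t] t) (𝓝 0) := by
      simpa using hPt.const_mul ‖P t‖
    apply squeeze_zero' ?_ ?_ hlim
    · filter_upwards with y; positivity
    · filter_upwards [self_mem_nhdsWithin] with y hy
      have hsem' : P y = (P t).comp (P (y - t)) := by
        have h3 := hsem t (y - t) ht (sub_nonneg.2 hy)
        rwa [show t + (y - t) = y by ring] at h3
      have heq : P y g - P t g = P t (P (y - t) g - g) := by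
        rw [hsem']; simp
      rw [heq]
      exact (P t).le_opNorm _
  have hu : ContinuousWithinAt (fun y : ℝ => P y g) (Set.Icc 0 t ∪ Set.Ici t) t :=
    ContinuousWithinAt.union hleft hright
  exact hu.mono fun y hy => (le_total y t).elim (fun h => Or.inl ⟨hy, h⟩) fun h => Or.inr h


/-- For a semigroup P_t on C_b(X) with generator L (defined via the resolvent),
such that t ↦ P_t g(x) is differentiable with derivative P_t L g(x) for g ∈ D(L),
and P_s commutes with L on D(L):
t ↦ P_t f belongs to C¹([0,∞); C_b(X)) (with derivative P_t L f) if and only if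
f ∈ D(L) and L f ∈ closure D(L). -/
theorem stmt14 (X : Type) [NormedAddCommGroup X] [NormedSpace ℝ X]
    (P : ℝ → (X →ᵇ ℝ) →L[ℝ] (X →ᵇ ℝ)) (M w : ℝ) (hM : 0 < M)
    (hP0 : P 0 = ContinuousLinearMap.id ℝ (X →ᵇ ℝ))
    (hsem : ∀ s t : ℝ, 0 ≤ s → 0 ≤ t → P (s + t) = (P s).comp (P t))
    (hbound : ∀ t : ℝ, 0 ≤ t → ‖P t‖ ≤ M * Real.exp (w * t))
    (hcont : ∀ f : X →ᵇ ℝ,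
      ContinuousOn (fun p : ℝ × X => P p.1 f p.2) (Set.Ici 0 ×ˢ Set.univ))
    (D : Set (X →ᵇ ℝ)) (L : (X →ᵇ ℝ) → (X →ᵇ ℝ))
    (R : ℝ → (X →ᵇ ℝ) →L[ℝ] (X →ᵇ ℝ))
    (hR : ∀ l : ℝ, w < l → ∀ f : X →ᵇ ℝ, ∀ x : X,
      R l f x = ∫ t in Set.Ioi (0:ℝ), Real.exp (-l * t) * P t f x)
    (hRD : ∀ l : ℝ, w < l → ∀ f : X →ᵇ ℝ, R l f ∈ D ∧ l • R l f - L (R l f) = f)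
    (hLR : ∀ l : ℝ, w < l → ∀ g ∈ D, R l (l • g - L g) = g)
    -- (i) pointwise differentiability with derivative P_t L g
    (hdiff : ∀ g ∈ D, ∀ x : X, ∀ t : ℝ, 0 ≤ t →
      HasDerivWithinAt (fun s : ℝ => P s g x) (P t (L g) x) (Set.Ici 0) t)
    -- (ii) P_s commutes with L on D(L)
    (hcomm : ∀ s : ℝ, 0 ≤ s → ∀ g ∈ D, P s g ∈ D ∧ L (P s g) = P s (L g))
    -- strong continuity at 0 characterizes the closure of D(L)
    (hclos : ∀ g : X →ᵇ ℝ,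
      Tendsto (fun t : ℝ => P t g) (𝓝[>] (0:ℝ)) (𝓝 g) ↔ g ∈ closure D) :
    ∀ f : X →ᵇ ℝ,
      ((f ∈ D ∧ L f ∈ closure D) →
        (∀ t : ℝ, 0 ≤ t →
          HasDerivWithinAt (fun s : ℝ => P s f) (P t (L f)) (Set.Ici 0) t) ∧
        ContinuousOn (fun t : ℝ => P t (L f)) (Set.Ici 0)) ∧
      ((∃ g : ℝ → (X →ᵇ ℝ), ContinuousOn g (Set.Ici 0) ∧
          ∀ t : ℝ, 0 ≤ t →
            HasDerivWithinAt (fun s : ℝ => P s f) (g t) (Set.Ici 0) t) →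
        f ∈ D ∧ L f ∈ closure D) := by
  intro f
  constructor
  · rintro ⟨hf, hLf⟩
    have hcLf : ContinuousOn (fun t : ℝ => P t (L f)) (Set.Ici 0) :=
      aux_strongCont P M w hM hP0 hsem hbound (L f) ((hclos (L f)).2 hLf)
    refine ⟨?_, hcLf⟩
    intro t ht
    rw [hasDerivWithinAt_iff_isLittleO, Asymptotics.isLittleO_iff]
    intro c hc
    have hct := hcLf t ht
    rw [Metric.continuousWithinAt_iff] at hct
    obtain ⟨δ, hδ, hδ'⟩ := hct c hc
    have hev1 : ∀ᶠ y in 𝓝[Set.Ici 0] t, dist y t < δ :=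
      eventually_nhdsWithin_of_eventually_nhds
        (by filter_upwards [Metric.ball_mem_nhds t hδ] with y hy using hy)
    filter_upwards [hev1, eventually_mem_nhdsWithin] with y hyd hy0
    set a := min t y with ha
    set b := max t y with hb
    have ha0 : (0:ℝ) ≤ a := le_min ht hy0
    have hab : a ≤ b := min_le_max
    have hIcc : Set.Icc a b ⊆ Set.Ici (0:ℝ) := fun s hs => le_trans ha0 hs.1
    have hba : b - a = |y - t| := by rw [ha, hb, max_sub_min_eq_abs, abs_sub_comm]
    have htmem : t ∈ Set.Icc a b := ⟨min_le_left t y, le_max_left t y⟩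
    have key : ∀ x : X, ‖(P y f - P t f - (y - t) • P t (L f)) x‖ ≤ c * ‖y - t‖ := by
      intro x
      have hder : ∀ s ∈ Set.Icc a b,
          HasDerivWithinAt (fun s : ℝ => P s f x - s * (P t (L f) x))
            (P s (L f) x - P t (L f) x) (Set.Icc a b) s := by
        intro s hs
        exact ((hdiff f hf x s (hIcc hs)).mono hIcc).sub
          (hasDerivAt_mul_const (P t (L f) x)).hasDerivWithinAt
      have hbd : ∀ s ∈ Set.Ico a b, ‖P s (L f) x - P t (L f) x‖ ≤ c := by
        intro s hs
        have hs' : s ∈ Set.Icc a b := ⟨hs.1, le_of_lt hs.2⟩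
        have hst : dist s t < δ := by
          rw [Real.dist_eq]
          have h1 : |s - t| ≤ b - a := by
            rw [abs_sub_le_iff]
            exact ⟨by linarith [hs'.2, htmem.1], by linarith [hs'.1, htmem.2]⟩
          calc |s - t| ≤ b - a := h1
            _ = |y - t| := hba
            _ < δ := by rwa [Real.dist_eq] at hyd
        have h2 := hδ' (hIcc hs') hst
        rw [dist_eq_norm] at h2
        have hx : ‖(P s (L f) - P t (L f)) x‖ ≤ ‖P s (L f) - P t (L f)‖ :=
          BoundedContinuousFunction.norm_coe_le_norm _ x
        simp only [BoundedContinuousFunction.coe_sub, Pi.sub_apply] at hx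
        exact le_of_lt (lt_of_le_of_lt hx h2)
      have hmvt := norm_image_sub_le_of_norm_deriv_le_segment' hder hbd b (right_mem_Icc.2 hab)
      have hgoal : ‖P y f x - P t f x - (y - t) * (P t (L f) x)‖ ≤ c * |y - t| := by
        rcases le_total t y with h | h
        · have hat : a = t := min_eq_left h
          have hby : b = y := max_eq_right h
          rw [hat, hby] at hmvt
          have he : (P y f x - y * (P t (L f) x)) - (P t f x - t * (P t (L f) x))
              = P y f x - P t f x - (y - t) * (P t (L f) x) := by ring
          rw [he] at hmvt
          rwa [abs_of_nonneg (sub_nonneg.2 h)]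
        · have hat : a = y := min_eq_right h
          have hbt : b = t := max_eq_left h
          rw [hat, hbt] at hmvt
          have he : (P t f x - t * (P t (L f) x)) - (P y f x - y * (P t (L f) x))
              = -(P y f x - P t f x - (y - t) * (P t (L f) x)) := by ring
          rw [he, norm_neg] at hmvt
          have habs : |y - t| = t - y := by
            rw [abs_sub_comm]; exact abs_of_nonneg (sub_nonneg.2 h)
          rwa [habs]
      calc ‖(P y f - P t f - (y - t) • P t (L f)) x‖
          = ‖P y f x - P t f x - (y - t) * (P t (L f) x)‖ := by
            simp [smul_eq_mul]
        _ ≤ c * |y - t| := hgoal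
        _ = c * ‖y - t‖ := by rw [Real.norm_eq_abs]
    exact (BoundedContinuousFunction.norm_le (mul_nonneg hc.le (norm_nonneg _))).2 key
  · rintro ⟨g, hg, hd⟩
    have hwl : w < w + 1 := lt_add_one w
    set l : ℝ := w + 1 with hldef
    -- Step 1: g t = P t (g 0) for t ≥ 0
    have hgt : ∀ t : ℝ, 0 ≤ t → g t = P t (g 0) := by
      intro t ht
      have h1 : HasDerivWithinAt (fun s : ℝ => P s f) (g t) (Set.Ici t) t :=
        (hd t ht).mono (Set.Ici_subset_Ici.2 ht)
      have h2 : HasDerivWithinAt (fun s : ℝ => P s f) (P t (g 0)) (Set.Ici t) t := by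
        have hb : HasDerivWithinAt (fun h : ℝ => P t (P h f)) (P t (g 0)) (Set.Ici 0) 0 :=
          (P t).hasFDerivAt.comp_hasDerivWithinAt 0 (hd 0 le_rfl)
        have hb' : HasDerivWithinAt (fun h : ℝ => P (t + h) f) (P t (g 0)) (Set.Ici 0) 0 := by
          apply hb.congr
          · intro s hs
            rw [hsem t s ht hs]; rfl
          · rw [hsem t 0 ht le_rfl]; rfl
        have hinner : HasDerivWithinAt (fun s : ℝ => s - t) 1 (Set.Ici t) t := by
          simpa using ((hasDerivAt_id t).sub_const t).hasDerivWithinAt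
        have hcomp := HasDerivWithinAt.scomp t (h := fun s : ℝ => s - t) (by simpa using hb' : HasDerivWithinAt (fun h : ℝ => P (t + h) f) (P t (g 0)) (Set.Ici 0) (t - t)) hinner
          (fun s hs => Set.mem_Ici.2 (sub_nonneg.2 (Set.mem_Ici.1 hs)))
        simp only [one_smul] at hcomp
        apply hcomp.congr
        · intro s _
          show P s f = P (t + (s - t)) f
          rw [show t + (s - t) = s from by ring]
        · show P t f = P (t + (t - t)) f
          rw [show t + (t - t) = t from by ring]
      have hU : UniqueDiffWithinAt ℝ (Set.Ici t) t := uniqueDiffOn_Ici t t Set.self_mem_Ici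
      exact (h1.derivWithin hU).symm.trans (h2.derivWithin hU)
    -- continuity in t of evaluations
    have contx : ∀ (h : X →ᵇ ℝ) (x : X), ContinuousOn (fun t : ℝ => P t h x) (Set.Ici 0) := by
      intro h x
      exact (hcont h).comp ((continuous_id.prodMk continuous_const).continuousOn)
        (fun t ht => ⟨ht, Set.mem_univ x⟩)
    -- integrability
    have hexp : IntegrableOn (fun t : ℝ => Real.exp (-(l - w) * t)) (Set.Ioi 0) :=
      exp_neg_integrableOn_Ioi 0 (by simp [hldef])
    have hptbd : ∀ (h : X →ᵇ ℝ) (x : X) (t : ℝ), 0 ≤ t →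
        ‖Real.exp (-l * t) * P t h x‖ ≤ M * ‖h‖ * Real.exp (-(l - w) * t) := by
      intro h x t ht0
      have h1 : ‖P t h x‖ ≤ M * Real.exp (w * t) * ‖h‖ := by
        calc ‖P t h x‖ ≤ ‖P t h‖ := BoundedContinuousFunction.norm_coe_le_norm _ x
          _ ≤ ‖P t‖ * ‖h‖ := (P t).le_opNorm h
          _ ≤ M * Real.exp (w * t) * ‖h‖ :=
              mul_le_mul_of_nonneg_right (hbound t ht0) (norm_nonneg h)
      have h2 : ‖Real.exp (-l * t) * P t h x‖ = Real.exp (-l * t) * ‖P t h x‖ := by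
        rw [norm_mul, Real.norm_eq_abs, abs_of_pos (Real.exp_pos _)]
      rw [h2]
      calc Real.exp (-l * t) * ‖P t h x‖
          ≤ Real.exp (-l * t) * (M * Real.exp (w * t) * ‖h‖) :=
            mul_le_mul_of_nonneg_left h1 (Real.exp_pos _).le
        _ = M * ‖h‖ * Real.exp (-(l - w) * t) := by
            rw [show -(l - w) * t = -l * t + w * t from by ring, Real.exp_add]; ring
    have intgr : ∀ (h : X →ᵇ ℝ) (x : X),
        IntegrableOn (fun t : ℝ => Real.exp (-l * t) * P t h x) (Set.Ioi 0) := by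
      intro h x
      apply Integrable.mono' (hexp.const_mul (M * ‖h‖))
      · apply ContinuousOn.aestronglyMeasurable _ measurableSet_Ioi
        exact ((Real.continuous_exp.comp (continuous_const.mul continuous_id)).continuousOn).mul
          ((contx h x).mono Set.Ioi_subset_Ici_self)
      · filter_upwards [ae_restrict_mem measurableSet_Ioi] with t ht
        exact hptbd h x t (le_of_lt ht)
    -- key integral identity
    have hkey : ∀ x : X, (∫ t in Set.Ioi (0:ℝ), Real.exp (-l * t) * P t (g 0) x)
        = l * (∫ t in Set.Ioi (0:ℝ), Real.exp (-l * t) * P t f x) - f x := by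
      intro x
      have hderF : ∀ t : ℝ, 0 ≤ t →
          HasDerivWithinAt (fun s : ℝ => Real.exp (-l * s) * P s f x)
            (Real.exp (-l * t) * P t (g 0) x - l * (Real.exp (-l * t) * P t f x))
            (Set.Ici 0) t := by
        intro t ht
        have h1 : HasDerivWithinAt (fun s : ℝ => P s f x) (P t (g 0) x) (Set.Ici 0) t := by
          have h1a := (BoundedContinuousFunction.evalCLM (𝕜 := ℝ) x).hasFDerivAt.comp_hasDerivWithinAt
            t (hd t ht)
          rw [hgt t ht] at h1a
          exact h1a
        have h2 : HasDerivAt (fun s : ℝ => Real.exp (-l * s)) (Real.exp (-l * t) * -l) t := by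
          simpa using ((hasDerivAt_id t).const_mul (-l)).exp
        have h3 := h2.hasDerivWithinAt.mul h1
        exact h3.congr_deriv (by ring)
      have hFTC : ∀ T : ℝ, 0 ≤ T →
          (∫ s in (0:ℝ)..T, (Real.exp (-l * s) * P s (g 0) x
              - l * (Real.exp (-l * s) * P s f x)))
            = Real.exp (-l * T) * P T f x - f x := by
        intro T hT
        have hcontF : ContinuousOn (fun s : ℝ => Real.exp (-l * s) * P s f x)
            (Set.Icc 0 T) :=
          ((Real.continuous_exp.comp (continuous_const.mul continuous_id)).continuousOn).mul
            ((contx f x).mono Set.Icc_subset_Ici_self)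
        have hderiv : ∀ s ∈ Set.Ioo (0:ℝ) T,
            HasDerivWithinAt (fun s : ℝ => Real.exp (-l * s) * P s f x)
              (Real.exp (-l * s) * P s (g 0) x - l * (Real.exp (-l * s) * P s f x))
              (Set.Ioi s) s :=
          fun s hs => (hderF s hs.1.le).mono (fun y hy => (hs.1.trans hy).le)
        have hint : IntervalIntegrable (fun s : ℝ => Real.exp (-l * s) * P s (g 0) x
            - l * (Real.exp (-l * s) * P s f x)) MeasureTheory.volume 0 T := by
          apply ContinuousOn.intervalIntegrable
          rw [Set.uIcc_of_le hT]
          have hc1 : ContinuousOn (fun s : ℝ => Real.exp (-l * s) * P s (g 0) x)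
              (Set.Icc 0 T) :=
            ((Real.continuous_exp.comp (continuous_const.mul continuous_id)).continuousOn).mul
              ((contx (g 0) x).mono Set.Icc_subset_Ici_self)
          exact hc1.sub (continuousOn_const.mul hcontF)
        rw [intervalIntegral.integral_eq_sub_of_hasDeriv_right_of_le hT hcontF hderiv hint]
        simp [hP0]
      have hint' : IntegrableOn (fun s : ℝ => Real.exp (-l * s) * P s (g 0) x
          - l * (Real.exp (-l * s) * P s f x)) (Set.Ioi 0) :=
        (intgr (g 0) x).sub ((intgr f x).const_mul l)
      have hlim1 : Tendsto (fun T : ℝ => ∫ s in (0:ℝ)..T,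
          (Real.exp (-l * s) * P s (g 0) x - l * (Real.exp (-l * s) * P s f x)))
          atTop (𝓝 (∫ s in Set.Ioi (0:ℝ),
          (Real.exp (-l * s) * P s (g 0) x - l * (Real.exp (-l * s) * P s f x)))) :=
        intervalIntegral_tendsto_integral_Ioi 0 hint' tendsto_id
      have hzero : Tendsto (fun T : ℝ => Real.exp (-l * T) * P T f x) atTop (𝓝 0) := by
        have hbnd : ∀ᶠ T in atTop, ‖Real.exp (-l * T) * P T f x‖
            ≤ M * ‖f‖ * Real.exp (-(l - w) * T) := by
          filter_upwards [eventually_ge_atTop (0:ℝ)] with T hT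
          exact hptbd f x T hT
        apply squeeze_zero_norm' hbnd
        · have h4 : Tendsto (fun T : ℝ => (l - w) * T) atTop atTop :=
            tendsto_id.const_mul_atTop (by simp [hldef])
          have h5 : Tendsto (fun T : ℝ => Real.exp (-(l - w) * T)) atTop (𝓝 0) := by
            have h6 := Real.tendsto_exp_neg_atTop_nhds_zero.comp h4
            refine h6.congr fun T => ?_
            simp only [Function.comp_apply]
            ring_nf
          simpa using h5.const_mul (M * ‖f‖)
      have hlim2 : Tendsto (fun T : ℝ => Real.exp (-l * T) * P T f x - f x) atTop
          (𝓝 (0 - f x)) := hzero.sub_const (f x)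
      have hlim2' : Tendsto (fun T : ℝ => ∫ s in (0:ℝ)..T,
          (Real.exp (-l * s) * P s (g 0) x - l * (Real.exp (-l * s) * P s f x)))
          atTop (𝓝 (0 - f x)) := by
        apply hlim2.congr'
        filter_upwards [eventually_ge_atTop (0:ℝ)] with T hT
        exact (hFTC T hT).symm
      have heq := tendsto_nhds_unique hlim1 hlim2'
      rw [integral_sub (intgr (g 0) x) ((intgr f x).const_mul l),
        MeasureTheory.integral_const_mul] at heq
      have hre := heq
      linarith [hre]
    -- f = R l (l • f - g 0)
    have hRf : R l (l • f - g 0) = f := by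
      ext x
      have h1 := hR l hwl (g 0) x
      have h2 := hR l hwl f x
      have h3 := hkey x
      have h4 : R l (l • f - g 0) x = l * R l f x - R l (g 0) x := by
        rw [map_sub, _root_.map_smul]
        simp [smul_eq_mul]
      rw [h4, h1, h2, h3]
      ring
    have hfD : f ∈ D := hRf ▸ (hRD l hwl (l • f - g 0)).1
    have hLfu : L f = g 0 := by
      have h4 := (hRD l hwl (l • f - g 0)).2
      rw [hRf] at h4
      have h5 : l • f - (l • f - L f) = l • f - (l • f - g 0) := by rw [h4]
      simpa using h5
    refine ⟨hfD, ?_⟩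
    rw [← hclos, hLfu]
    have htg : Tendsto g (𝓝[>] (0:ℝ)) (𝓝 (g 0)) :=
      (hg 0 Set.self_mem_Ici).mono_left (nhdsWithin_mono 0 Set.Ioi_subset_Ici_self)
    apply htg.congr'
    filter_upwards [self_mem_nhdsWithin] with t ht
    exact hgt t (le_of_lt ht)
end
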